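/- arXiv:2212.11066 — 6 statements merged into one kernel-verified Lean document; each statement's English description precedes it below -/
import Mathlib

section
/- Let β ∈ ℝ with β ≠ 0 and β ≠ 1, and let (p₁, p₂, p₃) ∈ [1,∞]³ be exponents NOT satisfying all three conditions p₁ = ∞, 1/p₂ + 1/p₃ = 1, and 1 < p₂, p₃ < ∞. Then there is no constant C > 0 such that |Λ_{(4,β)}(f,G,H)| ≤ C · ‖f‖_{L^{p₁}(ℝ)} · ‖G‖_{L^{p₂}(ℝ²)} · ‖H‖_{L^{p₃}(ℝ²)} holds for all Schwartz functions f : ℝ → ℂ and G, H : ℝ² → ℂ; that is, for every C > 0 there exist Schwartz f, G, H with |Λ_{(4,β)}(f,G,H)| > C · ‖f‖_{L^{p₁}(ℝ)} · ‖G‖_{L^{p₂}(ℝ²)} · ‖H‖_{L^{p₃}(ℝ²)}. -/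
open MeasureTheory Filter Topology ENNReal

/-- Truncation of the singular Brascamp–Lieb form `Λ_{(4,β)}`:
`∫_{ℝ²} ∫_{|t|>ε} f(x+t) G(x,y) H(x+βt,y) (1/t) dt dx dy`. -/
noncomputable def Lambda4Trunc (β : ℝ) (f : SchwartzMap ℝ ℂ) (G H : SchwartzMap (ℝ × ℝ) ℂ)
    (ε : ℝ) : ℂ :=
  ∫ p : ℝ × ℝ, ∫ t in {t : ℝ | ε < |t|},
    f (p.1 + t) * G p * H (p.1 + β * t, p.2) / (t : ℂ)


open Set

notation "S∞" => ((⊤ : ℕ∞) : WithTop ℕ∞)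

section Machinery

/-- Build a `SchwartzMap` into `ℂ` from a smooth compactly supported real function. -/
noncomputable def mkSch {E : Type*} [NormedAddCommGroup E] [NormedSpace ℝ E]
    (u : E → ℝ) (hu : ContDiff ℝ S∞ u) (hsupp : HasCompactSupport u) : SchwartzMap E ℂ where
  toFun x := (u x : ℂ)
  smooth' := Complex.ofRealCLM.contDiff.comp hu
  decay' := by
    intro k n
    have hcd : ContDiff ℝ S∞ (fun x => (u x : ℂ)) := Complex.ofRealCLM.contDiff.comp hu
    have hcs : HasCompactSupport (fun x => (u x : ℂ)) :=
      hsupp.comp_left (g := fun r : ℝ => (r : ℂ)) (by simp)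
    have hcs' : HasCompactSupport
        (fun x => ‖x‖ ^ k * ‖iteratedFDeriv ℝ n (fun y => (u y : ℂ)) x‖) := by
      exact ((hcs.iteratedFDeriv (𝕜 := ℝ) n).norm).mul_left
    have hcont : Continuous (fun x => ‖x‖ ^ k * ‖iteratedFDeriv ℝ n (fun y => (u y : ℂ)) x‖) :=
      ((continuous_norm.pow k).mul
        (hcd.continuous_iteratedFDeriv (by exact_mod_cast le_top)).norm)
    obtain ⟨C, hC⟩ := hcont.bounded_above_of_compact_support hcs'
    refine ⟨C, fun x => ?_⟩
    have := hC x
    rw [Real.norm_eq_abs] at this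
    exact (le_abs_self _).trans this

@[simp] lemma mkSch_apply {E : Type*} [NormedAddCommGroup E] [NormedSpace ℝ E]
    (u : E → ℝ) (hu : ContDiff ℝ S∞ u) (hsupp : HasCompactSupport u) (x : E) :
    mkSch u hu hsupp x = (u x : ℂ) := rfl

/-- The real-valued kernel of the (regularized) form. -/
noncomputable def Kre (β t₀ : ℝ) (u1 : ℝ → ℝ) (u2 u3 : ℝ × ℝ → ℝ) : (ℝ × ℝ) × ℝ → ℝ :=
  fun q => u1 (q.1.1 + q.2) * u2 q.1 * u3 (q.1.1 + β * q.2, q.1.2) *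
    (q.2 / max (q.2 ^ 2) (t₀ ^ 2))

lemma Kre_cont (β t₀ : ℝ) (ht₀ : 0 < t₀) {u1 : ℝ → ℝ} {u2 u3 : ℝ × ℝ → ℝ}
    (h1 : Continuous u1) (h2 : Continuous u2) (h3 : Continuous u3) :
    Continuous (Kre β t₀ u1 u2 u3) := by
  apply Continuous.mul
  · apply Continuous.mul
    · apply Continuous.mul
      · exact h1.comp (by fun_prop)
      · exact h2.comp continuous_fst
    · exact h3.comp (by fun_prop)
  · apply Continuous.div (by fun_prop) (by fun_prop)
    intro q
    have : (0:ℝ) < max (q.2 ^ 2) (t₀ ^ 2) := lt_max_of_lt_right (by positivity)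
    exact ne_of_gt this

lemma Kre_hcs (β t₀ : ℝ) {u1 : ℝ → ℝ} {u2 u3 : ℝ × ℝ → ℝ} (M : ℝ) (hM : 0 < M)
    (h1 : ∀ x, M < |x| → u1 x = 0) (h2 : ∀ p : ℝ × ℝ, M < |p.1| ∨ M < |p.2| → u2 p = 0) :
    HasCompactSupport (Kre β t₀ u1 u2 u3) := by
  apply HasCompactSupport.intro
    (((isCompact_Icc (a := -M) (b := M)).prod (isCompact_Icc (a := -M) (b := M))).prod
      (isCompact_Icc (a := -(2*M)) (b := 2*M)))
  rintro ⟨⟨x, y⟩, t⟩ hq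
  simp only [Set.prodMk_mem_set_prod_eq, Set.mem_Icc, not_and_or] at hq
  have habs : ∀ z B : ℝ, (¬(-B ≤ z) ∨ ¬(z ≤ B)) → B < |z| := by
    intro z B hz
    rcases hz with hz | hz <;> push_neg at hz <;> rcases abs_cases z with ⟨he, _⟩ | ⟨he, _⟩ <;>
      linarith
  have hzero : u1 (x + t) * u2 (x, y) = 0 := by
    rcases hq with (hx | hy) | ht
    · rw [h2 (x, y) (Or.inl (habs x M hx)), mul_zero]
    · rw [h2 (x, y) (Or.inr (habs y M hy)), mul_zero]
    · rcases le_or_gt |x| M with h | h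
      · have h2M : 2 * M < |t| := habs t (2*M) ht
        have h4 : |t| ≤ |x + t| + |x| := by
          have := abs_sub (x + t) x
          simpa [add_sub_cancel_left] using this
        have : M < |x + t| := by linarith
        rw [h1 _ this, zero_mul]
      · rw [h2 (x, y) (Or.inl h), mul_zero]
  show u1 (x + t) * u2 (x, y) * u3 _ * _ = 0
  rw [hzero, zero_mul, zero_mul]

lemma Kre_nonneg (β t₀ : ℝ) (ht₀ : 0 < t₀) {u1 : ℝ → ℝ} {u2 u3 : ℝ × ℝ → ℝ}
    (h1 : ∀ x, 0 ≤ u1 x) (h2 : ∀ p, 0 ≤ u2 p) (h3 : ∀ p, 0 ≤ u3 p)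
    (hvan : ∀ x y t, t < t₀ → u1 (x + t) * u2 (x, y) * u3 (x + β * t, y) = 0) :
    ∀ q, 0 ≤ Kre β t₀ u1 u2 u3 q := by
  rintro ⟨⟨x, y⟩, t⟩
  show 0 ≤ u1 (x + t) * u2 (x, y) * u3 (x + β * t, y) * (t / max (t ^ 2) (t₀ ^ 2))
  rcases eq_or_ne (u1 (x + t) * u2 (x, y) * u3 (x + β * t, y)) 0 with h | h
  · rw [h, zero_mul]
  · have ht : t₀ ≤ t := by
      by_contra hc
      exact h (hvan x y t (lt_of_not_ge hc))
    have hA : 0 ≤ u1 (x + t) * u2 (x, y) * u3 (x + β * t, y) :=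
      mul_nonneg (mul_nonneg (h1 _) (h2 _)) (h3 _)
    have hden : (0:ℝ) < max (t ^ 2) (t₀ ^ 2) := lt_max_of_lt_right (by positivity)
    have : 0 ≤ t / max (t ^ 2) (t₀ ^ 2) := div_nonneg (le_trans ht₀.le ht) hden.le
    exact mul_nonneg hA this

end Machinery

section Identity

lemma lambda_eq (β t₀ : ℝ) (ht₀ : 0 < t₀)
    (u1 : ℝ → ℝ) (u2 u3 : ℝ × ℝ → ℝ)
    (hu1 : ContDiff ℝ S∞ u1) (hc1 : HasCompactSupport u1)
    (hu2 : ContDiff ℝ S∞ u2) (hc2 : HasCompactSupport u2)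
    (hu3 : ContDiff ℝ S∞ u3) (hc3 : HasCompactSupport u3)
    (hvan : ∀ x y t, t < t₀ → u1 (x + t) * u2 (x, y) * u3 (x + β * t, y) = 0)
    {ε : ℝ} (hε : 0 < ε) (hε' : ε < t₀) :
    Lambda4Trunc β (mkSch u1 hu1 hc1) (mkSch u2 hu2 hc2) (mkSch u3 hu3 hc3) ε
      = ((∫ p : ℝ × ℝ, ∫ t, Kre β t₀ u1 u2 u3 (p, t) : ℝ) : ℂ) := by
  unfold Lambda4Trunc
  have step : ∀ p : ℝ × ℝ,
      (∫ t in {t : ℝ | ε < |t|},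
        (mkSch u1 hu1 hc1) (p.1 + t) * (mkSch u2 hu2 hc2) p *
          (mkSch u3 hu3 hc3) (p.1 + β * t, p.2) / (t : ℂ))
      = ((∫ t, Kre β t₀ u1 u2 u3 (p, t) : ℝ) : ℂ) := by
    rintro ⟨x, y⟩
    rw [setIntegral_eq_integral_of_forall_compl_eq_zero (f := fun t =>
        (mkSch u1 hu1 hc1) (x + t) * (mkSch u2 hu2 hc2) (x, y) *
          (mkSch u3 hu3 hc3) (x + β * t, y) / (t : ℂ))]
    · have hoc : ((∫ t, Kre β t₀ u1 u2 u3 ((x, y), t) : ℝ) : ℂ)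
          = ∫ t, ((Kre β t₀ u1 u2 u3 ((x, y), t) : ℝ) : ℂ) :=
        (integral_ofReal (𝕜 := ℂ)).symm
      rw [hoc]
      apply integral_congr_ae
      filter_upwards with t
      simp only [mkSch_apply]
      have hreal : Kre β t₀ u1 u2 u3 ((x, y), t)
          = u1 (x + t) * u2 (x, y) * u3 (x + β * t, y) / t := by
        show u1 (x + t) * u2 (x, y) * u3 (x + β * t, y) * (t / max (t ^ 2) (t₀ ^ 2)) = _
        rcases eq_or_ne (u1 (x + t) * u2 (x, y) * u3 (x + β * t, y)) 0 with h | h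
        · rw [h, zero_mul, zero_div]
        · have ht : t₀ ≤ t := by
            by_contra hcon
            exact h (hvan x y t (lt_of_not_ge hcon))
          have ht0 : t ≠ 0 := ne_of_gt (lt_of_lt_of_le ht₀ ht)
          have hmax : max (t ^ 2) (t₀ ^ 2) = t ^ 2 := by
            apply max_eq_left
            have h1 : |t₀| ≤ |t| := by
              rw [abs_of_pos ht₀, abs_of_pos (lt_of_lt_of_le ht₀ ht)]; exact ht
            calc t₀ ^ 2 = |t₀| ^ 2 := (sq_abs _).symm
              _ ≤ |t| ^ 2 := by gcongr
              _ = t ^ 2 := sq_abs _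
          rw [hmax]
          field_simp
      rw [hreal]
      push_cast
      ring
    · intro t ht
      simp only [Set.mem_setOf_eq, not_lt] at ht
      have : t < t₀ := lt_of_le_of_lt (le_trans (le_abs_self t) ht) hε'
      simp only [mkSch_apply]
      rw [show ((u1 (x + t) : ℂ)) * (u2 (x, y) : ℂ) * (u3 (x + β * t, y) : ℂ)
            = ((u1 (x + t) * u2 (x, y) * u3 (x + β * t, y) : ℝ) : ℂ) by push_cast; ring,
        hvan x y t this]
      simp
  calc (∫ p : ℝ × ℝ, ∫ t in {t : ℝ | ε < |t|},
        (mkSch u1 hu1 hc1) (p.1 + t) * (mkSch u2 hu2 hc2) p *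
          (mkSch u3 hu3 hc3) (p.1 + β * t, p.2) / (t : ℂ))
      = ∫ p : ℝ × ℝ, ((∫ t, Kre β t₀ u1 u2 u3 (p, t) : ℝ) : ℂ) :=
        integral_congr_ae (Filter.Eventually.of_forall step)
    _ = _ := integral_ofReal

lemma lambda_tendsto (β t₀ : ℝ) (ht₀ : 0 < t₀)
    (u1 : ℝ → ℝ) (u2 u3 : ℝ × ℝ → ℝ)
    (hu1 : ContDiff ℝ S∞ u1) (hc1 : HasCompactSupport u1)
    (hu2 : ContDiff ℝ S∞ u2) (hc2 : HasCompactSupport u2)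
    (hu3 : ContDiff ℝ S∞ u3) (hc3 : HasCompactSupport u3)
    (hvan : ∀ x y t, t < t₀ → u1 (x + t) * u2 (x, y) * u3 (x + β * t, y) = 0) :
    Tendsto (Lambda4Trunc β (mkSch u1 hu1 hc1) (mkSch u2 hu2 hc2) (mkSch u3 hu3 hc3))
      (𝓝[>] 0) (𝓝 ((∫ p : ℝ × ℝ, ∫ t, Kre β t₀ u1 u2 u3 (p, t) : ℝ) : ℂ)) := by
  apply Tendsto.congr' _ tendsto_const_nhds
  filter_upwards [Ioo_mem_nhdsGT ht₀] with ε hε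
  exact (lambda_eq β t₀ ht₀ u1 u2 u3 hu1 hc1 hu2 hc2 hu3 hc3 hvan hε.1 hε.2).symm

end Identity

section Lower

lemma slicebd (F : (ℝ × ℝ) × ℝ → ℝ) (hc : Continuous F) (hcs : HasCompactSupport F)
    (hpos : ∀ q, 0 ≤ F q) (t : ℝ) (x₁ x₂ y₁ y₂ c : ℝ) (hx : x₁ ≤ x₂) (hy : y₁ ≤ y₂)
    (hcpos : 0 ≤ c)
    (hpt : ∀ p : ℝ × ℝ, p ∈ Icc x₁ x₂ ×ˢ Icc y₁ y₂ → c ≤ F (p, t)) :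
    c * ((x₂ - x₁) * (y₂ - y₁)) ≤ ∫ p : ℝ × ℝ, F (p, t) := by
  have hemb : IsClosedEmbedding (fun p : ℝ × ℝ => (p, t)) := by
    apply IsClosedEmbedding.of_continuous_injective_isClosedMap
    · fun_prop
    · intro a b hab; exact (Prod.mk.injEq _ _ _ _).mp hab |>.1
    · intro K hK
      have : (fun p : ℝ × ℝ => (p, t)) '' K = K ×ˢ {t} := by
        apply Set.Subset.antisymm
        · rintro _ ⟨a, ha, rfl⟩; exact ⟨ha, rfl⟩
        · rintro ⟨q1, q2⟩ ⟨hq, ht'⟩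
          simp only [Set.mem_singleton_iff] at ht'
          subst ht'
          exact ⟨q1, hq, rfl⟩
      rw [this]
      exact hK.prod isClosed_singleton
  have hslice : Integrable (fun p : ℝ × ℝ => F (p, t)) := by
    apply Continuous.integrable_of_hasCompactSupport
    · exact hc.comp (by fun_prop)
    · exact hcs.comp_isClosedEmbedding hemb
  have hS : MeasurableSet (Icc x₁ x₂ ×ˢ Icc y₁ y₂ : Set (ℝ × ℝ)) :=
    measurableSet_Icc.prod measurableSet_Icc
  have hvol : volume (Icc x₁ x₂ ×ˢ Icc y₁ y₂ : Set (ℝ × ℝ))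
      = ENNReal.ofReal (x₂ - x₁) * ENNReal.ofReal (y₂ - y₁) := by
    rw [Measure.volume_eq_prod, Measure.prod_prod, Real.volume_Icc, Real.volume_Icc]
  have hfin : volume (Icc x₁ x₂ ×ˢ Icc y₁ y₂ : Set (ℝ × ℝ)) ≠ ⊤ := by
    rw [hvol]; exact (ENNReal.mul_lt_top ENNReal.ofReal_lt_top ENNReal.ofReal_lt_top).ne
  calc c * ((x₂ - x₁) * (y₂ - y₁))
      = c * (volume (Icc x₁ x₂ ×ˢ Icc y₁ y₂ : Set (ℝ × ℝ))).toReal := by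
        rw [hvol, ENNReal.toReal_mul, ENNReal.toReal_ofReal (by linarith),
          ENNReal.toReal_ofReal (by linarith)]
    _ ≤ ∫ p in (Icc x₁ x₂ ×ˢ Icc y₁ y₂ : Set (ℝ × ℝ)), F (p, t) :=
        setIntegral_ge_of_const_le_real hS hfin hpt hslice.integrableOn
    _ ≤ ∫ p : ℝ × ℝ, F (p, t) :=
        setIntegral_le_integral hslice (Filter.Eventually.of_forall (fun p => hpos _))

lemma lowbd (F : (ℝ × ℝ) × ℝ → ℝ) (hc : Continuous F) (hcs : HasCompactSupport F)
    (hpos : ∀ q, 0 ≤ F q) (a b V : ℝ) (ha : 0 < a) (hab : a ≤ b) (hV : 0 ≤ V)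
    (hbig : ∀ t, t ∈ Ioc a b → V * (1 / t) ≤ ∫ p : ℝ × ℝ, F (p, t)) :
    V * Real.log (b / a) ≤ ∫ p : ℝ × ℝ, ∫ t, F (p, t) := by
  have hint : Integrable F := hc.integrable_of_hasCompactSupport hcs
  have hint' : Integrable F ((volume : Measure (ℝ × ℝ)).prod volume) := by
    rwa [← Measure.volume_eq_prod]
  have swap : (∫ p : ℝ × ℝ, ∫ t, F (p, t)) = ∫ t, ∫ p : ℝ × ℝ, F (p, t) :=
    integral_integral_swap hint'
  rw [swap]
  set T : ℝ → ℝ := fun t => ∫ p : ℝ × ℝ, F (p, t) with hT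
  have hTint : Integrable T := hint'.integral_prod_right
  have hTpos : ∀ t, 0 ≤ T t := fun t => integral_nonneg fun p => hpos _
  have h1 : ∫ t in Ioc a b, T t ≤ ∫ t, T t :=
    setIntegral_le_integral hTint (Filter.Eventually.of_forall hTpos)
  have hIcont : ContinuousOn (fun t : ℝ => V * (1 / t)) (Icc a b) := by
    apply ContinuousOn.mul continuousOn_const
    apply ContinuousOn.div continuousOn_const continuousOn_id
    intro x hx; exact ne_of_gt (lt_of_lt_of_le ha hx.1)
  have hIint : IntegrableOn (fun t : ℝ => V * (1 / t)) (Ioc a b) :=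
    (hIcont.integrableOn_Icc).mono_set Ioc_subset_Icc_self
  have h2 : ∫ t in Ioc a b, V * (1 / t) ≤ ∫ t in Ioc a b, T t :=
    setIntegral_mono_on hIint hTint.integrableOn measurableSet_Ioc hbig
  have h3 : ∫ t in Ioc a b, V * (1 / t) = V * Real.log (b / a) := by
    have h0 : (0:ℝ) ∉ Set.uIcc a b := by
      rw [Set.uIcc_of_le hab]
      rintro ⟨h01, h02⟩
      linarith
    rw [← intervalIntegral.integral_of_le hab, intervalIntegral.integral_const_mul,
      integral_one_div h0]
  linarith

end Lower

section Norms

lemma norm1 (u : ℝ → ℝ) (hu : ContDiff ℝ S∞ u) (hcs : HasCompactSupport u)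
    (A : ℝ) (hA : 0 < A) (hb : ∀ x, |u x| ≤ 1) (hsupp : ∀ x, A < |x| → u x = 0) (p : ℝ≥0∞) :
    eLpNorm (⇑(mkSch u hu hcs)) p volume ≤ ENNReal.ofReal ((2 * A) ^ (1 / p).toReal) := by
  have h1 : ∀ x, ‖(mkSch u hu hcs) x‖ ≤ ‖(Icc (-A) A).indicator (fun _ => (1:ℝ)) x‖ := by
    intro x
    by_cases hx : x ∈ Icc (-A) A
    · rw [Set.indicator_of_mem hx]
      simp only [mkSch_apply, Complex.norm_real, norm_one]
      exact hb x
    · rw [Set.indicator_of_notMem hx]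
      have : A < |x| := by
        simp only [Set.mem_Icc, not_and_or] at hx
        rcases hx with h | h <;> push_neg at h <;> rcases abs_cases x with ⟨he, _⟩ | ⟨he, _⟩ <;>
          linarith
      simp [mkSch_apply, hsupp x this]
  calc eLpNorm (⇑(mkSch u hu hcs)) p volume
      ≤ eLpNorm ((Icc (-A) A).indicator (fun _ => (1:ℝ))) p volume := eLpNorm_mono h1
    _ ≤ ‖(1:ℝ)‖₊ * volume (Icc (-A) A) ^ (1 / p.toReal) := eLpNorm_indicator_const_le _ _
    _ = ENNReal.ofReal (2 * A) ^ (1 / p.toReal) := by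
        rw [Real.volume_Icc]
        simp only [nnnorm_one, ENNReal.coe_one, one_mul]
        norm_num
        ring_nf
        rw [ENNReal.ofReal_mul hA.le]; norm_num
    _ = ENNReal.ofReal ((2 * A) ^ (1 / p.toReal)) :=
        ENNReal.ofReal_rpow_of_pos (by linarith)
    _ = ENNReal.ofReal ((2 * A) ^ (1 / p).toReal) := by
        rw [ENNReal.toReal_div]; norm_num

lemma norm2 (u : ℝ × ℝ → ℝ) (hu : ContDiff ℝ S∞ u) (hcs : HasCompactSupport u)
    (A B : ℝ) (hA : 0 < A) (hB : 0 < B) (hb : ∀ x, |u x| ≤ 1)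
    (hsupp : ∀ q : ℝ × ℝ, A < |q.1| ∨ B < |q.2| → u q = 0) (p : ℝ≥0∞) :
    eLpNorm (⇑(mkSch u hu hcs)) p volume
      ≤ ENNReal.ofReal ((2 * A * (2 * B)) ^ (1 / p).toReal) := by
  have h1 : ∀ x : ℝ × ℝ, ‖(mkSch u hu hcs) x‖
      ≤ ‖((Icc (-A) A ×ˢ Icc (-B) B : Set (ℝ × ℝ))).indicator (fun _ => (1:ℝ)) x‖ := by
    intro x
    by_cases hx : x ∈ (Icc (-A) A ×ˢ Icc (-B) B : Set (ℝ × ℝ))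
    · rw [Set.indicator_of_mem hx]
      simp only [mkSch_apply, Complex.norm_real, norm_one]
      exact hb x
    · rw [Set.indicator_of_notMem hx]
      have : A < |x.1| ∨ B < |x.2| := by
        simp only [Set.mem_prod, Set.mem_Icc, not_and_or] at hx
        rcases hx with h | h <;> [left; right] <;>
          rcases h with h | h <;> push_neg at h <;>
          [rcases abs_cases x.1 with ⟨he, _⟩ | ⟨he, _⟩;
           rcases abs_cases x.1 with ⟨he, _⟩ | ⟨he, _⟩;
           rcases abs_cases x.2 with ⟨he, _⟩ | ⟨he, _⟩;
           rcases abs_cases x.2 with ⟨he, _⟩ | ⟨he, _⟩] <;> linarith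
      simp [mkSch_apply, hsupp x this]
  calc eLpNorm (⇑(mkSch u hu hcs)) p volume
      ≤ eLpNorm (((Icc (-A) A ×ˢ Icc (-B) B : Set (ℝ × ℝ))).indicator (fun _ => (1:ℝ))) p volume :=
        eLpNorm_mono h1
    _ ≤ ‖(1:ℝ)‖₊ * volume ((Icc (-A) A ×ˢ Icc (-B) B : Set (ℝ × ℝ))) ^ (1 / p.toReal) :=
        eLpNorm_indicator_const_le _ _
    _ = ENNReal.ofReal (2 * A * (2 * B)) ^ (1 / p.toReal) := by
        rw [Measure.volume_eq_prod, Measure.prod_prod, Real.volume_Icc, Real.volume_Icc,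
          ← ENNReal.ofReal_mul (by linarith)]
        simp only [nnnorm_one, ENNReal.coe_one, one_mul]
        ring_nf
    _ = ENNReal.ofReal ((2 * A * (2 * B)) ^ (1 / p.toReal)) :=
        ENNReal.ofReal_rpow_of_pos (by positivity)
    _ = ENNReal.ofReal ((2 * A * (2 * B)) ^ (1 / p).toReal) := by
        rw [ENNReal.toReal_div]; norm_num

end Norms

section Bump

lemma rml (r A : ℝ) (hr : r ≠ 0) : r * (A / r) = A := by field_simp

lemma bump_one {c : ℝ} (b : ContDiffBump c) {x : ℝ} (h : |x - c| ≤ b.rIn) : b x = 1 :=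
  b.one_of_mem_closedBall (by rwa [Metric.mem_closedBall, Real.dist_eq])

lemma bump_zero {c : ℝ} (b : ContDiffBump c) {x : ℝ} (h : b.rOut ≤ |x - c|) : b x = 0 :=
  b.zero_of_le_dist (by rwa [Real.dist_eq])

lemma bump_ne_zero {c : ℝ} (b : ContDiffBump c) {x : ℝ} (h : b x ≠ 0) : |x - c| < b.rOut := by
  by_contra hle
  exact h (bump_zero b (not_lt.mp hle))

lemma abs_of_not_mem_Icc {x M : ℝ} (hx : x ∉ Icc (-M) M) : M < |x| := by
  simp only [Set.mem_Icc, not_and_or] at hx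
  rcases hx with h | h <;> push_neg at h <;> rcases abs_cases x with ⟨he, _⟩ | ⟨he, _⟩ <;> linarith

lemma hcs1 {u : ℝ → ℝ} (M : ℝ) (h : ∀ x, M < |x| → u x = 0) : HasCompactSupport u :=
  HasCompactSupport.intro (isCompact_Icc (a := -M) (b := M))
    (fun x hx => h x (abs_of_not_mem_Icc hx))

lemma hcs2 {u : ℝ × ℝ → ℝ} (M : ℝ)
    (h : ∀ q : ℝ × ℝ, M < |q.1| ∨ M < |q.2| → u q = 0) : HasCompactSupport u := by
  apply HasCompactSupport.intro
    ((isCompact_Icc (a := -M) (b := M)).prod (isCompact_Icc (a := -M) (b := M)))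
  rintro ⟨x, y⟩ hq
  have : x ∉ Icc (-M) M ∨ y ∉ Icc (-M) M := by
    by_contra hc
    push_neg at hc
    exact hq ⟨hc.1, hc.2⟩
  rcases this with hx | hy
  · exact h _ (Or.inl (abs_of_not_mem_Icc hx))
  · exact h _ (Or.inr (abs_of_not_mem_Icc hy))

end Bump

section ConstrA

set_option maxHeartbeats 1000000 in
lemma constrA (β : ℝ) (hβ0 : β ≠ 0) (r s R : ℝ) (hr : 0 < r) (hs : 0 < s) (hR : 10 ≤ R)
    (p₁ p₂ p₃ : ℝ≥0∞) :
    ∃ (F : SchwartzMap ℝ ℂ) (G H : SchwartzMap (ℝ × ℝ) ℂ) (Lr : ℝ),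
      Tendsto (Lambda4Trunc β F G H) (𝓝[>] 0) (𝓝 ((Lr : ℝ) : ℂ)) ∧
      (min 1 |β| / 2) * Real.log (R / 3) / (r * s) ≤ Lr ∧
      eLpNorm (⇑F) p₁ volume ≤ ENNReal.ofReal ((16 * R / r) ^ (1 / p₁).toReal) ∧
      eLpNorm (⇑G) p₂ volume ≤ ENNReal.ofReal ((2 * min 1 |β| / (r * s)) ^ (1 / p₂).toReal) ∧
      eLpNorm (⇑H) p₃ volume ≤ ENNReal.ofReal ((24 * R * |β| / (r * s)) ^ (1 / p₃).toReal) := by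
  have hβ : 0 < |β| := abs_pos.mpr hβ0
  set m := min 1 |β| with hm_def
  have hm : 0 < m := lt_min one_pos hβ
  have hm1 : m ≤ 1 := min_le_left _ _
  have hmβ : m ≤ |β| := min_le_right _ _
  set bF : ContDiffBump (0:ℝ) := ⟨4*R, 8*R, by linarith, by linarith⟩ with hbF
  set bg : ContDiffBump (0:ℝ) := ⟨m/8, m/4, by linarith, by linarith⟩ with hbg
  set bw : ContDiffBump (R+1:ℝ) := ⟨R-1, R, by linarith, by linarith⟩ with hbw
  set bχ : ContDiffBump (0:ℝ) := ⟨1, 2, one_pos, one_lt_two⟩ with hbχ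
  set u1 : ℝ → ℝ := fun x => bF (r * x) with hu1_def
  set u2 : ℝ × ℝ → ℝ := fun q => bg (r * q.1) * bχ (s * q.2) with hu2_def
  set u3 : ℝ × ℝ → ℝ := fun q => bw (r * q.1 / β) * bχ (s * q.2) with hu3_def
  have hu1 : ContDiff ℝ S∞ u1 := bF.contDiff.comp (contDiff_const.mul contDiff_id)
  have hu2 : ContDiff ℝ S∞ u2 :=
    (bg.contDiff.comp (contDiff_const.mul contDiff_fst)).mul
      (bχ.contDiff.comp (contDiff_const.mul contDiff_snd))
  have hu3 : ContDiff ℝ S∞ u3 :=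
    (bw.contDiff.comp ((contDiff_const.mul contDiff_fst).div_const β)).mul
      (bχ.contDiff.comp (contDiff_const.mul contDiff_snd))
  -- support facts
  have hsupp1 : ∀ x, 8*R/r < |x| → u1 x = 0 := by
    intro x hx
    apply bump_zero
    show (8*R : ℝ) ≤ |r * x - 0|
    rw [sub_zero, abs_mul, abs_of_pos hr]
    calc (8*R:ℝ) = r * (8*R/r) := (rml r _ hr.ne').symm
      _ ≤ r * |x| := mul_le_mul_of_nonneg_left hx.le hr.le
  have hsuppg : ∀ x : ℝ, (m/4)/r < |x| → bg (r * x) = 0 := by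
    intro x hx
    apply bump_zero
    show (m/4 : ℝ) ≤ |r * x - 0|
    rw [sub_zero, abs_mul, abs_of_pos hr]
    calc (m/4:ℝ) = r * ((m/4)/r) := (rml r _ hr.ne').symm
      _ ≤ r * |x| := mul_le_mul_of_nonneg_left hx.le hr.le
  have hsuppw : ∀ x : ℝ, (2*R+1)*|β|/r < |x| → bw (r * x / β) = 0 := by
    intro x hx
    apply bump_zero
    show (R : ℝ) ≤ |r * x / β - (R+1)|
    have h1 : (2*R+1) ≤ |r * x / β| := by
      rw [abs_div, abs_mul, abs_of_pos hr]
      rw [le_div_iff₀ hβ]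
      calc (2*R+1) * |β| = r * ((2*R+1)*|β|/r) := (rml r _ hr.ne').symm
        _ ≤ r * |x| := mul_le_mul_of_nonneg_left hx.le hr.le
    have h2 := abs_sub_abs_le_abs_sub (r * x / β) (R+1)
    have h3 : |(R:ℝ)+1| = R+1 := abs_of_pos (by linarith)
    linarith
  have hsuppχ : ∀ y : ℝ, 2/s < |y| → bχ (s * y) = 0 := by
    intro y hy
    apply bump_zero
    show (2 : ℝ) ≤ |s * y - 0|
    rw [sub_zero, abs_mul, abs_of_pos hs]
    calc (2:ℝ) = s * (2/s) := (rml s _ hs.ne').symm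
      _ ≤ s * |y| := mul_le_mul_of_nonneg_left hy.le hs.le
  have hc1 : HasCompactSupport u1 := hcs1 _ hsupp1
  have hc2 : HasCompactSupport u2 := by
    apply hcs2 (max ((m/4)/r) (2/s))
    rintro ⟨x, y⟩ (hx | hy)
    · rw [hu2_def]; simp only
      rw [hsuppg x (lt_of_le_of_lt (le_max_left _ _) hx), zero_mul]
    · rw [hu2_def]; simp only
      rw [hsuppχ y (lt_of_le_of_lt (le_max_right _ _) hy), mul_zero]
  have hc3 : HasCompactSupport u3 := by
    apply hcs2 (max ((2*R+1)*|β|/r) (2/s))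
    rintro ⟨x, y⟩ (hx | hy)
    · rw [hu3_def]; simp only
      rw [hsuppw x (lt_of_le_of_lt (le_max_left _ _) hx), zero_mul]
    · rw [hu3_def]; simp only
      rw [hsuppχ y (lt_of_le_of_lt (le_max_right _ _) hy), mul_zero]
  -- vanishing for small t
  set t₀ : ℝ := 1/(2*r) with ht₀_def
  have ht₀ : 0 < t₀ := by positivity
  have hvan : ∀ x y t, t < t₀ → u1 (x + t) * u2 (x, y) * u3 (x + β * t, y) = 0 := by
    intro x y t ht
    by_contra hne
    have h2 : u2 (x, y) ≠ 0 := fun h => hne (by rw [h]; ring)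
    have h3 : u3 (x + β * t, y) ≠ 0 := fun h => hne (by rw [h]; ring)
    have hgx : bg (r * x) ≠ 0 := fun h => h2 (by rw [hu2_def]; simp only; rw [h, zero_mul])
    have hwx : bw (r * (x + β * t) / β) ≠ 0 := fun h =>
      h3 (by rw [hu3_def]; simp only; rw [h, zero_mul])
    have hrx : |r * x| < m/4 := by
      have := bump_ne_zero bg hgx
      rwa [sub_zero] at this
    have hrxβ : |r * x / β| ≤ 1/4 := by
      rw [abs_div]
      rw [div_le_iff₀ hβ]
      calc |r * x| ≤ m/4 := hrx.le
        _ ≤ |β|/4 := by linarith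
        _ = 1/4 * |β| := by ring
    have harg : |r * (x + β * t) / β - (R+1)| < R := by
      have := bump_ne_zero bw hwx
      exact this
    have hsplit : r * (x + β * t) / β = r * x / β + r * t := by
      field_simp
    have h1R : 1 < r * x / β + r * t := by
      rw [hsplit] at harg
      rcases abs_lt.mp harg with ⟨hl, _⟩
      linarith
    have hrt : 3/4 < r * t := by
      rcases abs_le.mp hrxβ with ⟨hl, _⟩
      linarith
    have : r * t < 1/2 := by
      have := mul_lt_mul_of_pos_left ht hr
      rw [ht₀_def] at this
      calc r * t < r * (1/(2*r)) := this
        _ = 1/2 := by field_simp <;> ring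
    linarith
  -- the three Schwartz functions
  refine ⟨mkSch u1 hu1 hc1, mkSch u2 hu2 hc2, mkSch u3 hu3 hc3,
    ∫ p : ℝ × ℝ, ∫ t, Kre β t₀ u1 u2 u3 (p, t), ?_, ?_, ?_, ?_, ?_⟩
  · exact lambda_tendsto β t₀ ht₀ u1 u2 u3 hu1 hc1 hu2 hc2 hu3 hc3 hvan
  · -- lower bound
    have hcont : Continuous (Kre β t₀ u1 u2 u3) :=
      Kre_cont β t₀ ht₀ (hu1.continuous) (hu2.continuous) (hu3.continuous)
    set M : ℝ := max (8*R/r) (max ((m/4)/r) (2/s)) with hM_def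
    have hMpos : 0 < M := lt_of_lt_of_le (by positivity : (0:ℝ) < 8*R/r) (le_max_left _ _)
    have hcs : HasCompactSupport (Kre β t₀ u1 u2 u3) := by
      apply Kre_hcs β t₀ M hMpos
      · intro x hx
        exact hsupp1 x (lt_of_le_of_lt (le_max_left _ _) hx)
      · rintro ⟨x, y⟩ (hx | hy)
        · rw [hu2_def]; simp only
          rw [hsuppg x (lt_of_le_of_lt ((le_max_left _ _).trans (le_max_right _ _)) hx), zero_mul]
        · rw [hu2_def]; simp only
          rw [hsuppχ y (lt_of_le_of_lt ((le_max_right _ _).trans (le_max_right _ _)) hy),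
            mul_zero]
    have hpos : ∀ q, 0 ≤ Kre β t₀ u1 u2 u3 q := by
      apply Kre_nonneg β t₀ ht₀ _ _ _ hvan
      · intro x; exact bF.nonneg
      · intro q; exact mul_nonneg bg.nonneg bχ.nonneg
      · intro q; exact mul_nonneg bw.nonneg bχ.nonneg
    have hlow := lowbd (Kre β t₀ u1 u2 u3) hcont hcs hpos (3/r) (R/r)
      ((m/2)/(r*s)) (by positivity) (by gcongr <;> linarith)
      (by positivity) ?_
    · have heq : (R/r)/(3/r) = R/3 := by field_simp
      rw [heq] at hlow
      calc m / 2 * Real.log (R / 3) / (r * s)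
          = (m/2)/(r*s) * Real.log (R/3) := by ring
        _ ≤ _ := hlow
    · -- hbig
      intro t ht
      rcases ht with ⟨ht1, ht2⟩
      have htpos : 0 < t := lt_trans (by positivity) ht1
      have hrt1 : 3 < r * t := by
        have := mul_lt_mul_of_pos_left ht1 hr
        calc (3:ℝ) = r * (3/r) := (rml r _ hr.ne').symm
          _ < r * t := this
      have hrt2 : r * t ≤ R := by
        have := mul_le_mul_of_nonneg_left ht2 hr.le
        calc r * t ≤ r * (R/r) := this
          _ = R := rml r _ hr.ne'
      have key : ∀ p : ℝ × ℝ, p ∈ Icc (-((m/8)/r)) ((m/8)/r) ×ˢ Icc (-(1/s)) (1/s) →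
          1/t ≤ Kre β t₀ u1 u2 u3 (p, t) := by
        rintro ⟨x, y⟩ ⟨hx, hy⟩
        rcases hx with ⟨hx1, hx2⟩
        rcases hy with ⟨hy1, hy2⟩
        have hrx : |r * x| ≤ m/8 := by
          rw [abs_mul, abs_of_pos hr]
          calc r * |x| ≤ r * ((m/8)/r) := mul_le_mul_of_nonneg_left (abs_le.mpr ⟨hx1, hx2⟩) hr.le
            _ = m/8 := rml r _ hr.ne'
        have hsy : |s * y| ≤ 1 := by
          rw [abs_mul, abs_of_pos hs]
          calc s * |y| ≤ s * (1/s) := mul_le_mul_of_nonneg_left (abs_le.mpr ⟨hy1, hy2⟩) hs.le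
            _ = 1 := by rw [rml s _ hs.ne']
        have hbχ1 : bχ (s * y) = 1 := bump_one bχ (by rwa [sub_zero])
        have hbg1 : bg (r * x) = 1 := bump_one bg (by rwa [sub_zero])
        have hbF1 : bF (r * (x + t)) = 1 := by
          apply bump_one
          rw [sub_zero, mul_add]
          have h1 : |r * x + r * t| ≤ |r * x| + |r * t| := abs_add_le _ _
          have h2 : |r * t| = r * t := abs_of_pos (by positivity)
          show |r * x + r * t| ≤ 4 * R
          calc |r * x + r * t| ≤ m/8 + r*t := by rw [h2] at h1; linarith
            _ ≤ 1/8 + R := by linarith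
            _ ≤ 4 * R := by linarith
        have hbw1 : bw (r * (x + β * t) / β) = 1 := by
          apply bump_one
          have hsplit : r * (x + β * t) / β = r * x / β + r * t := by
            field_simp
          have hrxβ : |r * x / β| ≤ 1/8 := by
            rw [abs_div, div_le_iff₀ hβ]
            calc |r * x| ≤ m/8 := hrx
              _ ≤ |β|/8 := by linarith
              _ = 1/8 * |β| := by ring
          rcases abs_le.mp hrxβ with ⟨hb1, hb2⟩
          rw [hsplit]
          show |r * x / β + r * t - (R+1)| ≤ R - 1
          apply abs_le.mpr
          constructor <;> [linarith; linarith]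
        have hψ : t / max (t^2) (t₀^2) = 1/t := by
          have h1 : t₀ ≤ t := by
            rw [ht₀_def]
            have h2 : 1/(2*r) ≤ 3/r := by
              rw [div_le_div_iff₀ (by positivity) hr]
              nlinarith
            linarith
          have hmax : max (t^2) (t₀^2) = t^2 := by
            apply max_eq_left
            nlinarith [mul_nonneg (sub_nonneg.mpr h1) (add_nonneg htpos.le ht₀.le)]
          rw [hmax]
          field_simp
        have e1 : u1 (x + t) = 1 := hbF1
        have e2 : u2 (x, y) = 1 := by
          show bg (r * x) * bχ (s * y) = 1
          rw [hbg1, hbχ1]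
          norm_num
        have e3 : u3 (x + β * t, y) = 1 := by
          show bw (r * (x + β * t) / β) * bχ (s * y) = 1
          rw [hbw1, hbχ1]
          norm_num
        show 1/t ≤ u1 (x + t) * u2 (x, y) * u3 (x + β * t, y) * (t / max (t^2) (t₀^2))
        rw [e1, e2, e3, hψ]
        norm_num
      have hslice := slicebd (Kre β t₀ u1 u2 u3) hcont hcs hpos t
        (-((m/8)/r)) ((m/8)/r) (-(1/s)) (1/s) (1/t)
        (by have : (0:ℝ) ≤ (m/8)/r := by positivity
            linarith)
        (by have : (0:ℝ) ≤ 1/s := by positivity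
            linarith)
        (by positivity) key
      calc (m/2)/(r*s) * (1/t) = 1/t * (((m/8)/r - -((m/8)/r)) * (1/s - -(1/s))) := by
            field_simp
            ring
        _ ≤ _ := hslice
  · -- norm f
    have := norm1 u1 hu1 hc1 (8*R/r) (by positivity)
      (fun x => by rw [abs_of_nonneg bF.nonneg]; exact bF.le_one) hsupp1 p₁
    rwa [show (2:ℝ) * (8*R/r) = 16*R/r by ring] at this
  · -- norm G
    have hb2 : ∀ q : ℝ × ℝ, |u2 q| ≤ 1 := by
      intro q
      rw [hu2_def]; simp only
      rw [abs_of_nonneg (mul_nonneg bg.nonneg bχ.nonneg)]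
      exact mul_le_one₀ bg.le_one bχ.nonneg bχ.le_one
    have hs2 : ∀ q : ℝ × ℝ, (m/4)/r < |q.1| ∨ 2/s < |q.2| → u2 q = 0 := by
      rintro ⟨x, y⟩ (hx | hy)
      · rw [hu2_def]; simp only; rw [hsuppg x hx, zero_mul]
      · rw [hu2_def]; simp only; rw [hsuppχ y hy, mul_zero]
    have := norm2 u2 hu2 hc2 ((m/4)/r) (2/s) (by positivity) (by positivity) hb2 hs2 p₂
    rwa [show (2:ℝ) * ((m/4)/r) * (2 * (2/s)) = 2*m/(r*s) by field_simp; ring] at this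
  · -- norm H
    have hb3 : ∀ q : ℝ × ℝ, |u3 q| ≤ 1 := by
      intro q
      rw [hu3_def]; simp only
      rw [abs_of_nonneg (mul_nonneg bw.nonneg bχ.nonneg)]
      exact mul_le_one₀ bw.le_one bχ.nonneg bχ.le_one
    have hs3 : ∀ q : ℝ × ℝ, 3*R*|β|/r < |q.1| ∨ 2/s < |q.2| → u3 q = 0 := by
      rintro ⟨x, y⟩ (hx | hy)
      · have hle : (2*R+1)*|β|/r ≤ 3*R*|β|/r := by
          gcongr
          nlinarith
        rw [hu3_def]; simp only
        rw [hsuppw x (lt_of_le_of_lt hle hx), zero_mul]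
      · rw [hu3_def]; simp only; rw [hsuppχ y hy, mul_zero]
    have := norm2 u3 hu3 hc3 (3*R*|β|/r) (2/s) (by positivity) (by positivity) hb3 hs3 p₃
    rwa [show (2:ℝ) * (3*R*|β|/r) * (2 * (2/s)) = 24*R*|β|/(r*s) by field_simp; ring] at this

end ConstrA

section ConstrB

set_option maxHeartbeats 1000000 in
lemma constrB (β : ℝ) (hβ0 : β ≠ 0) (r s R : ℝ) (hr : 0 < r) (hs : 0 < s) (hR : 10 ≤ R)
    (p₁ p₂ p₃ : ℝ≥0∞) :
    ∃ (F : SchwartzMap ℝ ℂ) (G H : SchwartzMap (ℝ × ℝ) ℂ) (Lr : ℝ),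
      Tendsto (Lambda4Trunc β F G H) (𝓝[>] 0) (𝓝 ((Lr : ℝ) : ℂ)) ∧
      (min 1 |β| / 2) * Real.log (R / 3) / (r * s) ≤ Lr ∧
      eLpNorm (⇑F) p₁ volume ≤ ENNReal.ofReal ((8*(1+|1-β|)*R/r) ^ (1 / p₁).toReal) ∧
      eLpNorm (⇑G) p₂ volume ≤ ENNReal.ofReal ((24 * R * |β| / (r * s)) ^ (1 / p₂).toReal) ∧
      eLpNorm (⇑H) p₃ volume ≤ ENNReal.ofReal ((2 * min 1 |β| / (r * s)) ^ (1 / p₃).toReal) := by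
  have hβ : 0 < |β| := abs_pos.mpr hβ0
  set m := min 1 |β| with hm_def
  have hm : 0 < m := lt_min one_pos hβ
  have hm1 : m ≤ 1 := min_le_left _ _
  have hmβ : m ≤ |β| := min_le_right _ _
  set c₁ : ℝ := 1 + |1 - β| with hc₁_def
  have hc₁ : 1 ≤ c₁ := by
    have := abs_nonneg (1 - β)
    linarith
  set bF : ContDiffBump (0:ℝ) := ⟨2*c₁*R, 4*c₁*R, by nlinarith, by nlinarith⟩ with hbF
  set bg : ContDiffBump (0:ℝ) := ⟨m/8, m/4, by linarith, by linarith⟩ with hbg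
  set bw : ContDiffBump (R+1:ℝ) := ⟨R-1, R, by linarith, by linarith⟩ with hbw
  set bχ : ContDiffBump (0:ℝ) := ⟨1, 2, one_pos, one_lt_two⟩ with hbχ
  set u1 : ℝ → ℝ := fun x => bF (r * x) with hu1_def
  set u2 : ℝ × ℝ → ℝ := fun q => bw (-(r * q.1) / β) * bχ (s * q.2) with hu2_def
  set u3 : ℝ × ℝ → ℝ := fun q => bg (r * q.1) * bχ (s * q.2) with hu3_def
  have hu1 : ContDiff ℝ S∞ u1 := bF.contDiff.comp (contDiff_const.mul contDiff_id)
  have hu2 : ContDiff ℝ S∞ u2 :=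
    (bw.contDiff.comp (((contDiff_const.mul contDiff_fst).neg).div_const β)).mul
      (bχ.contDiff.comp (contDiff_const.mul contDiff_snd))
  have hu3 : ContDiff ℝ S∞ u3 :=
    (bg.contDiff.comp (contDiff_const.mul contDiff_fst)).mul
      (bχ.contDiff.comp (contDiff_const.mul contDiff_snd))
  -- support facts
  have hsupp1 : ∀ x, 4*c₁*R/r < |x| → u1 x = 0 := by
    intro x hx
    apply bump_zero
    show (4*c₁*R : ℝ) ≤ |r * x - 0|
    rw [sub_zero, abs_mul, abs_of_pos hr]
    calc (4*c₁*R:ℝ) = r * (4*c₁*R/r) := (rml r _ hr.ne').symm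
      _ ≤ r * |x| := mul_le_mul_of_nonneg_left hx.le hr.le
  have hsuppg : ∀ x : ℝ, (m/4)/r < |x| → bg (r * x) = 0 := by
    intro x hx
    apply bump_zero
    show (m/4 : ℝ) ≤ |r * x - 0|
    rw [sub_zero, abs_mul, abs_of_pos hr]
    calc (m/4:ℝ) = r * ((m/4)/r) := (rml r _ hr.ne').symm
      _ ≤ r * |x| := mul_le_mul_of_nonneg_left hx.le hr.le
  have hsuppw : ∀ x : ℝ, (2*R+1)*|β|/r < |x| → bw (-(r * x) / β) = 0 := by
    intro x hx
    apply bump_zero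
    show (R : ℝ) ≤ |(-(r * x)) / β - (R+1)|
    have h1 : (2*R+1) ≤ |(-(r * x)) / β| := by
      rw [abs_div, abs_neg, abs_mul, abs_of_pos hr]
      rw [le_div_iff₀ hβ]
      calc (2*R+1) * |β| = r * ((2*R+1)*|β|/r) := (rml r _ hr.ne').symm
        _ ≤ r * |x| := mul_le_mul_of_nonneg_left hx.le hr.le
    have h2 := abs_sub_abs_le_abs_sub ((-(r * x)) / β) (R+1)
    have h3 : |(R:ℝ)+1| = R+1 := abs_of_pos (by linarith)
    linarith
  have hsuppχ : ∀ y : ℝ, 2/s < |y| → bχ (s * y) = 0 := by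
    intro y hy
    apply bump_zero
    show (2 : ℝ) ≤ |s * y - 0|
    rw [sub_zero, abs_mul, abs_of_pos hs]
    calc (2:ℝ) = s * (2/s) := (rml s _ hs.ne').symm
      _ ≤ s * |y| := mul_le_mul_of_nonneg_left hy.le hs.le
  have hc1 : HasCompactSupport u1 := hcs1 _ hsupp1
  have hc2 : HasCompactSupport u2 := by
    apply hcs2 (max ((2*R+1)*|β|/r) (2/s))
    rintro ⟨x, y⟩ (hx | hy)
    · rw [hu2_def]; simp only
      rw [hsuppw x (lt_of_le_of_lt (le_max_left _ _) hx), zero_mul]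
    · rw [hu2_def]; simp only
      rw [hsuppχ y (lt_of_le_of_lt (le_max_right _ _) hy), mul_zero]
  have hc3 : HasCompactSupport u3 := by
    apply hcs2 (max ((m/4)/r) (2/s))
    rintro ⟨x, y⟩ (hx | hy)
    · rw [hu3_def]; simp only
      rw [hsuppg x (lt_of_le_of_lt (le_max_left _ _) hx), zero_mul]
    · rw [hu3_def]; simp only
      rw [hsuppχ y (lt_of_le_of_lt (le_max_right _ _) hy), mul_zero]
  -- vanishing for small t
  set t₀ : ℝ := 1/(2*r) with ht₀_def
  have ht₀ : 0 < t₀ := by positivity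
  have hvan : ∀ x y t, t < t₀ → u1 (x + t) * u2 (x, y) * u3 (x + β * t, y) = 0 := by
    intro x y t ht
    by_contra hne
    have h2 : u2 (x, y) ≠ 0 := fun h => hne (by rw [h]; ring)
    have h3 : u3 (x + β * t, y) ≠ 0 := fun h => hne (by rw [h]; ring)
    have hwx : bw (-(r * x) / β) ≠ 0 := fun h =>
      h2 (by rw [hu2_def]; simp only; rw [h, zero_mul])
    have hgx : bg (r * (x + β * t)) ≠ 0 := fun h =>
      h3 (by rw [hu3_def]; simp only; rw [h, zero_mul])
    have hrx : |r * (x + β * t)| < m/4 := by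
      have := bump_ne_zero bg hgx
      rwa [sub_zero] at this
    have hrxβ : |r * (x + β * t) / β| ≤ 1/4 := by
      rw [abs_div]
      rw [div_le_iff₀ hβ]
      calc |r * (x + β * t)| ≤ m/4 := hrx.le
        _ ≤ |β|/4 := by linarith
        _ = 1/4 * |β| := by ring
    have harg : |(-(r * x)) / β - (R+1)| < R := bump_ne_zero bw hwx
    have h1R : 1 < (-(r * x)) / β := by
      rcases abs_lt.mp harg with ⟨hl, _⟩
      linarith
    have hsplit : r * t = r * (x + β * t) / β + (-(r * x)) / β := by
      field_simp
      ring
    have hrt : 3/4 < r * t := by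
      rcases abs_le.mp hrxβ with ⟨hl, _⟩
      rw [hsplit]
      linarith
    have : r * t < 1/2 := by
      have := mul_lt_mul_of_pos_left ht hr
      rw [ht₀_def] at this
      calc r * t < r * (1/(2*r)) := this
        _ = 1/2 := by field_simp <;> ring
    linarith
  refine ⟨mkSch u1 hu1 hc1, mkSch u2 hu2 hc2, mkSch u3 hu3 hc3,
    ∫ p : ℝ × ℝ, ∫ t, Kre β t₀ u1 u2 u3 (p, t), ?_, ?_, ?_, ?_, ?_⟩
  · exact lambda_tendsto β t₀ ht₀ u1 u2 u3 hu1 hc1 hu2 hc2 hu3 hc3 hvan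
  · -- lower bound
    have hcont : Continuous (Kre β t₀ u1 u2 u3) :=
      Kre_cont β t₀ ht₀ (hu1.continuous) (hu2.continuous) (hu3.continuous)
    set M : ℝ := max (4*c₁*R/r) (max ((2*R+1)*|β|/r) (2/s)) with hM_def
    have hMpos : 0 < M := lt_of_lt_of_le (by positivity : (0:ℝ) < 4*c₁*R/r) (le_max_left _ _)
    have hcs : HasCompactSupport (Kre β t₀ u1 u2 u3) := by
      apply Kre_hcs β t₀ M hMpos
      · intro x hx
        exact hsupp1 x (lt_of_le_of_lt (le_max_left _ _) hx)
      · rintro ⟨x, y⟩ (hx | hy)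
        · rw [hu2_def]; simp only
          rw [hsuppw x (lt_of_le_of_lt ((le_max_left _ _).trans (le_max_right _ _)) hx), zero_mul]
        · rw [hu2_def]; simp only
          rw [hsuppχ y (lt_of_le_of_lt ((le_max_right _ _).trans (le_max_right _ _)) hy),
            mul_zero]
    have hpos : ∀ q, 0 ≤ Kre β t₀ u1 u2 u3 q := by
      apply Kre_nonneg β t₀ ht₀ _ _ _ hvan
      · intro x; exact bF.nonneg
      · intro q; exact mul_nonneg bw.nonneg bχ.nonneg
      · intro q; exact mul_nonneg bg.nonneg bχ.nonneg
    have hlow := lowbd (Kre β t₀ u1 u2 u3) hcont hcs hpos (3/r) (R/r)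
      ((m/2)/(r*s)) (by positivity) (by gcongr <;> linarith)
      (by positivity) ?_
    · have heq : (R/r)/(3/r) = R/3 := by field_simp
      rw [heq] at hlow
      calc m / 2 * Real.log (R / 3) / (r * s)
          = (m/2)/(r*s) * Real.log (R/3) := by ring
        _ ≤ _ := hlow
    · -- hbig
      intro t ht
      rcases ht with ⟨ht1, ht2⟩
      have htpos : 0 < t := lt_trans (by positivity) ht1
      have hrt1 : 3 < r * t := by
        have := mul_lt_mul_of_pos_left ht1 hr
        calc (3:ℝ) = r * (3/r) := (rml r _ hr.ne').symm
          _ < r * t := this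
      have hrt2 : r * t ≤ R := by
        have := mul_le_mul_of_nonneg_left ht2 hr.le
        calc r * t ≤ r * (R/r) := this
          _ = R := rml r _ hr.ne'
      have key : ∀ p : ℝ × ℝ,
          p ∈ Icc ((-(β*(r*t)) - m/8)/r) ((-(β*(r*t)) + m/8)/r) ×ˢ Icc (-(1/s)) (1/s) →
          1/t ≤ Kre β t₀ u1 u2 u3 (p, t) := by
        rintro ⟨x, y⟩ ⟨hx, hy⟩
        rcases hx with ⟨hx1, hx2⟩
        rcases hy with ⟨hy1, hy2⟩
        have hx1' : -(β*(r*t)) - m/8 ≤ r * x := by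
          have := mul_le_mul_of_nonneg_left hx1 hr.le
          rwa [rml r _ hr.ne'] at this
        have hx2' : r * x ≤ -(β*(r*t)) + m/8 := by
          have := mul_le_mul_of_nonneg_left hx2 hr.le
          rwa [rml r _ hr.ne'] at this
        have hkey0 : |r * x + β * (r*t)| ≤ m/8 := abs_le.mpr ⟨by linarith, by linarith⟩
        have hsy : |s * y| ≤ 1 := by
          rw [abs_mul, abs_of_pos hs]
          calc s * |y| ≤ s * (1/s) := mul_le_mul_of_nonneg_left (abs_le.mpr ⟨hy1, hy2⟩) hs.le
            _ = 1 := by rw [rml s _ hs.ne']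
        have hbχ1 : bχ (s * y) = 1 := bump_one bχ (by rwa [sub_zero])
        have hbg1 : bg (r * (x + β * t)) = 1 := by
          apply bump_one
          rw [sub_zero]
          show |r * (x + β * t)| ≤ m/8
          rw [show r * (x + β * t) = r * x + β * (r * t) by ring]
          exact hkey0
        have hbw1 : bw (-(r * x) / β) = 1 := by
          apply bump_one
          have hsplit : -(r * x) / β = r * t - (r * x + β * (r * t)) / β := by
            field_simp
            ring
          have habsd : |(r * x + β * (r * t)) / β| ≤ 1/8 := by
            rw [abs_div, div_le_iff₀ hβ]
            calc |r * x + β * (r*t)| ≤ m/8 := hkey0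
              _ ≤ |β|/8 := by linarith
              _ = 1/8 * |β| := by ring
          rcases abs_le.mp habsd with ⟨hb1, hb2⟩
          rw [hsplit]
          show |r * t - (r * x + β * (r * t)) / β - (R+1)| ≤ R - 1
          apply abs_le.mpr
          constructor <;> [linarith; linarith]
        have hbF1 : bF (r * (x + t)) = 1 := by
          apply bump_one
          rw [sub_zero]
          show |r * (x + t)| ≤ 2*c₁*R
          have hd : r * (x + t) = (r * x + β * (r*t)) + (1 - β) * (r*t) := by ring
          rw [hd]
          have h1 : |(r * x + β * (r*t)) + (1 - β) * (r*t)|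
              ≤ |r * x + β * (r*t)| + |(1 - β) * (r*t)| := abs_add_le _ _
          have h2 : |(1 - β) * (r*t)| = |1 - β| * (r*t) := by
            rw [abs_mul, abs_of_pos (by linarith : (0:ℝ) < r*t)]
          have h3 : |1 - β| * (r*t) ≤ |1 - β| * R :=
            mul_le_mul_of_nonneg_left hrt2 (abs_nonneg _)
          have h4 : |1 - β| * R ≤ (c₁ - 1) * R + R := by
            rw [hc₁_def]
            ring_nf
            linarith
          calc |(r * x + β * (r*t)) + (1 - β) * (r*t)|
              ≤ m/8 + |1 - β| * (r*t) := by rw [h2] at h1; linarith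
            _ ≤ 1/8 + (c₁ - 1) * R + R := by nlinarith
            _ ≤ 2*c₁*R := by nlinarith
        have hψ : t / max (t^2) (t₀^2) = 1/t := by
          have h1 : t₀ ≤ t := by
            rw [ht₀_def]
            have h2 : 1/(2*r) ≤ 3/r := by
              rw [div_le_div_iff₀ (by positivity) hr]
              nlinarith
            linarith
          have hmax : max (t^2) (t₀^2) = t^2 := by
            apply max_eq_left
            nlinarith [mul_nonneg (sub_nonneg.mpr h1) (add_nonneg htpos.le ht₀.le)]
          rw [hmax]
          field_simp
        have e1 : u1 (x + t) = 1 := hbF1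
        have e2 : u2 (x, y) = 1 := by
          show bw (-(r * x) / β) * bχ (s * y) = 1
          rw [hbw1, hbχ1]
          norm_num
        have e3 : u3 (x + β * t, y) = 1 := by
          show bg (r * (x + β * t)) * bχ (s * y) = 1
          rw [hbg1, hbχ1]
          norm_num
        show 1/t ≤ u1 (x + t) * u2 (x, y) * u3 (x + β * t, y) * (t / max (t^2) (t₀^2))
        rw [e1, e2, e3, hψ]
        norm_num
      have hslice := slicebd (Kre β t₀ u1 u2 u3) hcont hcs hpos t
        ((-(β*(r*t)) - m/8)/r) ((-(β*(r*t)) + m/8)/r) (-(1/s)) (1/s) (1/t)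
        (by gcongr <;> linarith)
        (by have : (0:ℝ) ≤ 1/s := by positivity
            linarith)
        (by positivity) key
      calc (m/2)/(r*s) * (1/t)
          = 1/t * (((-(β*(r*t)) + m/8)/r - (-(β*(r*t)) - m/8)/r) * (1/s - -(1/s))) := by
            field_simp
            ring
        _ ≤ _ := hslice
  · -- norm f
    have := norm1 u1 hu1 hc1 (4*c₁*R/r) (by positivity)
      (fun x => by rw [abs_of_nonneg bF.nonneg]; exact bF.le_one) hsupp1 p₁
    rwa [show (2:ℝ) * (4*c₁*R/r) = 8*c₁*R/r by ring] at this
  · -- norm G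
    have hb2 : ∀ q : ℝ × ℝ, |u2 q| ≤ 1 := by
      intro q
      rw [hu2_def]; simp only
      rw [abs_of_nonneg (mul_nonneg bw.nonneg bχ.nonneg)]
      exact mul_le_one₀ bw.le_one bχ.nonneg bχ.le_one
    have hs2 : ∀ q : ℝ × ℝ, 3*R*|β|/r < |q.1| ∨ 2/s < |q.2| → u2 q = 0 := by
      rintro ⟨x, y⟩ (hx | hy)
      · have hle : (2*R+1)*|β|/r ≤ 3*R*|β|/r := by
          gcongr
          nlinarith
        rw [hu2_def]; simp only
        rw [hsuppw x (lt_of_le_of_lt hle hx), zero_mul]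
      · rw [hu2_def]; simp only; rw [hsuppχ y hy, mul_zero]
    have := norm2 u2 hu2 hc2 (3*R*|β|/r) (2/s) (by positivity) (by positivity) hb2 hs2 p₂
    rwa [show (2:ℝ) * (3*R*|β|/r) * (2 * (2/s)) = 24*R*|β|/(r*s) by field_simp; ring] at this
  · -- norm H
    have hb3 : ∀ q : ℝ × ℝ, |u3 q| ≤ 1 := by
      intro q
      rw [hu3_def]; simp only
      rw [abs_of_nonneg (mul_nonneg bg.nonneg bχ.nonneg)]
      exact mul_le_one₀ bg.le_one bχ.nonneg bχ.le_one
    have hs3 : ∀ q : ℝ × ℝ, (m/4)/r < |q.1| ∨ 2/s < |q.2| → u3 q = 0 := by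
      rintro ⟨x, y⟩ (hx | hy)
      · rw [hu3_def]; simp only; rw [hsuppg x hx, zero_mul]
      · rw [hu3_def]; simp only; rw [hsuppχ y hy, mul_zero]
    have := norm2 u3 hu3 hc3 ((m/4)/r) (2/s) (by positivity) (by positivity) hb3 hs3 p₃
    rwa [show (2:ℝ) * ((m/4)/r) * (2 * (2/s)) = 2*m/(r*s) by field_simp; ring] at this

end ConstrB

section Assembly

lemma winS (K c0 δ : ℝ) (hK : 0 < K) (hc0 : 0 < c0) (hδ : δ ≠ 0) :
    ∃ s : ℝ, 0 < s ∧ K * s ^ δ < c0 := by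
  rcases lt_or_gt_of_ne hδ with hneg | hpos
  · set s := max 1 ((2*K/c0) ^ (1/(-δ))) with hs_def
    have hs1 : (0:ℝ) < s := lt_of_lt_of_le one_pos (le_max_left _ _)
    refine ⟨s, hs1, ?_⟩
    have hbase : (0:ℝ) < 2*K/c0 := by positivity
    have h1 : (2*K/c0) ^ (1/(-δ)) ≤ s := le_max_right _ _
    have h2 : ((2*K/c0) ^ (1/(-δ))) ^ (-δ) ≤ s ^ (-δ) :=
      Real.rpow_le_rpow (Real.rpow_nonneg hbase.le _) h1 (by linarith)
    have h3 : ((2*K/c0) ^ (1/(-δ))) ^ (-δ) = 2*K/c0 := by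
      rw [← Real.rpow_mul hbase.le, one_div, inv_mul_cancel₀ (by linarith : -δ ≠ 0),
        Real.rpow_one]
    have h5 : 2*K/c0 ≤ s ^ (-δ) := h3 ▸ h2
    have h4 : s ^ δ = (s ^ (-δ))⁻¹ := by rw [← Real.rpow_neg hs1.le, neg_neg]
    have h7 : K * s ^ δ = K / s ^ (-δ) := by rw [h4, div_eq_mul_inv]
    have h8 : K / s ^ (-δ) ≤ K / (2*K/c0) := by
      gcongr
    have h9 : K / (2*K/c0) = c0/2 := by
      field_simp
    rw [h7]
    calc K / s ^ (-δ) ≤ c0/2 := by rw [← h9]; exact h8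
      _ < c0 := by linarith
  · set s := min 1 ((c0/(2*K)) ^ (1/δ)) with hs_def
    have hbase : (0:ℝ) < c0/(2*K) := by positivity
    have hs1 : (0:ℝ) < s := lt_min one_pos (Real.rpow_pos_of_pos hbase _)
    refine ⟨s, hs1, ?_⟩
    have h1 : s ≤ (c0/(2*K)) ^ (1/δ) := min_le_right _ _
    have h2 : s ^ δ ≤ ((c0/(2*K)) ^ (1/δ)) ^ δ :=
      Real.rpow_le_rpow hs1.le h1 (by linarith)
    have h3 : ((c0/(2*K)) ^ (1/δ)) ^ δ = c0/(2*K) := by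
      rw [← Real.rpow_mul hbase.le, one_div, inv_mul_cancel₀ hpos.ne', Real.rpow_one]
    have h4 : K * s ^ δ ≤ K * (c0/(2*K)) := by
      apply mul_le_mul_of_nonneg_left _ hK.le
      rw [← h3]; exact h2
    have h5 : K * (c0/(2*K)) = c0/2 := by
      field_simp
    calc K * s ^ δ ≤ c0/2 := by rw [← h5]; exact h4
      _ < c0 := by linarith

lemma algWin (C K1 K2 K3 logv r s a1 a2 a3 : ℝ) (hr : 0 < r) (hs : 0 < s)
    (hK1 : 0 < K1) (hK2 : 0 < K2) (hK3 : 0 < K3)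
    (hkey : C * K1^a1 * K2^a2 * K3^a3 * (r ^ (1 - a1 - a2 - a3) * s ^ (1 - a2 - a3)) < logv) :
    C * ((K1/r)^a1 * ((K2/(r*s))^a2 * (K3/(r*s))^a3)) < logv / (r*s) := by
  rw [lt_div_iff₀ (by positivity : (0:ℝ) < r * s)]
  have e1 : (K1/r)^a1 = K1^a1 / r^a1 := Real.div_rpow hK1.le hr.le _
  have e2 : (K2/(r*s))^a2 = K2^a2 / (r^a2 * s^a2) := by
    rw [Real.div_rpow hK2.le (by positivity), Real.mul_rpow hr.le hs.le]
  have e3 : (K3/(r*s))^a3 = K3^a3 / (r^a3 * s^a3) := by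
    rw [Real.div_rpow hK3.le (by positivity), Real.mul_rpow hr.le hs.le]
  have er : r ^ (1 - a1 - a2 - a3) = r / (r^a1 * r^a2 * r^a3) := by
    rw [show (1:ℝ) - a1 - a2 - a3 = 1 - a1 - a2 - a3 by ring, Real.rpow_sub hr,
      Real.rpow_sub hr, Real.rpow_sub hr, Real.rpow_one]
    field_simp
  have es : s ^ (1 - a2 - a3) = s / (s^a2 * s^a3) := by
    rw [Real.rpow_sub hs, Real.rpow_sub hs, Real.rpow_one]
    field_simp
  rw [e1, e2, e3] at *
  rw [er, es] at hkey
  have hra1 : (0:ℝ) < r^a1 := Real.rpow_pos_of_pos hr _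
  have hra2 : (0:ℝ) < r^a2 := Real.rpow_pos_of_pos hr _
  have hra3 : (0:ℝ) < r^a3 := Real.rpow_pos_of_pos hr _
  have hsa2 : (0:ℝ) < s^a2 := Real.rpow_pos_of_pos hs _
  have hsa3 : (0:ℝ) < s^a3 := Real.rpow_pos_of_pos hs _
  have heq : C * (K1^a1 / r^a1 * (K2^a2 / (r^a2 * s^a2) * (K3^a3 / (r^a3 * s^a3)))) * (r*s)
      = C * K1^a1 * K2^a2 * K3^a3 * (r / (r^a1 * r^a2 * r^a3) * (s / (s^a2 * s^a3))) := by
    field_simp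
  rw [heq]
  exact hkey

lemma finishAll (C : ℝ) (hC : 0 < C) (p₁ p₂ p₃ : ℝ≥0∞) (F : SchwartzMap ℝ ℂ)
    (G H : SchwartzMap (ℝ × ℝ) ℂ) (Lr b₁ b₂ b₃ lo : ℝ)
    (hb₁0 : 0 ≤ b₁) (hb₂0 : 0 ≤ b₂) (hb₃0 : 0 ≤ b₃)
    (hb₁ : eLpNorm (⇑F) p₁ volume ≤ ENNReal.ofReal b₁)
    (hb₂ : eLpNorm (⇑G) p₂ volume ≤ ENNReal.ofReal b₂)
    (hb₃ : eLpNorm (⇑H) p₃ volume ≤ ENNReal.ofReal b₃)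
    (hLr : lo ≤ Lr) (hwin : C * (b₁ * (b₂ * b₃)) < lo) :
    ENNReal.ofReal C * eLpNorm (⇑F) p₁ volume * eLpNorm (⇑G) p₂ volume *
      eLpNorm (⇑H) p₃ volume < ENNReal.ofReal ‖((Lr : ℝ) : ℂ)‖ := by
  have hnorm : ‖((Lr : ℝ) : ℂ)‖ = |Lr| := RCLike.norm_ofReal Lr
  have hchain : C * (b₁ * (b₂ * b₃)) < |Lr| :=
    lt_of_lt_of_le hwin (hLr.trans (le_abs_self Lr))
  calc ENNReal.ofReal C * eLpNorm (⇑F) p₁ volume * eLpNorm (⇑G) p₂ volume *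
        eLpNorm (⇑H) p₃ volume
      ≤ ENNReal.ofReal C * ENNReal.ofReal b₁ * ENNReal.ofReal b₂ * ENNReal.ofReal b₃ := by
        gcongr
    _ = ENNReal.ofReal (C * (b₁ * (b₂ * b₃))) := by
        rw [← ENNReal.ofReal_mul hC.le, ← ENNReal.ofReal_mul (by positivity),
          ← ENNReal.ofReal_mul (by positivity)]
        congr 1
        ring
    _ < ENNReal.ofReal |Lr| :=
        (ENNReal.ofReal_lt_ofReal_iff (lt_of_le_of_lt (by positivity) hchain)).mpr hchain
    _ = ENNReal.ofReal ‖((Lr : ℝ) : ℂ)‖ := by rw [hnorm]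

end Assembly


theorem stmt1 (β : ℝ) (hβ0 : β ≠ 0) (hβ1 : β ≠ 1)
    (p₁ p₂ p₃ : ℝ≥0∞) (hp₁ : 1 ≤ p₁) (hp₂ : 1 ≤ p₂) (hp₃ : 1 ≤ p₃)
    (hrange : ¬ (p₁ = ⊤ ∧ 1 / p₂ + 1 / p₃ = 1 ∧ 1 < p₂ ∧ p₂ < ⊤ ∧ 1 < p₃ ∧ p₃ < ⊤)) :
    ∀ C : ℝ, 0 < C →
      ∃ (f : SchwartzMap ℝ ℂ) (G H : SchwartzMap (ℝ × ℝ) ℂ) (L : ℂ),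
        Tendsto (Lambda4Trunc β f G H) (𝓝[>] 0) (𝓝 L) ∧
          ENNReal.ofReal C * eLpNorm (⇑f) p₁ volume * eLpNorm (⇑G) p₂ volume *
            eLpNorm (⇑H) p₃ volume < ENNReal.ofReal ‖L‖ := by
  intro C hC
  have hβ : 0 < |β| := abs_pos.mpr hβ0
  have hm : 0 < min 1 |β| := lt_min one_pos hβ
  set m := min 1 |β| with hm_def
  set a1 := (1/p₁).toReal with ha1_def
  set a2 := (1/p₂).toReal with ha2_def
  set a3 := (1/p₃).toReal with ha3_def
  have hp₁0 : p₁ ≠ 0 := (zero_lt_one.trans_le hp₁).ne'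
  have hp₂0 : p₂ ≠ 0 := (zero_lt_one.trans_le hp₂).ne'
  have hp₃0 : p₃ ≠ 0 := (zero_lt_one.trans_le hp₃).ne'
  have hi1top : 1/p₁ ≠ ⊤ := by rw [one_div, Ne, ENNReal.inv_eq_top]; exact hp₁0
  have hi2top : 1/p₂ ≠ ⊤ := by rw [one_div, Ne, ENNReal.inv_eq_top]; exact hp₂0
  have hi3top : 1/p₃ ≠ ⊤ := by rw [one_div, Ne, ENNReal.inv_eq_top]; exact hp₃0
  have ha1nn : 0 ≤ a1 := ENNReal.toReal_nonneg
  have ha2nn : 0 ≤ a2 := ENNReal.toReal_nonneg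
  have ha3nn : 0 ≤ a3 := ENNReal.toReal_nonneg
  by_cases hsumR : a2 + a3 = 1
  · by_cases ha1z : a1 = 0
    · -- endpoint cases
      have hp1top : p₁ = ⊤ := by
        rcases (ENNReal.toReal_eq_zero_iff _).mp ha1z with h | h
        · rwa [one_div, ENNReal.inv_eq_zero] at h
        · exact absurd h hi1top
      have hsum : 1/p₂ + 1/p₃ = 1 := by
        apply (ENNReal.toReal_eq_one_iff _).mp
        rw [ENNReal.toReal_add hi2top hi3top]
        exact hsumR
      have hnotint : ¬(1 < p₂ ∧ p₂ < ⊤ ∧ 1 < p₃ ∧ p₃ < ⊤) := fun h =>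
        hrange ⟨hp1top, hsum, h.1, h.2.1, h.2.2.1, h.2.2.2⟩
      set R : ℝ := max 10 (3*Real.exp (4*C+1)) with hR_def
      have hR : (10:ℝ) ≤ R := le_max_left _ _
      have hlg : 4*C+1 ≤ Real.log (R/3) := by
        rw [Real.le_log_iff_exp_le (by linarith : (0:ℝ) < R/3)]
        have : 3*Real.exp (4*C+1) ≤ R := le_max_right _ _
        linarith
      have hCm : C * (2*m) < m / 2 * Real.log (R/3) := by
        have h2 : m/2 * (4*C+1) ≤ m/2 * Real.log (R/3) :=
          mul_le_mul_of_nonneg_left hlg (by positivity)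
        nlinarith
      rcases eq_or_lt_of_le hp₂ with hp2one | hp2gt
      · -- p₂ = 1, p₃ = ⊤ : construction A
        have ha2v : a2 = 1 := by rw [ha2_def, ← hp2one]; simp
        have ha3v : a3 = 0 := by linarith
        obtain ⟨F, G, H, Lr, htend, hlow, hn1, hn2, hn3⟩ :=
          constrA β hβ0 1 1 R one_pos one_pos hR p₁ p₂ p₃
        refine ⟨F, G, H, _, htend,
          finishAll C hC p₁ p₂ p₃ F G H Lr _ _ _ _ (by positivity) (by positivity)
            (by positivity) hn1 hn2 hn3 hlow ?_⟩
        have := algWin C (16*R) (2*m) (24*R*|β|) (m/2 * Real.log (R/3)) 1 1 a1 a2 a3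
          one_pos one_pos (by positivity) (by positivity) (by positivity) ?_
        · exact this
        · rw [ha1z, ha2v, ha3v]
          norm_num
          simpa using hCm
      · rcases eq_or_ne p₂ ⊤ with hp2top | hp2netop
        · -- p₂ = ⊤, p₃ = 1 : construction B
          have ha2v : a2 = 0 := by rw [ha2_def, hp2top]; simp
          have ha3v : a3 = 1 := by linarith
          obtain ⟨F, G, H, Lr, htend, hlow, hn1, hn2, hn3⟩ :=
            constrB β hβ0 1 1 R one_pos one_pos hR p₁ p₂ p₃
          refine ⟨F, G, H, _, htend,
            finishAll C hC p₁ p₂ p₃ F G H Lr _ _ _ _ (by positivity) (by positivity)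
              (by positivity) hn1 hn2 hn3 hlow ?_⟩
          have h1β : (0:ℝ) < 1 + |1-β| := by positivity
          have := algWin C (8*(1+|1-β|)*R) (24*R*|β|) (2*m) (m/2 * Real.log (R/3)) 1 1 a1 a2 a3
            one_pos one_pos (by positivity) (by positivity) (by positivity) ?_
          · exact this
          · rw [ha1z, ha2v, ha3v]
            norm_num
            simpa using hCm
        · -- 1 < p₂ < ⊤ : contradiction
          exfalso
          rcases eq_or_lt_of_le hp₃ with hp3one | hp3gt
          · -- p₃ = 1 : a3 = 1, a2 = 0, so p₂ = ⊤, contradiction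
            have ha3v : a3 = 1 := by rw [ha3_def, ← hp3one]; simp
            have ha2v : a2 = 0 := by linarith
            have : p₂ = ⊤ := by
              rcases (ENNReal.toReal_eq_zero_iff _).mp ha2v with h | h
              · rwa [one_div, ENNReal.inv_eq_zero] at h
              · exact absurd h hi2top
            exact hp2netop this
          · rcases eq_or_ne p₃ ⊤ with hp3top | hp3netop
            · -- p₃ = ⊤ : a3 = 0, a2 = 1, so p₂ = 1, contradiction
              have ha3v : a3 = 0 := by rw [ha3_def, hp3top]; simp
              have ha2v : a2 = 1 := by linarith
              have hp2v : p₂ = 1 := by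
                have h1 : 1/p₂ = 1 := (ENNReal.toReal_eq_one_iff _).mp ha2v
                rwa [one_div, ENNReal.inv_eq_one] at h1
              rw [hp2v] at hp2gt
              exact lt_irrefl _ hp2gt
            · exact hnotint ⟨hp2gt, lt_top_iff_ne_top.mpr hp2netop, hp3gt,
                lt_top_iff_ne_top.mpr hp3netop⟩
    · -- a2 + a3 = 1 but a1 ≠ 0 : scale r
      have hδ : (-a1 : ℝ) ≠ 0 := by simpa using ha1z
      have hlogpos : (0:ℝ) < m/2 * Real.log ((10:ℝ)/3) :=
        mul_pos (by positivity) (Real.log_pos (by norm_num))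
      obtain ⟨r₀, hr₀, hwinS⟩ := winS (C * (16*(10:ℝ))^a1 * (2*m)^a2 * (24*(10:ℝ)*|β|)^a3)
        (m/2 * Real.log ((10:ℝ)/3)) (-a1) (by positivity) hlogpos hδ
      obtain ⟨F, G, H, Lr, htend, hlow, hn1, hn2, hn3⟩ :=
        constrA β hβ0 r₀ 1 10 hr₀ one_pos (le_refl 10) p₁ p₂ p₃
      refine ⟨F, G, H, _, htend,
        finishAll C hC p₁ p₂ p₃ F G H Lr _ _ _ _ (by positivity) (by positivity)
          (by positivity) hn1 hn2 hn3 hlow ?_⟩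
      have := algWin C (16*10) (2*m) (24*10*|β|) (m/2 * Real.log ((10:ℝ)/3)) r₀ 1 a1 a2 a3
        hr₀ one_pos (by positivity) (by positivity) (by positivity) ?_
      · exact this
      · rw [show (1:ℝ) - a1 - a2 - a3 = -a1 by linarith, Real.one_rpow, mul_one]
        exact hwinS
  · -- a2 + a3 ≠ 1 : scale s
    have hδ : (1 - a2 - a3 : ℝ) ≠ 0 := by
      intro h
      exact hsumR (by linarith)
    have hlogpos : (0:ℝ) < m/2 * Real.log ((10:ℝ)/3) :=
      mul_pos (by positivity) (Real.log_pos (by norm_num))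
    obtain ⟨s₀, hs₀, hwinS⟩ := winS (C * (16*(10:ℝ))^a1 * (2*m)^a2 * (24*(10:ℝ)*|β|)^a3)
      (m/2 * Real.log ((10:ℝ)/3)) (1 - a2 - a3) (by positivity) hlogpos hδ
    obtain ⟨F, G, H, Lr, htend, hlow, hn1, hn2, hn3⟩ :=
      constrA β hβ0 1 s₀ 10 one_pos hs₀ (le_refl 10) p₁ p₂ p₃
    refine ⟨F, G, H, _, htend,
      finishAll C hC p₁ p₂ p₃ F G H Lr _ _ _ _ (by positivity) (by positivity)
        (by positivity) hn1 hn2 hn3 hlow ?_⟩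
    have := algWin C (16*10) (2*m) (24*10*|β|) (m/2 * Real.log ((10:ℝ)/3)) 1 s₀ a1 a2 a3
      one_pos hs₀ (by positivity) (by positivity) (by positivity) ?_
    · exact this
    · rw [Real.one_rpow, one_mul]
      exact hwinS
end

section
/- For any exponents (p₁, p₂, p₃) ∈ [1,∞]³, there is no constant C > 0 such that |Λ_{(3)}(f,G,H)| ≤ C · ‖f‖_{L^{p₁}(ℝ)} · ‖G‖_{L^{p₂}(ℝ²)} · ‖H‖_{L^{p₃}(ℝ²)} holds for all Schwartz functions f : ℝ → ℂ and G, H : ℝ² → ℂ; that is, for every C > 0 there exist Schwartz f, G, H with |Λ_{(3)}(f,G,H)| > C · ‖f‖_{L^{p₁}(ℝ)} · ‖G‖_{L^{p₂}(ℝ²)} · ‖H‖_{L^{p₃}(ℝ²)}. -/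
open MeasureTheory Filter Topology ENNReal

/-- Truncation of the singular Brascamp–Lieb form `Λ_{(3)}`:
`∫_{ℝ²} ∫_{|t|>ε} f(x+t) G(x,y) H(x,y+t) (1/t) dt dx dy`. -/
noncomputable def Lambda3Trunc (f : SchwartzMap ℝ ℂ) (G H : SchwartzMap (ℝ × ℝ) ℂ)
    (ε : ℝ) : ℂ :=
  ∫ p : ℝ × ℝ, ∫ t in {t : ℝ | ε < |t|},
    f (p.1 + t) * G p * H (p.1, p.2 + t) / (t : ℂ)

noncomputable def SchwartzMap.ofCompactSupport {E F : Type*} [NormedAddCommGroup E]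
    [NormedSpace ℝ E] [NormedAddCommGroup F] [NormedSpace ℝ F] {f : E → F}
    (h1 : ContDiff ℝ ((⊤ : ℕ∞) : WithTop ℕ∞) f) (h2 : HasCompactSupport f) :
    SchwartzMap E F where
  toFun := f
  smooth' := h1
  decay' := by
    intro k n
    obtain ⟨C, hC⟩ := Continuous.bounded_above_of_compact_support
      (f := fun x => ‖x‖ ^ k * ‖iteratedFDeriv ℝ n f x‖)
      (((continuous_norm.pow k).mul (h1.continuous_iteratedFDeriv (by exact_mod_cast le_top)).norm))
      (((h2.iteratedFDeriv n).norm).mul_left)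
    exact ⟨C, fun x => (le_abs_self _).trans (hC x)⟩

@[simp] lemma SchwartzMap.ofCompactSupport_apply {E F : Type*} [NormedAddCommGroup E]
    [NormedSpace ℝ E] [NormedAddCommGroup F] [NormedSpace ℝ F] {f : E → F}
    (h1 : ContDiff ℝ ((⊤ : ℕ∞) : WithTop ℕ∞) f) (h2 : HasCompactSupport f) (x : E) :
    SchwartzMap.ofCompactSupport h1 h2 x = f x := rfl


section Bumps
variable (ρ : ℝ) (h1 : 0 < ρ) (h2 : ρ < 1/16)

/-- outer bump: 1 on [ρ, 1/4], supported in (ρ/2, 1/4 + ρ/2) -/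
noncomputable def bF : ContDiffBump ((1/8 + ρ/2 : ℝ)) :=
  ⟨1/8 - ρ/2, 1/8, by linarith, by linarith⟩

noncomputable def bU : ContDiffBump ((0:ℝ)) := ⟨ρ/8, ρ/4, by linarith, by linarith⟩

noncomputable def bV : ContDiffBump ((0:ℝ)) :=
  ⟨1/(2*ρ), 1/ρ, by positivity, by rw [div_lt_div_iff₀ (by linarith) h1]; nlinarith⟩

variable {ρ}

lemma bF_zero {z : ℝ} (hz : z ≤ ρ/2) : bF ρ h1 h2 z = 0 := by
  apply ContDiffBump.zero_of_le_dist
  rw [Real.dist_eq, bF]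
  rw [abs_sub_comm, abs_of_nonneg (by linarith)]
  linarith

lemma bF_one {z : ℝ} (hz1 : ρ ≤ z) (hz2 : z ≤ 1/4) : bF ρ h1 h2 z = 1 := by
  apply ContDiffBump.one_of_mem_closedBall
  rw [Metric.mem_closedBall, Real.dist_eq, bF, abs_le]
  constructor <;> simp <;> linarith

lemma bF_supp {z : ℝ} (hz : bF ρ h1 h2 z ≠ 0) : ρ/2 < z ∧ z < 1/2 := by
  have := (bF ρ h1 h2).support_eq ▸ Function.mem_support.2 hz
  rw [Metric.mem_ball, Real.dist_eq, abs_lt] at this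
  unfold bF at this
  simp only at this
  obtain ⟨a, b⟩ := this
  constructor <;> linarith

lemma bU_one {x : ℝ} (hx : |x| ≤ ρ/8) : bU ρ h1 x = 1 := by
  apply ContDiffBump.one_of_mem_closedBall
  rw [Metric.mem_closedBall, Real.dist_eq, sub_zero]; exact hx

lemma bU_supp {x : ℝ} (hx : bU ρ h1 x ≠ 0) : |x| < ρ/4 := by
  have := (bU ρ h1).support_eq ▸ Function.mem_support.2 hx
  rwa [Metric.mem_ball, Real.dist_eq, sub_zero] at this

lemma bV_one {y : ℝ} (hy : |y| ≤ 1/(2*ρ)) : bV ρ h1 y = 1 := by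
  apply ContDiffBump.one_of_mem_closedBall
  rw [Metric.mem_closedBall, Real.dist_eq, sub_zero]; exact hy

lemma bV_supp {y : ℝ} (hy : bV ρ h1 y ≠ 0) : |y| < 1/ρ := by
  have := (bV ρ h1).support_eq ▸ Function.mem_support.2 hy
  rwa [Metric.mem_ball, Real.dist_eq, sub_zero] at this

/-- the odd-ish smoothed sign function -/
noncomputable def fR : ℝ → ℝ := fun z => bF ρ h1 h2 z - bF ρ h1 h2 (-z)

lemma fR_zero {z : ℝ} (hz : |z| ≤ ρ/2) : fR h1 h2 z = 0 := by
  rw [abs_le] at hz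
  rw [fR, bF_zero h1 h2 hz.2, bF_zero h1 h2 (by linarith [hz.1])]
  ring

lemma fR_one {z : ℝ} (hz1 : ρ ≤ z) (hz2 : z ≤ 1/4) : fR h1 h2 z = 1 := by
  rw [fR, bF_one h1 h2 hz1 hz2, bF_zero h1 h2 (by linarith)]
  ring

lemma fR_nonneg {z : ℝ} (hz : -(ρ/2) ≤ z) : 0 ≤ fR h1 h2 z := by
  rw [fR, bF_zero h1 h2 (z := -z) (by linarith)]
  simpa using (bF ρ h1 h2).nonneg

lemma fR_nonpos {z : ℝ} (hz : z ≤ ρ/2) : fR h1 h2 z ≤ 0 := by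
  rw [fR, bF_zero h1 h2 hz]
  simpa using (bF ρ h1 h2).nonneg

lemma abs_fR_le_one (z : ℝ) : |fR h1 h2 z| ≤ 1 := by
  rcases le_total z 0 with h | h
  · rw [fR, bF_zero h1 h2 (by linarith), abs_le]
    constructor <;> simp [(bF ρ h1 h2).nonneg, (bF ρ h1 h2).le_one] <;>
      linarith [(bF ρ h1 h2).nonneg (x := -z), (bF ρ h1 h2).le_one (x := -z)]
  · rw [fR, bF_zero h1 h2 (z := -z) (by linarith), abs_le]
    constructor <;> simp <;>
      linarith [(bF ρ h1 h2).nonneg (x := z), (bF ρ h1 h2).le_one (x := z)]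

lemma fR_supp {z : ℝ} (hz : fR h1 h2 z ≠ 0) : ρ/2 < |z| ∧ |z| < 1/2 := by
  rw [fR] at hz
  rcases eq_or_ne (bF ρ h1 h2 z) 0 with h | h
  · rw [h] at hz
    have h' : bF ρ h1 h2 (-z) ≠ 0 := by intro hh; simp [hh] at hz
    obtain ⟨a, b⟩ := bF_supp h1 h2 h'
    rw [abs_of_nonpos (by linarith)]
    constructor <;> linarith
  · obtain ⟨a, b⟩ := bF_supp h1 h2 h
    rw [abs_of_nonneg (by linarith)]
    constructor <;> linarith

lemma fR_smooth : ContDiff ℝ ((⊤ : ℕ∞) : WithTop ℕ∞) (fR h1 h2) :=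
  (bF ρ h1 h2).contDiff.sub ((bF ρ h1 h2).contDiff.comp contDiff_neg)

lemma fR_hcs : HasCompactSupport (fR h1 h2) := by
  apply HasCompactSupport.of_support_subset_isCompact (isCompact_Icc (a := (-(1:ℝ)/2)) (b := 1/2))
  intro z hz
  obtain ⟨-, b⟩ := fR_supp h1 h2 hz
  rw [abs_lt] at b
  exact ⟨by linarith [b.1], by linarith [b.2]⟩

lemma fR_cont : Continuous (fR h1 h2) := (fR_smooth h1 h2).continuous

/-- the 2-d tensor bump -/
noncomputable def GR : ℝ × ℝ → ℝ := fun p => bU ρ h1 p.1 * bV ρ h1 p.2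

lemma GR_nonneg (p : ℝ × ℝ) : 0 ≤ GR h1 p :=
  mul_nonneg ((bU ρ h1).nonneg) ((bV ρ h1).nonneg)

lemma GR_le_one (p : ℝ × ℝ) : GR h1 p ≤ 1 :=
  mul_le_one₀ ((bU ρ h1).le_one) ((bV ρ h1).nonneg) ((bV ρ h1).le_one)

lemma GR_one {p : ℝ × ℝ} (hx : |p.1| ≤ ρ/8) (hy : |p.2| ≤ 1/(2*ρ)) : GR h1 p = 1 := by
  rw [GR, bU_one h1 hx, bV_one h1 hy]; ring

lemma GR_supp {p : ℝ × ℝ} (hp : GR h1 p ≠ 0) : |p.1| < ρ/4 ∧ |p.2| < 1/ρ := by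
  rw [GR, mul_ne_zero_iff] at hp
  exact ⟨bU_supp h1 hp.1, bV_supp h1 hp.2⟩

lemma GR_smooth : ContDiff ℝ ((⊤ : ℕ∞) : WithTop ℕ∞) (GR h1) :=
  ((bU ρ h1).contDiff.comp contDiff_fst).mul ((bV ρ h1).contDiff.comp contDiff_snd)

lemma GR_hcs : HasCompactSupport (GR h1) := by
  apply HasCompactSupport.of_support_subset_isCompact
    ((isCompact_Icc (a := -(ρ/4)) (b := ρ/4)).prod (isCompact_Icc (a := -(1/ρ)) (b := 1/ρ)))
  intro p hp
  obtain ⟨a, b⟩ := GR_supp h1 hp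
  rw [abs_lt] at a b
  exact ⟨⟨a.1.le, a.2.le⟩, ⟨b.1.le, b.2.le⟩⟩

lemma GR_cont : Continuous (GR h1) := (GR_smooth h1).continuous

/-- the Schwartz functions -/
noncomputable def fS : SchwartzMap ℝ ℂ :=
  SchwartzMap.ofCompactSupport
    (Complex.ofRealCLM.contDiff.comp (fR_smooth h1 h2))
    ((fR_hcs h1 h2).comp_left (g := (Complex.ofReal : ℝ → ℂ)) Complex.ofReal_zero)

noncomputable def GS : SchwartzMap (ℝ × ℝ) ℂ :=
  SchwartzMap.ofCompactSupport
    (Complex.ofRealCLM.contDiff.comp (GR_smooth h1))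
    ((GR_hcs h1).comp_left (g := (Complex.ofReal : ℝ → ℂ)) Complex.ofReal_zero)

lemma fS_apply (z : ℝ) : fS h1 h2 z = (fR h1 h2 z : ℂ) := rfl
lemma GS_apply (p : ℝ × ℝ) : GS h1 p = (GR h1 p : ℂ) := rfl



/-- the real integrand in `t`, for fixed `p` -/
noncomputable def FF (p : ℝ × ℝ) (t : ℝ) : ℝ :=
  fR h1 h2 (p.1 + t) * GR h1 p * GR h1 (p.1, p.2 + t) / t

lemma FF_small {p : ℝ × ℝ} {t : ℝ} (ht : |t| ≤ ρ/4) : FF h1 h2 p t = 0 := by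
  rcases eq_or_ne (GR h1 p) 0 with h | h
  · rw [FF, h]; ring
  · have h1' := (GR_supp h1 h).1
    have : fR h1 h2 (p.1 + t) = 0 := by
      apply fR_zero h1 h2
      calc |p.1 + t| ≤ |p.1| + |t| := abs_add_le _ _
        _ ≤ ρ/4 + ρ/4 := by linarith [h1'.le]
        _ = ρ/2 := by ring
    rw [FF, this]; ring

lemma FF_nonneg (p : ℝ × ℝ) (t : ℝ) : 0 ≤ FF h1 h2 p t := by
  rcases eq_or_ne (GR h1 p) 0 with h | h
  · rw [FF, h]; simp
  · have hx := (GR_supp h1 h).1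
    rw [abs_lt] at hx
    rcases lt_trichotomy t 0 with ht | ht | ht
    · rw [FF, div_nonneg_iff]
      right
      refine ⟨?_, ht.le⟩
      apply mul_nonpos_of_nonpos_of_nonneg _ (GR_nonneg h1 _)
      apply mul_nonpos_of_nonpos_of_nonneg _ (GR_nonneg h1 _)
      exact fR_nonpos h1 h2 (by linarith)
    · rw [FF, ht]; simp
    · rw [FF]
      apply div_nonneg _ ht.le
      apply mul_nonneg (mul_nonneg _ (GR_nonneg h1 _)) (GR_nonneg h1 _)
      exact fR_nonneg h1 h2 (by linarith)

lemma FF_abs_le (p : ℝ × ℝ) (t : ℝ) :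
    |FF h1 h2 p t| ≤ 4/ρ * (|fR h1 h2 (p.1 + t)| * GR h1 p) := by
  rcases le_or_gt |t| (ρ/4) with ht | ht
  · rw [FF_small h1 h2 ht]
    simp only [abs_zero]
    have := abs_nonneg (fR h1 h2 (p.1 + t))
    have := GR_nonneg h1 p
    positivity
  · rw [FF, abs_div, abs_mul, abs_mul, abs_of_nonneg (GR_nonneg h1 p),
      abs_of_nonneg (GR_nonneg h1 _)]
    rw [div_le_iff₀ (by linarith : (0:ℝ) < |t|)]
    have hb : GR h1 (p.1, p.2 + t) ≤ 1 := GR_le_one h1 _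
    have h4 : 4/ρ * (|fR h1 h2 (p.1 + t)| * GR h1 p) * |t| =
        (|fR h1 h2 (p.1 + t)| * GR h1 p) * (4/ρ * |t|) := by ring
    rw [h4]
    have h5 : (1:ℝ) ≤ 4/ρ * |t| := by
      rw [div_mul_eq_mul_div, le_div_iff₀ h1]
      linarith
    calc |fR h1 h2 (p.1 + t)| * GR h1 p * GR h1 (p.1, p.2 + t)
        ≤ |fR h1 h2 (p.1 + t)| * GR h1 p * 1 := by
          apply mul_le_mul_of_nonneg_left hb
          exact mul_nonneg (abs_nonneg _) (GR_nonneg h1 p)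
      _ ≤ |fR h1 h2 (p.1 + t)| * GR h1 p * (4/ρ * |t|) := by
          apply mul_le_mul_of_nonneg_left h5
          exact mul_nonneg (abs_nonneg _) (GR_nonneg h1 p)

lemma FF_meas2 : Measurable (Function.uncurry (FF h1 h2)) := by
  unfold Function.uncurry FF
  simp only [div_eq_mul_inv]
  apply Measurable.mul
  · apply Continuous.measurable
    apply Continuous.mul
    apply Continuous.mul
    · exact (fR_cont h1 h2).comp ((continuous_fst.comp continuous_fst).add continuous_snd)
    · exact (GR_cont h1).comp continuous_fst
    · exact (GR_cont h1).comp
        (((continuous_fst.comp continuous_fst)).prodMk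
          ((continuous_snd.comp continuous_fst).add continuous_snd))
  · exact measurable_snd.inv

lemma int_translate (a : ℝ) : Integrable (fun t => fR h1 h2 (a + t)) volume := by
  apply Continuous.integrable_of_hasCompactSupport
  · exact (fR_cont h1 h2).comp (continuous_const.add continuous_id)
  · exact (fR_hcs h1 h2).comp_homeomorph (Homeomorph.addLeft a)

lemma intFF (p : ℝ × ℝ) : Integrable (FF h1 h2 p) volume := by
  apply Integrable.mono' (g := fun t => 4/ρ * (|fR h1 h2 (p.1 + t)| * GR h1 p))
  · exact (((int_translate h1 h2 p.1).abs.mul_const _).const_mul _)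
  · exact (FF_meas2 h1 h2).comp (measurable_const.prodMk measurable_id)
      |>.aestronglyMeasurable
  · exact Filter.Eventually.of_forall fun t => by
      rw [Real.norm_eq_abs]; exact FF_abs_le h1 h2 p t

/-- inner integral -/
noncomputable def gg (p : ℝ × ℝ) : ℝ := ∫ t, FF h1 h2 p t

lemma gg_nonneg (p : ℝ × ℝ) : 0 ≤ gg h1 h2 p :=
  integral_nonneg (FF_nonneg h1 h2 p)

lemma int_gg : Integrable (gg h1 h2) volume := by
  apply Integrable.mono' (g := fun p => (4/ρ * ∫ z, |fR h1 h2 z|) * GR h1 p)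
  · exact ((GR_cont h1).integrable_of_hasCompactSupport (GR_hcs h1)).const_mul _
  · exact ((FF_meas2 h1 h2).stronglyMeasurable.integral_prod_right').aestronglyMeasurable
  · apply Filter.Eventually.of_forall
    intro p
    calc ‖gg h1 h2 p‖ ≤ ∫ t, ‖FF h1 h2 p t‖ := norm_integral_le_integral_norm _
      _ ≤ ∫ t, 4/ρ * (|fR h1 h2 (p.1 + t)| * GR h1 p) := by
          apply integral_mono_of_nonneg
          · exact Filter.Eventually.of_forall fun t => norm_nonneg _
          · exact (((int_translate h1 h2 p.1).abs.mul_const _).const_mul _)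
          · exact Filter.Eventually.of_forall fun t => by
              simp only [Real.norm_eq_abs]; exact FF_abs_le h1 h2 p t
      _ = (4/ρ * ∫ z, |fR h1 h2 z|) * GR h1 p := by
          rw [MeasureTheory.integral_const_mul]
          rw [MeasureTheory.integral_mul_const]
          rw [show (∫ t, (fun z => |fR h1 h2 z|) (p.1 + t)) = ∫ z, |fR h1 h2 z| from
            integral_add_left_eq_self (μ := volume) (fun z => |fR h1 h2 z|) p.1]
          ring

lemma low_bound : (1/8) * Real.log (1/(16*ρ)) ≤ ∫ p, gg h1 h2 p := by
  have hρ4 : (0:ℝ) < 1/ρ := by positivity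
  have hρ5 : ρ * (1/ρ) = 1 := by field_simp
  set c := Real.log (1/(16*ρ)) with hc
  have hcpos : 0 ≤ c := by
    apply Real.log_nonneg
    rw [le_div_iff₀ (by linarith)]
    linarith
  set box : Set (ℝ×ℝ) := (Set.Icc (-(ρ/8)) (ρ/8)) ×ˢ (Set.Icc (-(1/(2*ρ)-1)) (1/(2*ρ)-1))
    with hbox
  have hboxmeas : MeasurableSet box := measurableSet_Icc.prod measurableSet_Icc
  have key : ∀ p ∈ box, c ≤ gg h1 h2 p := by
    intro p hp
    obtain ⟨hpx, hpy⟩ := hp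
    rw [Set.mem_Icc] at hpx hpy
    have h2ρ : 2*ρ ≤ 1/8 := by linarith
    have hbig : (8:ℝ) ≤ 1/(2*ρ) := by
      rw [le_div_iff₀ (by linarith)]; linarith
    have h9 : ∫ t in Set.Ioc (2*ρ) (1/8), FF h1 h2 p t
        = ∫ t in Set.Ioc (2*ρ) (1/8), 1/t := by
      apply setIntegral_congr_fun measurableSet_Ioc
      intro t ht
      obtain ⟨ht1, ht2⟩ := ht
      have e1 : fR h1 h2 (p.1 + t) = 1 := by
        apply fR_one h1 h2 <;> linarith [hpx.1, hpx.2]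
      have e2 : GR h1 p = 1 := by
        apply GR_one h1
        · exact abs_le.2 ⟨hpx.1, hpx.2⟩
        · apply abs_le.2; constructor <;> linarith [hpy.1, hpy.2]
      have e3 : GR h1 (p.1, p.2 + t) = 1 := by
        apply GR_one h1
        · exact abs_le.2 ⟨hpx.1, hpx.2⟩
        · apply abs_le.2
          constructor <;> simp only [] <;> linarith [hpy.1, hpy.2]
      rw [FF, e1, e2, e3]
      norm_num
    have h10 : ∫ t in Set.Ioc (2*ρ) (1/8), (1:ℝ)/t = c := by
      rw [← intervalIntegral.integral_of_le h2ρ]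
      rw [integral_one_div (Set.notMem_uIcc_of_lt (by linarith) (by norm_num))]
      rw [hc]
      congr 1
      field_simp
      ring
    calc c = ∫ t in Set.Ioc (2*ρ) (1/8), (1:ℝ)/t := h10.symm
      _ = ∫ t in Set.Ioc (2*ρ) (1/8), FF h1 h2 p t := h9.symm
      _ ≤ gg h1 h2 p :=
          setIntegral_le_integral (intFF h1 h2 p) (Filter.Eventually.of_forall (FF_nonneg h1 h2 p))
  have hind : ∫ p, box.indicator (fun _ => c) p ≤ ∫ p, gg h1 h2 p := by
    apply integral_mono
    · exact (integrable_indicator_iff hboxmeas).2 (integrableOn_const (ne_of_lt (by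
        rw [hbox, Measure.volume_eq_prod, Measure.prod_prod]
        exact ENNReal.mul_lt_top (measure_Icc_lt_top) (measure_Icc_lt_top))))
    · exact int_gg h1 h2
    · intro p
      by_cases hp : p ∈ box
      · rw [Set.indicator_of_mem hp]; exact key p hp
      · rw [Set.indicator_of_notMem hp]; exact gg_nonneg h1 h2 p
  have hval : ∫ p, box.indicator (fun _ => c) p = (1/4 - ρ/2) * c := by
    rw [integral_indicator_const _ hboxmeas]
    rw [hbox, Measure.volume_eq_prod, measureReal_def, Measure.prod_prod, Real.volume_Icc, Real.volume_Icc]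
    have hbig : (8:ℝ) ≤ 1/(2*ρ) := by
      rw [le_div_iff₀ (by linarith)]; linarith
    have hkey : 2*ρ*(1/(2*ρ)) = 1 := by field_simp
    rw [← ENNReal.ofReal_mul (by linarith)]
    rw [ENNReal.toReal_ofReal (by nlinarith)]
    rw [smul_eq_mul]
    congr 1
    linear_combination (1/4) * hkey
  have : (1/8) * c ≤ (1/4 - ρ/2) * c := by
    apply mul_le_mul_of_nonneg_right _ hcpos
    linarith
  linarith [hval ▸ hind]

lemma lambda_eq_s7 {ε : ℝ} (hε1 : 0 < ε) (hε2 : ε < ρ/4) :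
    Lambda3Trunc (fS h1 h2) (GS h1) (GS h1) ε = ((∫ p, gg h1 h2 p : ℝ) : ℂ) := by
  rw [Lambda3Trunc]
  have step1 : ∀ p : ℝ × ℝ,
      (∫ t in {t : ℝ | ε < |t|},
        fS h1 h2 (p.1 + t) * GS h1 p * GS h1 (p.1, p.2 + t) / (t:ℂ))
      = ((gg h1 h2 p : ℝ) : ℂ) := by
    intro p
    have hint : ∀ t : ℝ,
        fS h1 h2 (p.1 + t) * GS h1 p * GS h1 (p.1, p.2 + t) / (t:ℂ)
        = ((FF h1 h2 p t : ℝ) : ℂ) := by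
      intro t
      rw [fS_apply, GS_apply, GS_apply, FF]
      push_cast
      ring
    simp only [hint]
    rw [setIntegral_eq_integral_of_forall_compl_eq_zero]
    · rw [gg]; exact integral_ofReal
    · intro t ht
      simp only [Set.mem_setOf_eq, not_lt] at ht
      rw [FF_small h1 h2 (by linarith)]
      norm_num
  simp only [step1]
  exact integral_ofReal

lemma lambda_tendsto_s7 :
    Tendsto (Lambda3Trunc (fS h1 h2) (GS h1) (GS h1)) (𝓝[>] 0)
      (𝓝 ((∫ p, gg h1 h2 p : ℝ) : ℂ)) := by
  apply Tendsto.congr' _ tendsto_const_nhds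
  apply Filter.eventuallyEq_of_mem (Ioo_mem_nhdsGT_of_mem (show (0:ℝ) ∈ Set.Ico 0 (ρ/4) from ⟨le_refl (0:ℝ), by linarith⟩))
  intro ε hε
  exact (lambda_eq_s7 h1 h2 hε.1 hε.2).symm

lemma eLpNorm_le_one_of {α : Type*} [MeasurableSpace α] {μ : Measure α} {g : α → ℂ}
    {p : ℝ≥0∞} (hp : 1 ≤ p) {s : Set α} (hs : MeasurableSet s) (hμ : μ s ≤ 1)
    (h0 : ∀ x, x ∉ s → g x = 0) (hb : ∀ x, ‖g x‖ ≤ 1) : eLpNorm g p μ ≤ 1 := by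
  rcases eq_or_ne p ∞ with hptop | hptop
  · rw [hptop, eLpNorm_exponent_top]
    calc eLpNormEssSup g μ ≤ ENNReal.ofReal 1 :=
        eLpNormEssSup_le_of_ae_bound (Filter.Eventually.of_forall hb)
      _ = 1 := by simp
  · have hmono : eLpNorm g p μ ≤ eLpNorm (s.indicator (fun _ => (1:ℝ))) p μ := by
      apply eLpNorm_mono_real
      intro x
      by_cases hx : x ∈ s
      · rw [Set.indicator_of_mem hx]; exact hb x
      · rw [Set.indicator_of_notMem hx, h0 x hx]; simp
    rw [eLpNorm_indicator_const hs (by positivity) hptop] at hmono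
    refine hmono.trans ?_
    simp only [enorm_one, one_mul]
    exact ENNReal.rpow_le_one hμ (by positivity)

lemma fS_norm {q : ℝ≥0∞} (hq : 1 ≤ q) : eLpNorm (⇑(fS h1 h2)) q volume ≤ 1 := by
  apply eLpNorm_le_one_of hq (measurableSet_Icc (a := -(1:ℝ)/2) (b := 1/2))
  · rw [Real.volume_Icc]
    apply ENNReal.ofReal_le_one.2
    linarith
  · intro x hx
    rw [fS_apply]
    rw [Set.mem_Icc, not_and_or] at hx
    have : fR h1 h2 x = 0 := by
      by_contra hne
      obtain ⟨-, hlt⟩ := fR_supp h1 h2 hne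
      rw [abs_lt] at hlt
      rcases hx with hx | hx <;> [exact hx (by linarith); exact hx (by linarith)]
    rw [this]; norm_num
  · intro x
    rw [fS_apply, Complex.norm_real, Real.norm_eq_abs]
    exact abs_fR_le_one h1 h2 x

lemma GS_norm {q : ℝ≥0∞} (hq : 1 ≤ q) : eLpNorm (⇑(GS h1)) q volume ≤ 1 := by
  apply eLpNorm_le_one_of hq
    ((measurableSet_Icc (a := -(ρ/4)) (b := ρ/4)).prod
     (measurableSet_Icc (a := -(1/ρ)) (b := 1/ρ)))
  · rw [Measure.volume_eq_prod, Measure.prod_prod, Real.volume_Icc, Real.volume_Icc,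
      ← ENNReal.ofReal_mul (by linarith)]
    apply ENNReal.ofReal_le_one.2
    have hkey : ρ * (1/ρ) = 1 := by field_simp
    nlinarith
  · intro p hp
    rw [GS_apply]
    have : GR h1 p = 0 := by
      by_contra hne
      obtain ⟨ha, hb⟩ := GR_supp h1 hne
      rw [abs_lt] at ha hb
      exact hp ⟨⟨by linarith [ha.1], by linarith [ha.2]⟩, ⟨by linarith [hb.1], by linarith [hb.2]⟩⟩
    rw [this]; norm_num
  · intro p
    rw [GS_apply, Complex.norm_real, Real.norm_eq_abs, abs_of_nonneg (GR_nonneg h1 p)]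
    exact GR_le_one h1 p

end Bumps

theorem stmt7 (p₁ p₂ p₃ : ℝ≥0∞) (hp₁ : 1 ≤ p₁) (hp₂ : 1 ≤ p₂) (hp₃ : 1 ≤ p₃) :
    ∀ C : ℝ, 0 < C →
      ∃ (f : SchwartzMap ℝ ℂ) (G H : SchwartzMap (ℝ × ℝ) ℂ) (L : ℂ),
        Tendsto (Lambda3Trunc f G H) (𝓝[>] 0) (𝓝 L) ∧
          ENNReal.ofReal C * eLpNorm (⇑f) p₁ volume * eLpNorm (⇑G) p₂ volume *
            eLpNorm (⇑H) p₃ volume < ENNReal.ofReal ‖L‖ := by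
  intro C hC
  set ρ : ℝ := Real.exp (-(8*C+1))/16 with hρ
  have h1 : 0 < ρ := by positivity
  have h2 : ρ < 1/16 := by
    rw [hρ]
    have : Real.exp (-(8*C+1)) < 1 := by
      rw [Real.exp_lt_one_iff]; linarith
    linarith
  set II := ∫ p, gg h1 h2 p with hII_def
  have hII : (1/8) * Real.log (1/(16*ρ)) ≤ II := low_bound h1 h2
  have hlog : Real.log (1/(16*ρ)) = 8*C+1 := by
    have he : (1:ℝ)/(16*ρ) = Real.exp (8*C+1) := by
      rw [hρ, Real.exp_neg]
      field_simp
    rw [he, Real.log_exp]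
  have hIC : C + 1/8 ≤ II := by rw [hlog] at hII; linarith
  refine ⟨fS h1 h2, GS h1, GS h1, ((II:ℝ):ℂ), lambda_tendsto_s7 h1 h2, ?_⟩
  have hnorm : ‖((II:ℝ):ℂ)‖ = II := by
    rw [Complex.norm_real, Real.norm_eq_abs, abs_of_nonneg (by linarith)]
  calc ENNReal.ofReal C * eLpNorm (⇑(fS h1 h2)) p₁ volume * eLpNorm (⇑(GS h1)) p₂ volume *
      eLpNorm (⇑(GS h1)) p₃ volume
      ≤ ENNReal.ofReal C * 1 * 1 * 1 :=
        mul_le_mul' (mul_le_mul' (mul_le_mul' le_rfl (fS_norm h1 h2 hp₁)) (GS_norm h1 hp₂))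
          (GS_norm h1 hp₃)
    _ = ENNReal.ofReal C := by simp
    _ < ENNReal.ofReal ‖((II:ℝ):ℂ)‖ := by
        rw [ENNReal.ofReal_lt_ofReal_iff (by rw [hnorm]; linarith)]
        rw [hnorm]; linarith
end

section
/- For any exponents (p₁, p₂, p₃) ∈ [1,∞]³, there is no constant C > 0 such that |Λ_{(4,0)}(f,G,H)| ≤ C · ‖f‖_{L^{p₁}(ℝ)} · ‖G‖_{L^{p₂}(ℝ²)} · ‖H‖_{L^{p₃}(ℝ²)} holds for all Schwartz functions f : ℝ → ℂ and G, H : ℝ² → ℂ; that is, for every C > 0 there exist Schwartz f, G, H with |Λ_{(4,0)}(f,G,H)| > C · ‖f‖_{L^{p₁}(ℝ)} · ‖G‖_{L^{p₂}(ℝ²)} · ‖H‖_{L^{p₃}(ℝ²)}. -/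
set_option maxHeartbeats 1000000

open MeasureTheory Filter Topology ENNReal

/-- Truncation of the singular Brascamp–Lieb form `Λ_{(4,0)}`:
`∫_{ℝ²} ∫_{|t|>ε} f(x+t) G(x,y) H(x,y) (1/t) dt dx dy`. -/
noncomputable def Lambda40Trunc (f : SchwartzMap ℝ ℂ) (G H : SchwartzMap (ℝ × ℝ) ℂ)
    (ε : ℝ) : ℂ :=
  ∫ p : ℝ × ℝ, ∫ t in {t : ℝ | ε < |t|},
    f (p.1 + t) * G p * H p / (t : ℂ)

open Set

noncomputable def toSchwartz {E F : Type*} [NormedAddCommGroup E] [NormedSpace ℝ E]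
    [NormedAddCommGroup F] [NormedSpace ℝ F] (f : E → F)
    (h1 : ContDiff ℝ ((⊤ : ℕ∞) : WithTop ℕ∞) f) (h2 : HasCompactSupport f) : SchwartzMap E F where
  toFun := f
  smooth' := h1
  decay' := by
    intro k n
    have hc : Continuous fun x => ‖x‖ ^ k * ‖iteratedFDeriv ℝ n f x‖ :=
      (continuous_norm.pow k).mul (h1.continuous_iteratedFDeriv (by exact_mod_cast le_top)).norm
    have hs : HasCompactSupport fun x => ‖x‖ ^ k * ‖iteratedFDeriv ℝ n f x‖ :=
      ((h2.iteratedFDeriv n).norm).mul_left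
    obtain ⟨C, hC⟩ := hs.exists_bound_of_continuous hc
    exact ⟨C, fun x => (le_abs_self _).trans ((Real.norm_eq_abs _) ▸ hC x)⟩

@[simp] lemma toSchwartz_apply {E F : Type*} [NormedAddCommGroup E] [NormedSpace ℝ E]
    [NormedAddCommGroup F] [NormedSpace ℝ F] (f : E → F)
    (h1 : ContDiff ℝ ((⊤ : ℕ∞) : WithTop ℕ∞) f) (h2 : HasCompactSupport f) (x : E) :
    toSchwartz f h1 h2 x = f x := rfl

lemma master (p₁ p₂ p₃ : ℝ≥0∞) (l m N : ℝ) (hl : 0 < l) (hm : 0 < m) (hN : 11 ≤ N) :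
    ∃ (f : SchwartzMap ℝ ℂ) (G H : SchwartzMap (ℝ × ℝ) ℂ) (L : ℂ),
      Tendsto (Lambda40Trunc f G H) (𝓝[>] 0) (𝓝 L) ∧
      eLpNorm (⇑f) p₁ volume ≤ ENNReal.ofReal (2*N*l) ^ (1/p₁.toReal) ∧
      eLpNorm (⇑G) p₂ volume ≤ ENNReal.ofReal (4*(l*m)) ^ (1/p₂.toReal) ∧
      eLpNorm (⇑H) p₃ volume ≤ ENNReal.ofReal (4*(l*m)) ^ (1/p₃.toReal) ∧
      l * m * Real.log ((N-1)/5) ≤ ‖L‖ := by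
  -- the bump functions
  have h4N : (0:ℝ) < N - 4 := by linarith
  set bf : ContDiffBump ((l*(N+4))/2) :=
    ⟨l*(N-4)/2, l*(N-3)/2, by nlinarith, by nlinarith⟩ with hbf
  set bg : ContDiffBump (0:ℝ) := ⟨l/2, l, by linarith, by linarith⟩ with hbg
  set bφ : ContDiffBump (0:ℝ) := ⟨m/2, m, by linarith, by linarith⟩ with hbφ
  set fr : ℝ → ℝ := ⇑bf with hfr
  set Gr : ℝ × ℝ → ℝ := fun p => bg p.1 * bφ p.2 with hGr
  have hfr1 : ∀ x ∈ Icc (4*l) (N*l), fr x = 1 := by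
    intro x hx
    refine bf.one_of_mem_closedBall ?_
    rw [Real.closedBall_eq_Icc]
    constructor
    · simp only [hbf]; nlinarith [hx.1]
    · simp only [hbf]; nlinarith [hx.2]
  have hfr0 : ∀ x, x ∉ Icc (3*l) (2*N*l) → fr x = 0 := by
    intro x hx
    by_contra h
    apply hx
    have hs := Function.mem_support.2 h
    rw [hfr, bf.support_eq, Real.ball_eq_Ioo] at hs
    simp only [hbf] at hs
    exact ⟨by nlinarith [hs.1], by nlinarith [hs.2]⟩
  have hfr_nn : ∀ x, 0 ≤ fr x := fun x => bf.nonneg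
  have hfr_le : ∀ x, fr x ≤ 1 := fun x => bf.le_one
  have hGr1 : ∀ p : ℝ × ℝ, p ∈ Icc (-(l/2)) (l/2) ×ˢ Icc (-(m/2)) (m/2) → Gr p = 1 := by
    intro p hp
    have h1 : bg p.1 = 1 := by
      refine bg.one_of_mem_closedBall ?_
      rw [Real.closedBall_eq_Icc]
      simp only [hbg, zero_sub, zero_add]
      exact hp.1
    have h2 : bφ p.2 = 1 := by
      refine bφ.one_of_mem_closedBall ?_
      rw [Real.closedBall_eq_Icc]
      simp only [hbφ, zero_sub, zero_add]
      exact hp.2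
    simp [hGr, h1, h2]
  have hGr0 : ∀ p : ℝ × ℝ, p ∉ Icc (-l) l ×ˢ Icc (-m) m → Gr p = 0 := by
    intro p hp
    rw [Set.mem_prod, not_and_or] at hp
    rcases hp with hp | hp
    · have : bg p.1 = 0 := by
        by_contra h
        have hs := Function.mem_support.2 h
        rw [bg.support_eq, Real.ball_eq_Ioo] at hs
        simp only [hbg, zero_sub, zero_add] at hs
        exact hp ⟨hs.1.le, hs.2.le⟩
      simp [hGr, this]
    · have : bφ p.2 = 0 := by
        by_contra h
        have hs := Function.mem_support.2 h
        rw [bφ.support_eq, Real.ball_eq_Ioo] at hs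
        simp only [hbφ, zero_sub, zero_add] at hs
        exact hp ⟨hs.1.le, hs.2.le⟩
      simp [hGr, this]
  have hGr_nn : ∀ p, 0 ≤ Gr p := fun p => mul_nonneg bg.nonneg bφ.nonneg
  have hGr_le : ∀ p, Gr p ≤ 1 := fun p =>
    mul_le_one₀ bg.le_one bφ.nonneg bφ.le_one
  have hfrc : Continuous fr := bf.continuous
  have hGrc : Continuous Gr := (bg.continuous.comp continuous_fst).mul (bφ.continuous.comp continuous_snd)
  -- The Schwartz functions
  have hsf : ContDiff ℝ ((⊤ : ℕ∞) : WithTop ℕ∞) (fun x : ℝ => ((fr x : ℝ) : ℂ)) :=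
    Complex.ofRealCLM.contDiff.comp bf.contDiff
  have hcf : HasCompactSupport (fun x : ℝ => ((fr x : ℝ) : ℂ)) :=
    bf.hasCompactSupport.comp_left Complex.ofReal_zero
  have hsG : ContDiff ℝ ((⊤ : ℕ∞) : WithTop ℕ∞) (fun p : ℝ × ℝ => ((Gr p : ℝ) : ℂ)) :=
    Complex.ofRealCLM.contDiff.comp
      ((bg.contDiff.comp contDiff_fst).mul (bφ.contDiff.comp contDiff_snd))
  have hcG : HasCompactSupport (fun p : ℝ × ℝ => ((Gr p : ℝ) : ℂ)) := by
    apply HasCompactSupport.intro (isCompact_Icc.prod isCompact_Icc : IsCompact (Icc (-l) l ×ˢ Icc (-m) m))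
    intro p hp
    simp [hGr0 p hp]
  set f : SchwartzMap ℝ ℂ := toSchwartz _ hsf hcf with hfdef
  set G : SchwartzMap (ℝ × ℝ) ℂ := toSchwartz _ hsG hcG with hGdef
  have hfap : ∀ x, f x = ((fr x : ℝ) : ℂ) := fun _ => rfl
  have hGap : ∀ p, G p = ((Gr p : ℝ) : ℂ) := fun _ => rfl
  -- norm bounds
  have hnf : eLpNorm (⇑f) p₁ volume ≤ ENNReal.ofReal (2*N*l) ^ (1/p₁.toReal) := by
    have h1 : eLpNorm (⇑f) p₁ volume ≤
        eLpNorm ((Icc (3*l) (2*N*l)).indicator (fun _ => (1:ℂ))) p₁ volume := by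
      apply eLpNorm_mono
      intro x
      by_cases hx : x ∈ Icc (3*l) (2*N*l)
      · rw [Set.indicator_of_mem hx, hfap x, Complex.norm_real, norm_one,
          Real.norm_eq_abs, abs_of_nonneg (hfr_nn x)]
        exact hfr_le x
      · rw [Set.indicator_of_notMem hx, hfap x, hfr0 x hx]
        simp
    refine h1.trans ((eLpNorm_indicator_const_le _ _).trans ?_)
    simp only [nnnorm_one, enorm_one, ENNReal.coe_one, one_mul, Real.volume_Icc]
    refine ENNReal.rpow_le_rpow (ENNReal.ofReal_le_ofReal (by linarith)) (by positivity)
  have hnG : eLpNorm (⇑G) p₂ volume ≤ ENNReal.ofReal (4*(l*m)) ^ (1/p₂.toReal) := by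
    have h1 : eLpNorm (⇑G) p₂ volume ≤
        eLpNorm ((Icc (-l) l ×ˢ Icc (-m) m).indicator (fun _ => (1:ℂ))) p₂ volume := by
      apply eLpNorm_mono
      intro x
      by_cases hx : x ∈ Icc (-l) l ×ˢ Icc (-m) m
      · rw [Set.indicator_of_mem hx, hGap x, Complex.norm_real, norm_one,
          Real.norm_eq_abs, abs_of_nonneg (hGr_nn x)]
        exact hGr_le x
      · rw [Set.indicator_of_notMem hx, hGap x, hGr0 x hx]
        simp
    refine h1.trans ((eLpNorm_indicator_const_le _ _).trans ?_)
    have hvol : volume (Icc (-l) l ×ˢ Icc (-m) m) = ENNReal.ofReal (4*(l*m)) := by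
      rw [Measure.volume_eq_prod ℝ ℝ, Measure.prod_prod, Real.volume_Icc, Real.volume_Icc,
        ← ENNReal.ofReal_mul (by linarith)]
      ring_nf
    simp only [nnnorm_one, enorm_one, ENNReal.coe_one, one_mul, hvol]
    exact le_refl _
  -- the real kernel
  set kr : ℝ × ℝ → ℝ → ℝ := fun p t => fr (p.1 + t) * (Gr p * Gr p) / t with hkr
  have hkr_supp : ∀ p t, kr p t ≠ 0 →
      2*l ≤ t ∧ t ≤ (2*N+1)*l ∧ p ∈ Icc (-l) l ×ˢ Icc (-m) m := by
    intro p t h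
    have h1 : fr (p.1 + t) ≠ 0 := fun h0 => h (by simp [hkr, h0])
    have h2 : Gr p ≠ 0 := fun h0 => h (by simp [hkr, h0])
    have hx : p.1 + t ∈ Icc (3*l) (2*N*l) := by
      by_contra hc; exact h1 (hfr0 _ hc)
    have hp : p ∈ Icc (-l) l ×ˢ Icc (-m) m := by
      by_contra hc; exact h2 (hGr0 _ hc)
    have hp1 := hp.1
    rw [Set.mem_Icc] at hp1
    exact ⟨by linarith [hx.1, hp1.2], by linarith [hx.2, hp1.1], hp⟩
  have hkr_nn : ∀ p t, 0 ≤ kr p t := by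
    intro p t
    by_cases h : kr p t = 0
    · rw [h]
    · have ht := (hkr_supp p t h).1
      exact div_nonneg (mul_nonneg (hfr_nn _) (mul_nonneg (hGr_nn _) (hGr_nn _)))
        (by linarith)
  have hkr_bd : ∀ p t, |kr p t| ≤ (Icc (2*l) ((2*N+1)*l)).indicator (fun _ => (2*l)⁻¹) t := by
    intro p t
    by_cases h : kr p t = 0
    · rw [h, abs_zero]
      exact Set.indicator_nonneg (fun _ _ => by positivity) t
    · obtain ⟨ht1, ht2, -⟩ := hkr_supp p t h
      rw [Set.indicator_of_mem (Set.mem_Icc.2 ⟨ht1, ht2⟩), abs_of_nonneg (hkr_nn p t)]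
      have hnum : fr (p.1 + t) * (Gr p * Gr p) ≤ 1 :=
        mul_le_one₀ (hfr_le _) (mul_nonneg (hGr_nn _) (hGr_nn _))
          (mul_le_one₀ (hGr_le _) (hGr_nn _) (hGr_le _))
      have hnn : 0 ≤ fr (p.1 + t) * (Gr p * Gr p) :=
        mul_nonneg (hfr_nn _) (mul_nonneg (hGr_nn _) (hGr_nn _))
      have ht0 : 0 < t := by linarith
      have h2l : (0:ℝ) < 2*l := by linarith
      rw [hkr]
      rw [div_le_iff₀ ht0]
      have hc : (2*l) * (2*l)⁻¹ = 1 := mul_inv_cancel₀ (ne_of_gt h2l)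
      have hip : 0 < (2*l)⁻¹ := by positivity
      nlinarith
  have hmes : AEStronglyMeasurable (fun q : (ℝ×ℝ)×ℝ => kr q.1 q.2) volume := by
    have c1 : Continuous fun q : (ℝ×ℝ)×ℝ => fr (q.1.1 + q.2) * (Gr q.1 * Gr q.1) :=
      (hfrc.comp ((continuous_fst.fst).add continuous_snd)).mul
        ((hGrc.comp continuous_fst).mul (hGrc.comp continuous_fst))
    exact (c1.measurable.div measurable_snd).aestronglyMeasurable
  have hBmeas : MeasurableSet ((Icc (-l) l ×ˢ Icc (-m) m) ×ˢ Icc (2*l) ((2*N+1)*l)) :=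
    (measurableSet_Icc.prod measurableSet_Icc).prod measurableSet_Icc
  have hInt : Integrable (fun q : (ℝ×ℝ)×ℝ => kr q.1 q.2) volume := by
    refine Integrable.mono'
      (g := ((Icc (-l) l ×ˢ Icc (-m) m) ×ˢ Icc (2*l) ((2*N+1)*l)).indicator (fun _ => (2*l)⁻¹))
      ?_ hmes (ae_of_all _ ?_)
    · rw [integrable_indicator_iff hBmeas]
      exact integrableOn_const (((isCompact_Icc.prod isCompact_Icc).prod
        isCompact_Icc).measure_lt_top).ne
    · intro q
      by_cases h : kr q.1 q.2 = 0
      · rw [Real.norm_eq_abs, h, abs_zero]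
        exact Set.indicator_nonneg (fun _ _ => by positivity) q
      · obtain ⟨ht1, ht2, hp⟩ := hkr_supp q.1 q.2 h
        rw [Real.norm_eq_abs,
          Set.indicator_of_mem (Set.mk_mem_prod hp (Set.mem_Icc.2 ⟨ht1, ht2⟩) : (q.1, q.2) ∈ _)]

        exact (hkr_bd q.1 q.2).trans (le_of_eq (Set.indicator_of_mem (Set.mem_Icc.2 ⟨ht1, ht2⟩) _))
  have hSlice : ∀ p : ℝ × ℝ, Integrable (fun t => kr p t) volume := by
    intro p
    refine Integrable.mono'
      (g := (Icc (2*l) ((2*N+1)*l)).indicator (fun _ => (2*l)⁻¹)) ?_ ?_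
      (ae_of_all _ (fun t => by rw [Real.norm_eq_abs]; exact hkr_bd p t))
    · rw [integrable_indicator_iff measurableSet_Icc]
      exact integrableOn_const (isCompact_Icc.measure_lt_top).ne
    · have c1 : Continuous fun t : ℝ => fr (p.1 + t) * (Gr p * Gr p) :=
        (hfrc.comp (continuous_const.add continuous_id)).mul continuous_const
      exact (c1.measurable.div measurable_id).aestronglyMeasurable
  set U : ℝ × ℝ → ℝ := fun p => ∫ t, kr p t with hU
  have hU_nn : ∀ p, 0 ≤ U p := fun p => integral_nonneg (hkr_nn p)
  have hInt' : Integrable (fun q : (ℝ×ℝ)×ℝ => kr q.1 q.2)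
      ((volume : Measure (ℝ×ℝ)).prod (volume : Measure ℝ)) := by
    rwa [← Measure.volume_eq_prod]
  have hU_int : Integrable U volume := hInt'.integral_prod_left
  have hUlow : ∀ p ∈ Icc (-(l/2)) (l/2) ×ˢ Icc (-(m/2)) (m/2),
      Real.log ((N-1)/5) ≤ U p := by
    intro p hp
    have hp1 := hp.1
    rw [Set.mem_Icc] at hp1
    have h58 : 5*l ≤ (N-1)*l := by nlinarith
    have e1 : ∀ t ∈ Ioc (5*l) ((N-1)*l), kr p t = 1/t := by
      intro t ht
      have hx : p.1 + t ∈ Icc (4*l) (N*l) := by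
        constructor
        · have := ht.1; linarith [hp1.1]
        · have := ht.2; nlinarith [hp1.2]
      rw [hkr]
      simp only
      rw [hfr1 _ hx, hGr1 p hp]
      ring
    have hlog : Real.log ((N-1)/5) = ∫ t in Set.Ioc (5*l) ((N-1)*l), 1/t := by
      rw [← intervalIntegral.integral_of_le h58]
      rw [integral_one_div]
      · rw [mul_div_mul_right _ _ (ne_of_gt hl)]
      · intro hmem
        rw [Set.mem_uIcc] at hmem
        rcases hmem with h | h <;> nlinarith [h.1, h.2]
    rw [hlog]
    have e2 : ∫ t in Set.Ioc (5*l) ((N-1)*l), (1/t : ℝ) = ∫ t in Set.Ioc (5*l) ((N-1)*l), kr p t :=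
      setIntegral_congr_fun measurableSet_Ioc (fun t ht => (e1 t ht).symm)
    rw [e2]
    exact setIntegral_le_integral (hSlice p) (ae_of_all _ (hkr_nn p))
  have hSmeas : MeasurableSet (Icc (-(l/2)) (l/2) ×ˢ Icc (-(m/2)) (m/2)) :=
    measurableSet_Icc.prod measurableSet_Icc
  have hSvol : volume (Icc (-(l/2)) (l/2) ×ˢ Icc (-(m/2)) (m/2)) = ENNReal.ofReal l * ENNReal.ofReal m := by
    rw [Measure.volume_eq_prod ℝ ℝ, Measure.prod_prod, Real.volume_Icc, Real.volume_Icc]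
    rw [show l/2 - -(l/2) = l by ring, show m/2 - -(m/2) = m by ring]
  have hLlow : l * m * Real.log ((N-1)/5) ≤ ∫ p : ℝ × ℝ, U p := by
    have hfin : volume (Icc (-(l/2)) (l/2) ×ˢ Icc (-(m/2)) (m/2)) ≠ ⊤ := by
      rw [hSvol]; exact (ENNReal.mul_lt_top ENNReal.ofReal_lt_top ENNReal.ofReal_lt_top).ne
    have step1 := setIntegral_ge_of_const_le hSmeas hfin hUlow hU_int.integrableOn
    have step2 : ∫ p in Icc (-(l/2)) (l/2) ×ˢ Icc (-(m/2)) (m/2), U p ≤ ∫ p, U p :=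
      setIntegral_le_integral hU_int (ae_of_all _ hU_nn)
    have htr : volume.real (Icc (-(l/2)) (l/2) ×ˢ Icc (-(m/2)) (m/2)) = l * m := by
      rw [measureReal_def, hSvol, ENNReal.toReal_mul, ENNReal.toReal_ofReal hl.le, ENNReal.toReal_ofReal hm.le]
    rw [htr, smul_eq_mul, mul_comm] at step1
    calc l * m * Real.log ((N-1)/5) = Real.log ((N-1)/5) * (l * m) := by ring
    _ ≤ ∫ p in Icc (-(l/2)) (l/2) ×ˢ Icc (-(m/2)) (m/2), U p := step1
    _ ≤ ∫ p, U p := step2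
  -- eventual constancy
  have key : ∀ ε ∈ Set.Ioo (0:ℝ) l, Lambda40Trunc f G G ε = (((∫ p : ℝ × ℝ, U p : ℝ)) : ℂ) := by
    intro ε hε
    have hinner : ∀ p : ℝ × ℝ,
        (∫ t in {t : ℝ | ε < |t|}, f (p.1 + t) * G p * G p / (t:ℂ)) = ((U p : ℝ) : ℂ) := by
      intro p
      have e1 : ∀ t : ℝ, f (p.1 + t) * G p * G p / (t:ℂ) = ((kr p t : ℝ) : ℂ) := by
        intro t
        rw [hfap, hGap, hkr]
        push_cast
        ring
      simp only [e1]
      have h2 : ∫ t in {t : ℝ | ε < |t|}, kr p t = U p := by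
        rw [hU]
        apply setIntegral_eq_integral_of_forall_compl_eq_zero
        intro t ht
        simp only [Set.mem_setOf_eq, not_lt] at ht
        by_contra hne
        have h4 := (hkr_supp p t hne).1
        have h3 : t ≤ |t| := le_abs_self t
        linarith [hε.1, hε.2]
      rw [← h2]
      exact integral_ofReal
    show (∫ p : ℝ × ℝ, ∫ t in {t : ℝ | ε < |t|}, f (p.1 + t) * G p * G p / (t:ℂ)) = _
    simp only [hinner]
    exact integral_ofReal
  set L : ℂ := (((∫ p : ℝ × ℝ, U p : ℝ)) : ℂ) with hLd
  have htend : Tendsto (Lambda40Trunc f G G) (𝓝[>] 0) (𝓝 L) := by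
    have hev : Lambda40Trunc f G G =ᶠ[𝓝[>] (0:ℝ)] fun _ => L := by
      filter_upwards [Ioo_mem_nhdsGT_of_mem (Set.left_mem_Ico.2 hl)] with ε hε
      exact key ε hε
    exact tendsto_const_nhds.congr' hev.symm
  have hnL : l * m * Real.log ((N-1)/5) ≤ ‖L‖ := by
    rw [hLd, Complex.norm_real, Real.norm_eq_abs]
    exact hLlow.trans (le_abs_self _)
  have hnG3 : eLpNorm (⇑G) p₃ volume ≤ ENNReal.ofReal (4*(l*m)) ^ (1/p₃.toReal) := by
    have h1 : eLpNorm (⇑G) p₃ volume ≤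
        eLpNorm ((Icc (-l) l ×ˢ Icc (-m) m).indicator (fun _ => (1:ℂ))) p₃ volume := by
      apply eLpNorm_mono
      intro x
      by_cases hx : x ∈ Icc (-l) l ×ˢ Icc (-m) m
      · rw [Set.indicator_of_mem hx, hGap x, Complex.norm_real, norm_one,
          Real.norm_eq_abs, abs_of_nonneg (hGr_nn x)]
        exact hGr_le x
      · rw [Set.indicator_of_notMem hx, hGap x, hGr0 x hx]
        simp
    refine h1.trans ((eLpNorm_indicator_const_le _ _).trans ?_)
    have hvol : volume (Icc (-l) l ×ˢ Icc (-m) m) = ENNReal.ofReal (4*(l*m)) := by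
      rw [Measure.volume_eq_prod ℝ ℝ, Measure.prod_prod, Real.volume_Icc, Real.volume_Icc,
        ← ENNReal.ofReal_mul (by linarith)]
      ring_nf
    simp only [nnnorm_one, enorm_one, ENNReal.coe_one, one_mul, hvol]
    exact le_refl _
  exact ⟨f, G, G, L, htend, hnf, hnG, hnG3, hnL⟩


lemma pick (C a b c : ℝ) (hC : 0 < C) (ha0 : 0 ≤ a) (ha1 : a ≤ 1)
    (hb0 : 0 ≤ b) (hb1 : b ≤ 1) (hc0 : 0 ≤ c) (hc1 : c ≤ 1) :
    ∃ l m N : ℝ, 0 < l ∧ 0 < m ∧ 11 ≤ N ∧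
      C * (2*N*l)^a * (4*(l*m))^b * (4*(l*m))^c < l * m * Real.log ((N-1)/5) := by
  have hlog2 : (1/2 : ℝ) < Real.log 2 := by
    have := Real.log_two_gt_d9; linarith
  by_cases hβ : b + c = 1
  · by_cases hA : a = 0
    · -- β = 1, a = 0 : take l = m = 1, N large
      refine ⟨1, 1, 5 * Real.exp (4*C+1) + 1, one_pos, one_pos, ?_, ?_⟩
      · have h1 : (4*C+1) + 1 ≤ Real.exp (4*C+1) := Real.add_one_le_exp _
        nlinarith
      · have hexp : (0:ℝ) < Real.exp (4*C+1) := Real.exp_pos _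
        have hN0 : (0:ℝ) < 2 * (5 * Real.exp (4*C+1) + 1) * 1 := by nlinarith
        rw [hA, Real.rpow_zero]
        have h41 : (4*(1*(1:ℝ)))^b * (4*(1*(1:ℝ)))^c = 4 := by
          rw [← Real.rpow_add (by norm_num : (0:ℝ) < 4*(1*(1:ℝ)))]
          rw [hβ, Real.rpow_one]; norm_num
        have hlog : Real.log ((5 * Real.exp (4*C+1) + 1 - 1)/5) = 4*C+1 := by
          rw [show (5 * Real.exp (4*C+1) + 1 - 1)/5 = Real.exp (4*C+1) by ring]
          exact Real.log_exp _
        rw [mul_assoc, h41, hlog]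
        linarith
    · -- β = 1, a ≠ 0 : take m = 1, N = 11, l small
      have ha0' : 0 < a := lt_of_le_of_ne ha0 (Ne.symm hA)
      set w : ℝ := (1 + 176*C)⁻¹ with hw
      have hwpos : 0 < w := by rw [hw]; positivity
      set l : ℝ := w ^ a⁻¹ with hldef
      have hl : 0 < l := Real.rpow_pos_of_pos hwpos _
      refine ⟨l, 1, 11, hl, one_pos, by norm_num, ?_⟩
      have hla : l ^ a = w := by
        rw [hldef, ← Real.rpow_mul hwpos.le, inv_mul_cancel₀ hA, Real.rpow_one]
      have h4l : (4*(l*1))^b * (4*(l*1))^c = 4 * l := by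
        rw [← Real.rpow_add (by positivity), hβ, Real.rpow_one]; ring
      have h22 : (2*11*l)^a = 22^a * l^a := by
        rw [show (2*11*l : ℝ) = 22 * l by ring, Real.mul_rpow (by norm_num) hl.le]
      have h22a : (22:ℝ)^a ≤ 22 := by
        calc (22:ℝ)^a ≤ 22^(1:ℝ) := Real.rpow_le_rpow_of_exponent_le (by norm_num) ha1
        _ = 22 := Real.rpow_one _
      have hwe : w * (1 + 176*C) = 1 := inv_mul_cancel₀ (by positivity)
      have hkey : 88 * C * w < 1/2 := by nlinarith
      calc C * (2*11*l)^a * (4*(l*1))^b * (4*(l*1))^c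
          = C * (22^a * l^a) * ((4*(l*1))^b * (4*(l*1))^c) := by rw [h22]; ring
        _ = C * (22^a * w) * (4*l) := by rw [hla, h4l]
        _ ≤ C * (22 * w) * (4*l) := by
            have : C * (22^a * w) ≤ C * (22 * w) := by
              apply mul_le_mul_of_nonneg_left _ hC.le
              exact mul_le_mul_of_nonneg_right h22a hwpos.le
            apply mul_le_mul_of_nonneg_right this (by linarith)
        _ = (88 * C * w) * l := by ring
        _ < (1/2) * l := by
            apply mul_lt_mul_of_pos_right hkey hl
        _ < l * 1 * Real.log ((11-1)/5) := by
            rw [show ((11:ℝ)-1)/5 = 2 by norm_num]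
            nlinarith
  · -- β ≠ 1 : take l = 1, N = 11, m extreme
    set β : ℝ := b + c with hβdef
    have h1β : (1:ℝ) - β ≠ 0 := by
      intro h; apply hβ; linarith [sub_eq_zero.1 h]
    set m : ℝ := (1 + 704*C) ^ (1-β)⁻¹ with hmdef
    have hm : 0 < m := Real.rpow_pos_of_pos (by linarith) _
    refine ⟨1, m, 11, one_pos, hm, by norm_num, ?_⟩
    have hmβ : m ^ (1-β) = 1 + 704*C := by
      rw [hmdef, ← Real.rpow_mul (by linarith), inv_mul_cancel₀ h1β, Real.rpow_one]
    have hsplit : m = m^β * m^(1-β) := by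
      rw [← Real.rpow_add hm, show β + (1-β) = 1 by ring, Real.rpow_one]
    have hmβpos : 0 < m^β := Real.rpow_pos_of_pos hm _
    have hmain : 704 * C * m^β < m := by
      calc 704 * C * m^β < (1+704*C) * m^β := by nlinarith
      _ = m := by rw [mul_comm, ← hmβ, ← Real.rpow_add hm]; rw [show β + (1-β) = 1 by ring, Real.rpow_one]
    have h4m : (4*(1*m))^b * (4*(1*m))^c = 4^β * m^β := by
      rw [← Real.rpow_add (by positivity), ← Real.mul_rpow (by norm_num) hm.le]
      rw [show 4*(1*m) = 4*m by ring]
    have h4β : (4:ℝ)^β ≤ 16 := by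
      calc (4:ℝ)^β ≤ 4^(2:ℝ) := Real.rpow_le_rpow_of_exponent_le (by norm_num) (by linarith)
      _ = 16 := by
          rw [show (2:ℝ) = ((2:ℕ):ℝ) by norm_num, Real.rpow_natCast]; norm_num
    have h22a : (2*11*(1:ℝ))^a ≤ 22 := by
      calc (2*11*(1:ℝ))^a ≤ (2*11*(1:ℝ))^(1:ℝ) :=
            Real.rpow_le_rpow_of_exponent_le (by norm_num) ha1
      _ = 22 := by rw [Real.rpow_one]; norm_num
    have h22a0 : (0:ℝ) ≤ (2*11*(1:ℝ))^a := Real.rpow_nonneg (by norm_num) _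
    calc C * (2*11*(1:ℝ))^a * (4*(1*m))^b * (4*(1*m))^c
        = C * (2*11*(1:ℝ))^a * (4^β * m^β) := by rw [mul_assoc, h4m]
      _ ≤ C * 22 * (16 * m^β) := by
          apply mul_le_mul (mul_le_mul_of_nonneg_left h22a hC.le)
            (mul_le_mul_of_nonneg_right h4β hmβpos.le) (by positivity) (by positivity)
      _ = (704 * C * m^β) * (1/2) := by ring
      _ < m * (1/2) := by
          apply mul_lt_mul_of_pos_right hmain (by norm_num)
      _ < 1 * m * Real.log ((11-1)/5) := by
          rw [show ((11:ℝ)-1)/5 = 2 by norm_num]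
          nlinarith

theorem stmt8 (p₁ p₂ p₃ : ℝ≥0∞) (hp₁ : 1 ≤ p₁) (hp₂ : 1 ≤ p₂) (hp₃ : 1 ≤ p₃) :
    ∀ C : ℝ, 0 < C →
      ∃ (f : SchwartzMap ℝ ℂ) (G H : SchwartzMap (ℝ × ℝ) ℂ) (L : ℂ),
        Tendsto (Lambda40Trunc f G H) (𝓝[>] 0) (𝓝 L) ∧
          ENNReal.ofReal C * eLpNorm (⇑f) p₁ volume * eLpNorm (⇑G) p₂ volume *
            eLpNorm (⇑H) p₃ volume < ENNReal.ofReal ‖L‖ := by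
  intro C hC
  have expbd : ∀ p : ℝ≥0∞, 1 ≤ p → 0 ≤ 1/p.toReal ∧ 1/p.toReal ≤ 1 := by
    intro p hp
    refine ⟨by positivity, ?_⟩
    rcases eq_or_ne p ⊤ with h | h
    · simp [h]
    · have h1 : (1:ℝ) ≤ p.toReal := by
        rw [← ENNReal.toReal_one]
        exact ENNReal.toReal_mono h hp
      rw [div_le_one (by linarith)]
      exact h1
  obtain ⟨ha0, ha1⟩ := expbd p₁ hp₁
  obtain ⟨hb0, hb1⟩ := expbd p₂ hp₂
  obtain ⟨hc0, hc1⟩ := expbd p₃ hp₃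
  obtain ⟨l, m, N, hl, hm, hN, hlt⟩ := pick C _ _ _ hC ha0 ha1 hb0 hb1 hc0 hc1
  obtain ⟨f, G, H, L, htend, h1, h2, h3, hLbd⟩ := master p₁ p₂ p₃ l m N hl hm hN
  refine ⟨f, G, H, L, htend, ?_⟩
  have hNl : (0:ℝ) < 2*N*l := by nlinarith
  have hlm : (0:ℝ) < 4*(l*m) := by nlinarith
  have key : C * (2*N*l)^(1/p₁.toReal) * (4*(l*m))^(1/p₂.toReal) * (4*(l*m))^(1/p₃.toReal)
      < ‖L‖ := lt_of_lt_of_le hlt hLbd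
  have hnorm_pos : 0 < ‖L‖ := lt_of_le_of_lt (by positivity) key
  calc ENNReal.ofReal C * eLpNorm (⇑f) p₁ volume * eLpNorm (⇑G) p₂ volume *
        eLpNorm (⇑H) p₃ volume
      ≤ ENNReal.ofReal C * ENNReal.ofReal ((2*N*l)^(1/p₁.toReal)) *
        ENNReal.ofReal ((4*(l*m))^(1/p₂.toReal)) *
        ENNReal.ofReal ((4*(l*m))^(1/p₃.toReal)) := by
        rw [← ENNReal.ofReal_rpow_of_pos hNl, ← ENNReal.ofReal_rpow_of_pos hlm,
          ← ENNReal.ofReal_rpow_of_pos hlm]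
        exact mul_le_mul' (mul_le_mul' (mul_le_mul' le_rfl h1) h2) h3
    _ = ENNReal.ofReal (C * (2*N*l)^(1/p₁.toReal) * (4*(l*m))^(1/p₂.toReal) *
        (4*(l*m))^(1/p₃.toReal)) := by
        rw [← ENNReal.ofReal_mul hC.le, ← ENNReal.ofReal_mul (by positivity),
          ← ENNReal.ofReal_mul (by positivity)]
    _ < ENNReal.ofReal ‖L‖ := (ENNReal.ofReal_lt_ofReal_iff hnorm_pos).2 key
end

section
/- Let β ∈ ℝ, let f : ℝ → ℂ be a Schwartz function and G, H : ℝ² → ℂ be Schwartz functions. Then the function M : ℝ → [0,∞] defined by M(y) := sup_{ε>0} |∫_ℝ ∫_{|t|>ε} f(x+t) G(x,y) H(x+βt,y) (1/t) dt dx| is integrable on ℝ, i.e., M ∈ L¹(ℝ). -/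
open MeasureTheory Filter Topology ENNReal

/-- The maximally truncated quantity
`M(y) = sup_{ε>0} |∫_ℝ ∫_{|t|>ε} f(x+t) G(x,y) H(x+βt,y) (1/t) dt dx|`. -/
noncomputable def MaxTrunc (β : ℝ) (f : SchwartzMap ℝ ℂ) (G H : SchwartzMap (ℝ × ℝ) ℂ)
    (y : ℝ) : ℝ≥0∞ :=
  ⨆ (ε : ℝ) (_ : 0 < ε),
    ENNReal.ofReal
      ‖∫ x : ℝ, ∫ t in {t : ℝ | ε < |t|},
          f (x + t) * G (x, y) * H (x + β * t, y) / (t : ℂ)‖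

lemma invIntOn (a b : ℝ) (h : (0:ℝ) ∉ Set.Icc a b) :
    IntegrableOn (fun t : ℝ => t⁻¹) (Set.Icc a b) := by
  apply ContinuousOn.integrableOn_compact isCompact_Icc
  exact ContinuousOn.inv₀ continuousOn_id (fun x hx => by rintro rfl; exact h hx)

lemma logzero {ε : ℝ} (hε : 0 < ε) (hε1 : ε < 1) :
    ∫ t in Set.Ico (-1 : ℝ) (-ε) ∪ Set.Ioc ε 1, t⁻¹ = 0 := by
  rw [setIntegral_union (by
      rw [Set.disjoint_left]; rintro t ⟨h1,h2⟩ ⟨h3,h4⟩; linarith)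
    measurableSet_Ioc
    ((invIntOn (-1) (-ε) (by simpa using hε)).mono_set Set.Ico_subset_Icc_self)
    ((invIntOn ε 1 (by simpa using hε)).mono_set Set.Ioc_subset_Icc_self)]
  rw [integral_Ico_eq_integral_Ioo, ← integral_Ioc_eq_integral_Ioo,
      ← intervalIntegral.integral_of_le (by linarith),
      ← intervalIntegral.integral_of_le (by linarith),
      integral_inv_of_neg (by linarith) (by linarith), integral_inv_of_pos hε one_pos]
  rw [neg_div_neg_eq, div_one, Real.log_div one_ne_zero (ne_of_gt hε)]
  simp

lemma Aeq {ε : ℝ} (hε : 0 < ε) (hε1 : ε < 1) :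
    {t : ℝ | ε < |t| ∧ |t| ≤ 1} = Set.Ico (-1 : ℝ) (-ε) ∪ Set.Ioc ε 1 := by
  ext t
  simp only [Set.mem_setOf_eq, Set.mem_union, Set.mem_Ico, Set.mem_Ioc]
  rcases abs_cases t with ⟨h1, h2⟩ | ⟨h1, h2⟩ <;> constructor <;> intro h <;>
    first
    | (left; constructor <;> linarith [h.1, h.2])
    | (right; constructor <;> linarith [h.1, h.2])
    | (rcases h with ⟨a,b⟩|⟨a,b⟩ <;> constructor <;> linarith)

/-- Key truncated-singular-integral estimate for a `C¹` integrable function with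
globally bounded derivative. -/
lemma key (ψ ψ' : ℝ → ℂ) (L : ℝ)
    (hd : ∀ t, HasDerivAt ψ (ψ' t) t)
    (hL : ∀ t, ‖ψ' t‖ ≤ L)
    (hi : Integrable ψ) {ε : ℝ} (hε : 0 < ε) :
    ‖∫ t in {t : ℝ | ε < |t|}, ψ t / (t : ℂ)‖ ≤ 2 * L + ∫ t, ‖ψ t‖ := by
  have hL0 : 0 ≤ L := (norm_nonneg _).trans (hL 0)
  have hcont : Continuous ψ := by
    rw [continuous_iff_continuousAt]; exact fun t => (hd t).continuousAt
  have hintnn : 0 ≤ ∫ t, ‖ψ t‖ := integral_nonneg fun t => norm_nonneg _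
  have hmeasS : ∀ δ : ℝ, MeasurableSet {t : ℝ | δ < |t|} := fun δ =>
    (isOpen_lt continuous_const continuous_abs).measurableSet
  have haesm : AEStronglyMeasurable (fun t : ℝ => ψ t / (t : ℂ)) volume :=
    (hcont.measurable.div Complex.measurable_ofReal).aestronglyMeasurable
  have hnorm : ∀ t : ℝ, ‖ψ t / (t : ℂ)‖ = ‖ψ t‖ / |t| := by
    intro t; rw [norm_div, Complex.norm_real, Real.norm_eq_abs]
  have hIntOn : ∀ δ : ℝ, 0 < δ → IntegrableOn (fun t : ℝ => ψ t / (t : ℂ)) {t : ℝ | δ < |t|} := by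
    intro δ hδ
    refine Integrable.mono' ((hi.norm.div_const δ).restrict) haesm.restrict ?_
    rw [ae_restrict_iff' (hmeasS δ)]
    filter_upwards with t ht
    rw [hnorm t]
    exact div_le_div_of_nonneg_left (norm_nonneg _) hδ (le_of_lt ht)
  have tail : ∀ δ : ℝ, 1 ≤ δ → ‖∫ t in {t : ℝ | δ < |t|}, ψ t / (t : ℂ)‖ ≤ ∫ t, ‖ψ t‖ := by
    intro δ hδ
    calc ‖∫ t in {t : ℝ | δ < |t|}, ψ t / (t : ℂ)‖
        ≤ ∫ t in {t : ℝ | δ < |t|}, ‖ψ t / (t : ℂ)‖ := norm_integral_le_integral_norm _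
      _ ≤ ∫ t in {t : ℝ | δ < |t|}, ‖ψ t‖ := by
          apply setIntegral_mono_on (hIntOn δ (by linarith)).norm hi.norm.restrict (hmeasS δ)
          intro t ht
          rw [hnorm t]
          exact div_le_self (norm_nonneg _) (by simp only [Set.mem_setOf_eq] at ht; linarith)
      _ ≤ ∫ t, ‖ψ t‖ := setIntegral_le_integral hi.norm
          (Filter.Eventually.of_forall fun t => norm_nonneg _)
  rcases le_or_gt 1 ε with h1 | h1
  · linarith [tail ε h1]
  set A : Set ℝ := {t : ℝ | ε < |t| ∧ |t| ≤ 1} with hA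
  have hAm : MeasurableSet A := by
    rw [hA, Aeq hε h1]
    exact measurableSet_Ico.union measurableSet_Ioc
  have hAsub : A ⊆ Set.Icc (-1 : ℝ) 1 := by
    intro t ht; rw [Set.mem_Icc]
    constructor <;> [linarith [abs_le.1 ht.2]; linarith [abs_le.1 ht.2]]
  have hAfin : volume A < ⊤ :=
    lt_of_le_of_lt (measure_mono hAsub) (by simp)
  have hsplit : {t : ℝ | ε < |t|} = A ∪ {t : ℝ | 1 < |t|} := by
    ext t
    simp only [hA, Set.mem_setOf_eq, Set.mem_union]
    constructor
    · intro h; rcases le_or_gt |t| 1 with h2 | h2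
      exacts [Or.inl ⟨h, h2⟩, Or.inr h2]
    · rintro (⟨h, _⟩ | h); exacts [h, by linarith]
  have hdisj : Disjoint A {t : ℝ | 1 < |t|} := by
    rw [Set.disjoint_left]; rintro t ⟨_, h2⟩ h3; simp only [Set.mem_setOf_eq] at h3; linarith
  rw [hsplit, setIntegral_union hdisj (hmeasS 1)
    ((hIntOn ε hε).mono_set (by rw [hsplit]; exact Set.subset_union_left))
    (hIntOn 1 one_pos)]
  refine (norm_add_le _ _).trans ?_
  have hB := tail 1 le_rfl
  have MVT : ∀ t : ℝ, ‖ψ t - ψ 0‖ ≤ L * |t| := by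
    intro t
    have := (convex_univ (𝕜 := ℝ) (E := ℝ)).norm_image_sub_le_of_norm_hasDerivWithin_le
      (f := ψ) (f' := ψ') (fun x _ => (hd x).hasDerivWithinAt) (fun x _ => hL x)
      (Set.mem_univ 0) (Set.mem_univ t)
    simpa using this
  have hptA : ∀ t ∈ A, ‖(ψ t - ψ 0) / (t : ℂ)‖ ≤ L := by
    intro t ht
    have ht0 : (0:ℝ) < |t| := lt_trans hε ht.1
    rw [norm_div, Complex.norm_real, Real.norm_eq_abs]
    rw [div_le_iff₀ ht0]
    exact MVT t
  have hint1 : IntegrableOn (fun t : ℝ => (ψ t - ψ 0) / (t : ℂ)) A := by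
    refine Integrable.mono' ((integrableOn_const_iff (C := L)).2 (Or.inr hAfin))
      ((((hcont.sub continuous_const).measurable.div
        Complex.measurable_ofReal).aestronglyMeasurable).restrict) ?_
    rw [ae_restrict_iff' hAm]
    filter_upwards with t ht
    exact hptA t ht
  have hreal : IntegrableOn (fun t : ℝ => t⁻¹) A := by
    rw [hA, Aeq hε h1]
    exact ((invIntOn (-1) (-ε) (by simpa using hε)).mono_set Set.Ico_subset_Icc_self).union
      ((invIntOn ε 1 (by simpa using hε)).mono_set Set.Ioc_subset_Icc_self)
  have hint2 : IntegrableOn (fun t : ℝ => ψ 0 * ((t : ℂ))⁻¹) A := by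
    have h2 : IntegrableOn (fun t : ℝ => ((t⁻¹ : ℝ) : ℂ)) A := hreal.ofReal
    exact IntegrableOn.congr_fun (h2.const_mul (ψ 0)) (fun t _ => by push_cast; ring) hAm
  have hAcong : ∫ t in A, ψ t / (t : ℂ) =
      (∫ t in A, (ψ t - ψ 0) / (t : ℂ)) + ∫ t in A, ψ 0 * ((t : ℂ))⁻¹ := by
    rw [← integral_add hint1 hint2]
    apply setIntegral_congr_fun hAm
    intro t ht
    have ht0 : (t : ℂ) ≠ 0 := by
      simp only [ne_eq, Complex.ofReal_eq_zero]
      intro h; rw [h] at ht; have := ht.1; rw [abs_zero] at this; linarith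
    field_simp
    ring
  have hzero : ∫ t in A, ψ 0 * ((t : ℂ))⁻¹ = 0 := by
    rw [integral_const_mul]
    have hco : ∫ t in A, ((t : ℂ))⁻¹ = ∫ t in A, ((t⁻¹ : ℝ) : ℂ) :=
      setIntegral_congr_fun hAm (fun t _ => by push_cast; ring)
    have h3 : ∫ t in A, ((t⁻¹ : ℝ) : ℂ) = ((∫ t in A, t⁻¹ : ℝ) : ℂ) := by
      simpa using Complex.ofRealCLM.integral_comp_comm hreal
    have h4 : ∫ t in A, (t : ℝ)⁻¹ = 0 := by rw [hA, Aeq hε h1]; exact logzero hε h1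
    rw [hco, h3, h4]
    simp
  have hApart : ‖∫ t in A, ψ t / (t : ℂ)‖ ≤ 2 * L := by
    rw [hAcong, hzero, add_zero]
    have hb := norm_setIntegral_le_of_norm_le_const (μ := volume) hAfin hptA
    refine hb.trans ?_
    have h2 : (volume A).toReal ≤ 2 := by
      have := measure_mono (μ := volume) hAsub
      rw [Real.volume_Icc] at this
      calc (volume A).toReal ≤ (ENNReal.ofReal (1 - (-1))).toReal :=
        ENNReal.toReal_mono (by simp) this
        _ = 2 := by rw [ENNReal.toReal_ofReal (by norm_num)]; norm_num
    calc L * (volume A).toReal ≤ L * 2 := mul_le_mul_of_nonneg_left h2 hL0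
      _ = 2 * L := by ring
  linarith

/-- Sup-norm bound for Schwartz maps. -/
lemma schwartz_sup {E F : Type*} [NormedAddCommGroup E] [NormedSpace ℝ E]
    [NormedAddCommGroup F] [NormedSpace ℝ F] (g : SchwartzMap E F) :
    ∃ C : ℝ, 0 < C ∧ ∀ p, ‖g p‖ ≤ C := by
  obtain ⟨C, hC, h⟩ := g.decay 0 0
  exact ⟨C, hC, fun p => by simpa [norm_iteratedFDeriv_zero] using h p⟩

/-- Product-type decay for sections of 2d Schwartz maps. -/
lemma schwartz_sec_decay (G : SchwartzMap (ℝ × ℝ) ℂ) :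
    ∃ C : ℝ, 0 < C ∧ ∀ x y : ℝ, ‖G (x, y)‖ ≤ C * ((1 + x ^ 2)⁻¹ * (1 + y ^ 2)⁻¹) := by
  obtain ⟨C0, hC0, h0⟩ := G.decay 0 0
  obtain ⟨C2, hC2, h2⟩ := G.decay 2 0
  obtain ⟨C4, hC4, h4⟩ := G.decay 4 0
  refine ⟨C0 + 2 * C2 + C4, by positivity, fun x y => ?_⟩
  set p : ℝ × ℝ := (x, y) with hp
  have e0 := h0 p; have e2 := h2 p; have e4 := h4 p
  simp only [norm_iteratedFDeriv_zero, pow_zero, one_mul] at e0 e2 e4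
  set n : ℝ := ‖p‖ with hn
  set g : ℝ := ‖G p‖ with hg
  have hg0 : 0 ≤ g := norm_nonneg _
  have hn0 : 0 ≤ n := norm_nonneg _
  have hx : x ^ 2 ≤ n ^ 2 := by
    have h := norm_fst_le p
    have : |x| ≤ n := by rw [← Real.norm_eq_abs]; exact h
    nlinarith [abs_nonneg x, sq_abs x]
  have hy : y ^ 2 ≤ n ^ 2 := by
    have h := norm_snd_le p
    have : |y| ≤ n := by rw [← Real.norm_eq_abs]; exact h
    nlinarith [abs_nonneg y, sq_abs y]
  have key : (1 + x ^ 2) * (1 + y ^ 2) * g ≤ C0 + 2 * C2 + C4 := by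
    have p1 : x ^ 2 * g ≤ n ^ 2 * g := mul_le_mul_of_nonneg_right hx hg0
    have p2 : y ^ 2 * g ≤ n ^ 2 * g := mul_le_mul_of_nonneg_right hy hg0
    have p3 : x ^ 2 * y ^ 2 * g ≤ n ^ 4 * g := by
      have : x ^ 2 * y ^ 2 ≤ n ^ 4 := by nlinarith [sq_nonneg x, sq_nonneg y]
      exact mul_le_mul_of_nonneg_right this hg0
    nlinarith [sq_nonneg x, sq_nonneg y]
  have hpos : (0:ℝ) < (1 + x ^ 2) * (1 + y ^ 2) := by positivity
  have hfin : ‖G (x, y)‖ ≤ (C0 + 2 * C2 + C4) / ((1 + x ^ 2) * (1 + y ^ 2)) := by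
    rw [le_div_iff₀ hpos]
    calc ‖G (x, y)‖ * ((1 + x ^ 2) * (1 + y ^ 2))
        = (1 + x ^ 2) * (1 + y ^ 2) * g := by rw [hg, hp]; ring
      _ ≤ C0 + 2 * C2 + C4 := key
  refine hfin.trans_eq ?_
  rw [div_eq_mul_inv, mul_inv]

theorem stmt12 (β : ℝ) (f : SchwartzMap ℝ ℂ) (G H : SchwartzMap (ℝ × ℝ) ℂ) :
    ∫⁻ y : ℝ, MaxTrunc β f G H y < ⊤ := by
  obtain ⟨CH, hCH, hHb⟩ := schwartz_sup H
  obtain ⟨CH', hCH', hHb'⟩ := schwartz_sup (SchwartzMap.fderivCLM ℝ (ℝ × ℝ) ℂ H)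
  obtain ⟨Cf, hCfp, hfb⟩ := schwartz_sup f
  obtain ⟨Cf', hCf', hfb'⟩ := schwartz_sup (SchwartzMap.derivCLM ℝ ℂ f)
  obtain ⟨CG, hCG, hGb⟩ := schwartz_sec_decay G
  set L : ℝ := Cf' * CH + Cf * (CH' * |β|) with hLdef
  have hL0 : 0 ≤ L := by positivity
  have hIf : 0 ≤ ∫ t : ℝ, ‖f t‖ := integral_nonneg fun t => norm_nonneg _
  set D : ℝ := 2 * L + CH * (∫ t : ℝ, ‖f t‖) with hDdef
  have hD0 : 0 ≤ D := by positivity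
  have claim1 : ∀ (x y ε : ℝ), 0 < ε →
      ‖∫ t in {t : ℝ | ε < |t|}, f (x + t) * G (x, y) * H (x + β * t, y) / (t : ℂ)‖
        ≤ ‖G (x, y)‖ * D := by
    intro x y ε hε
    set ψ : ℝ → ℂ := fun t => f (x + t) * H (x + β * t, y) with hψ
    set ψ' : ℝ → ℂ := fun t => deriv f (x + t) * H (x + β * t, y) +
      f (x + t) * (fderiv ℝ H (x + β * t, y) (β, 0)) with hψ'
    have hd : ∀ t, HasDerivAt ψ (ψ' t) t := by
      intro t
      have h1 : HasDerivAt (fun t : ℝ => f (x + t)) (deriv f (x + t)) t := by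
        have hg : HasDerivAt (fun t : ℝ => x + t) 1 t := (hasDerivAt_id t).const_add x
        have := (f.differentiableAt (x := x + t)).hasFDerivAt.comp_hasDerivAt t hg
        simpa only [Function.comp_def, fderiv_apply_one_eq_deriv] using this
      have hcurve : HasDerivAt (fun t : ℝ => ((x + β * t, y) : ℝ × ℝ)) ((β, 0)) t := by
        have ha : HasDerivAt (fun t : ℝ => x + β * t) β t := by
          simpa using ((hasDerivAt_id t).const_mul β).const_add x
        exact ha.prodMk (hasDerivAt_const t y)
      have h2 : HasDerivAt (fun t : ℝ => H (x + β * t, y))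
          (fderiv ℝ H (x + β * t, y) (β, 0)) t :=
        (H.differentiableAt.hasFDerivAt).comp_hasDerivAt t hcurve
      exact h1.mul h2
    have hLb : ∀ t, ‖ψ' t‖ ≤ L := by
      intro t
      refine (norm_add_le _ _).trans ?_
      rw [norm_mul, norm_mul]
      have b1 : ‖deriv f (x + t)‖ ≤ Cf' := by
        rw [← SchwartzMap.derivCLM_apply (𝕜 := ℝ)]
        exact hfb' _
      have b2 : ‖H (x + β * t, y)‖ ≤ CH := hHb _
      have b3 : ‖f (x + t)‖ ≤ Cf := hfb _
      have b4 : ‖fderiv ℝ H (x + β * t, y) (β, 0)‖ ≤ CH' * |β| := by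
        refine (ContinuousLinearMap.le_opNorm _ _).trans ?_
        have hb : ‖((β, 0) : ℝ × ℝ)‖ = |β| := by simp [Prod.norm_def]
        rw [hb]
        have : ‖fderiv ℝ (⇑H) (x + β * t, y)‖ ≤ CH' := by
          rw [← SchwartzMap.fderivCLM_apply (𝕜 := ℝ)]
          exact hHb' _
        exact mul_le_mul_of_nonneg_right this (abs_nonneg β)
      have := add_le_add
        (mul_le_mul b1 b2 (norm_nonneg _) (le_of_lt hCf'))
        (mul_le_mul b3 b4 (norm_nonneg _) (le_of_lt hCfp))
      exact this.trans_eq (by rw [hLdef])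
    have hψcont : Continuous ψ :=
      (f.continuous.comp (continuous_const.add continuous_id)).mul
        (H.continuous.comp ((continuous_const.add
          (continuous_const.mul continuous_id)).prodMk continuous_const))
    have hψbd : ∀ t : ℝ, ‖ψ t‖ ≤ ‖f (x + t)‖ * CH := by
      intro t
      rw [hψ]
      simp only
      rw [norm_mul]
      exact mul_le_mul_of_nonneg_left (hHb _) (norm_nonneg _)
    have hi : Integrable ψ := by
      refine Integrable.mono' ((f.integrable.comp_add_left x).norm.mul_const CH)
        hψcont.aestronglyMeasurable ?_
      filter_upwards with t
      exact hψbd t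
    have hkey := key ψ ψ' L hd hLb hi hε
    have htail : ∫ t, ‖ψ t‖ ≤ CH * ∫ t : ℝ, ‖f t‖ := by
      have step1 : ∫ t, ‖ψ t‖ ≤ ∫ t : ℝ, ‖f (x + t)‖ * CH :=
        integral_mono hi.norm ((f.integrable.comp_add_left x).norm.mul_const CH) hψbd
      calc ∫ t, ‖ψ t‖ ≤ ∫ t : ℝ, ‖f (x + t)‖ * CH := step1
        _ = (∫ t : ℝ, ‖f (x + t)‖) * CH := integral_mul_const CH _
        _ = (∫ t : ℝ, ‖f t‖) * CH := by
            rw [integral_add_left_eq_self (fun u : ℝ => ‖f u‖) x]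
        _ = CH * ∫ t : ℝ, ‖f t‖ := mul_comm _ _
    have hrw : ∫ t in {t : ℝ | ε < |t|}, f (x + t) * G (x, y) * H (x + β * t, y) / (t : ℂ)
        = G (x, y) * ∫ t in {t : ℝ | ε < |t|}, ψ t / (t : ℂ) := by
      rw [← integral_const_mul]
      apply setIntegral_congr_fun ((isOpen_lt continuous_const continuous_abs).measurableSet)
      intro t _
      rw [hψ]
      simp only
      ring
    rw [hrw, norm_mul]
    refine mul_le_mul_of_nonneg_left ?_ (norm_nonneg _)
    calc ‖∫ t in {t : ℝ | ε < |t|}, ψ t / (t : ℂ)‖ ≤ 2 * L + ∫ t, ‖ψ t‖ := hkey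
      _ ≤ 2 * L + CH * ∫ t : ℝ, ‖f t‖ := by linarith
      _ = D := hDdef.symm
  set K : ℝ := CG * D * Real.pi with hKdef
  have hK0 : 0 ≤ K := by positivity
  have claim2 : ∀ (y ε : ℝ), 0 < ε →
      ‖∫ x : ℝ, ∫ t in {t : ℝ | ε < |t|}, f (x + t) * G (x, y) * H (x + β * t, y) / (t : ℂ)‖
        ≤ K * (1 + y ^ 2)⁻¹ := by
    intro y ε hε
    refine (norm_integral_le_integral_norm _).trans ?_
    have hbnd : ∀ x : ℝ,
        ‖∫ t in {t : ℝ | ε < |t|}, f (x + t) * G (x, y) * H (x + β * t, y) / (t : ℂ)‖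
          ≤ (CG * D * (1 + y ^ 2)⁻¹) * (1 + x ^ 2)⁻¹ := by
      intro x
      refine (claim1 x y ε hε).trans ?_
      calc ‖G (x, y)‖ * D ≤ (CG * ((1 + x ^ 2)⁻¹ * (1 + y ^ 2)⁻¹)) * D :=
          mul_le_mul_of_nonneg_right (hGb x y) hD0
        _ = (CG * D * (1 + y ^ 2)⁻¹) * (1 + x ^ 2)⁻¹ := by ring
    have hint : Integrable (fun x : ℝ => (CG * D * (1 + y ^ 2)⁻¹) * (1 + x ^ 2)⁻¹) :=
      integrable_inv_one_add_sq.const_mul _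
    calc ∫ x : ℝ, ‖∫ t in {t : ℝ | ε < |t|},
            f (x + t) * G (x, y) * H (x + β * t, y) / (t : ℂ)‖
        ≤ ∫ x : ℝ, (CG * D * (1 + y ^ 2)⁻¹) * (1 + x ^ 2)⁻¹ :=
          integral_mono_of_nonneg (Filter.Eventually.of_forall fun x => norm_nonneg _) hint
            (Filter.Eventually.of_forall hbnd)
      _ = (CG * D * (1 + y ^ 2)⁻¹) * ∫ x : ℝ, (1 + x ^ 2)⁻¹ := integral_const_mul _ _
      _ = (CG * D * (1 + y ^ 2)⁻¹) * Real.pi := by rw [integral_univ_inv_one_add_sq]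
      _ = K * (1 + y ^ 2)⁻¹ := by rw [hKdef]; ring
  have hM : ∀ y : ℝ, MaxTrunc β f G H y ≤ ENNReal.ofReal (K * (1 + y ^ 2)⁻¹) := by
    intro y
    rw [MaxTrunc]
    exact iSup_le fun ε => iSup_le fun hε => ENNReal.ofReal_le_ofReal (claim2 y ε hε)
  have hint : Integrable (fun y : ℝ => K * (1 + y ^ 2)⁻¹) :=
    integrable_inv_one_add_sq.const_mul K
  calc ∫⁻ y : ℝ, MaxTrunc β f G H y
      ≤ ∫⁻ y : ℝ, ENNReal.ofReal (K * (1 + y ^ 2)⁻¹) := lintegral_mono hM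
    _ ≤ ∫⁻ y : ℝ, (‖K * (1 + y ^ 2)⁻¹‖₊ : ℝ≥0∞) :=
        lintegral_mono fun y => Real.ofReal_le_enorm _
    _ < ⊤ := hint.hasFiniteIntegral
end

section
/- Let Π₁, Π₄ : ℝ³ → ℝ and Π₂, Π₃ : ℝ³ → ℝ² be surjective linear maps, and let V_j denote the range of the adjoint Π_j^* for j = 1,2,3,4. Assume V₄ ∩ V_j = {0} for j = 1,2,3, that V₂ = V₃, and that V₁ ⊆ V₂. Then there exist invertible linear maps B : ℝ³ → ℝ³, A₁, A₄ : ℝ → ℝ, and A₂, A₃ : ℝ² → ℝ² such that, writing points of ℝ³ as (x,y,t): A₁ ∘ Π₁ ∘ B = (the map (x,y,t) ↦ x), A₂ ∘ Π₂ ∘ B = A₃ ∘ Π₃ ∘ B = (the map (x,y,t) ↦ (x,y)), and A₄ ∘ Π₄ ∘ B = (the map (x,y,t) ↦ t). -/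
open LinearMap

lemma ker_eq_orth_range_adjoint {E F : Type*} [NormedAddCommGroup E]
    [InnerProductSpace ℝ E] [NormedAddCommGroup F] [InnerProductSpace ℝ F]
    [FiniteDimensional ℝ E] [FiniteDimensional ℝ F] (P : E →ₗ[ℝ] F) :
    LinearMap.ker P = (LinearMap.range (LinearMap.adjoint P))ᗮ := by
  ext v
  simp only [LinearMap.mem_ker, Submodule.mem_orthogonal]
  constructor
  · rintro h u ⟨w, rfl⟩
    rw [LinearMap.adjoint_inner_left, h, inner_zero_right]
  · intro h
    have h' := h (LinearMap.adjoint P (P v)) ⟨P v, rfl⟩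
    rw [LinearMap.adjoint_inner_left] at h'
    exact inner_self_eq_zero.mp h'

set_option maxHeartbeats 1000000 in
theorem stmt15
    (P₁ P₄ : EuclideanSpace ℝ (Fin 3) →ₗ[ℝ] ℝ)
    (P₂ P₃ : EuclideanSpace ℝ (Fin 3) →ₗ[ℝ] EuclideanSpace ℝ (Fin 2))
    (hs₁ : Function.Surjective P₁) (hs₂ : Function.Surjective P₂)
    (hs₃ : Function.Surjective P₃) (hs₄ : Function.Surjective P₄)
    (h41 : range (adjoint P₄) ⊓ range (adjoint P₁) = ⊥)
    (h42 : range (adjoint P₄) ⊓ range (adjoint P₂) = ⊥)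
    (h43 : range (adjoint P₄) ⊓ range (adjoint P₃) = ⊥)
    (h23 : range (adjoint P₂) = range (adjoint P₃))
    (h12 : range (adjoint P₁) ≤ range (adjoint P₂)) :
    ∃ (B : EuclideanSpace ℝ (Fin 3) ≃ₗ[ℝ] EuclideanSpace ℝ (Fin 3))
      (A₁ A₄ : ℝ ≃ₗ[ℝ] ℝ)
      (A₂ A₃ : EuclideanSpace ℝ (Fin 2) ≃ₗ[ℝ] EuclideanSpace ℝ (Fin 2)),
      (∀ v : EuclideanSpace ℝ (Fin 3), A₁ (P₁ (B v)) = v 0) ∧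
      (∀ v : EuclideanSpace ℝ (Fin 3),
        A₂ (P₂ (B v)) 0 = v 0 ∧ A₂ (P₂ (B v)) 1 = v 1) ∧
      (∀ v : EuclideanSpace ℝ (Fin 3),
        A₃ (P₃ (B v)) 0 = v 0 ∧ A₃ (P₃ (B v)) 1 = v 1) ∧
      (∀ v : EuclideanSpace ℝ (Fin 3), A₄ (P₄ (B v)) = v 2) := by
  classical
  have f3 : Module.finrank ℝ (EuclideanSpace ℝ (Fin 3)) = 3 := by simp
  have f2 : Module.finrank ℝ (EuclideanSpace ℝ (Fin 2)) = 2 := by simp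
  -- injectivity of adjoints
  have ha2 : Function.Injective (adjoint P₂) := by
    rw [← LinearMap.ker_eq_bot, ker_eq_orth_range_adjoint, LinearMap.adjoint_adjoint,
      LinearMap.range_eq_top.2 hs₂, Submodule.top_orthogonal_eq_bot]
  have ha4 : Function.Injective (adjoint P₄) := by
    rw [← LinearMap.ker_eq_bot, ker_eq_orth_range_adjoint, LinearMap.adjoint_adjoint,
      LinearMap.range_eq_top.2 hs₄, Submodule.top_orthogonal_eq_bot]
  have hr2 : Module.finrank ℝ (range (adjoint P₂)) = 2 := by
    rw [LinearMap.finrank_range_of_inj ha2, f2]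
  have hr4 : Module.finrank ℝ (range (adjoint P₄)) = 1 := by
    rw [LinearMap.finrank_range_of_inj ha4]
    simp
  -- the sup of ranges of adjoints of P₄ and P₂ is everything
  have hsup : range (adjoint P₄) ⊔ range (adjoint P₂) = ⊤ := by
    apply Submodule.eq_top_of_finrank_eq
    have h := Submodule.finrank_sup_add_finrank_inf_eq (range (adjoint P₄)) (range (adjoint P₂))
    rw [h42] at h
    simp only [finrank_bot, add_zero] at h
    omega
  -- kernels
  have hK24 : ker P₂ ⊓ ker P₄ = ⊥ := by
    rw [ker_eq_orth_range_adjoint P₂, ker_eq_orth_range_adjoint P₄,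
      Submodule.inf_orthogonal, sup_comm, hsup, Submodule.top_orthogonal_eq_bot]
  have hK21 : ker P₂ ≤ ker P₁ := by
    rw [ker_eq_orth_range_adjoint, ker_eq_orth_range_adjoint]
    exact Submodule.orthogonal_le h12
  have hK23 : ker P₂ = ker P₃ := by
    rw [ker_eq_orth_range_adjoint, ker_eq_orth_range_adjoint, h23]
  -- kernel dimensions
  have hd2 : Module.finrank ℝ (ker P₂) = 1 := by
    have h := LinearMap.finrank_range_add_finrank_ker P₂
    rw [LinearMap.range_eq_top.2 hs₂, f3] at h
    have : Module.finrank ℝ (⊤ : Submodule ℝ (EuclideanSpace ℝ (Fin 2))) = 2 := by rw [finrank_top, f2]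
    omega
  have hd1 : Module.finrank ℝ (ker P₁) = 2 := by
    have h := LinearMap.finrank_range_add_finrank_ker P₁
    rw [LinearMap.range_eq_top.2 hs₁, f3] at h
    have : Module.finrank ℝ (⊤ : Submodule ℝ ℝ) = 1 := by simp
    omega
  have hd4 : Module.finrank ℝ (ker P₄) = 2 := by
    have h := LinearMap.finrank_range_add_finrank_ker P₄
    rw [LinearMap.range_eq_top.2 hs₄, f3] at h
    have : Module.finrank ℝ (⊤ : Submodule ℝ ℝ) = 1 := by simp
    omega
  -- choose v₃ spanning ker P₂
  obtain ⟨v₃, hv₃mem, hv₃ne⟩ : ∃ b, b ∈ ker P₂ ∧ b ≠ 0 := by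
    apply Submodule.exists_mem_ne_zero_of_ne_bot
    intro h
    rw [h, finrank_bot] at hd2
    omega
  -- choose v₂ in ker P₁ ⊓ ker P₄
  have hinf_pos : 1 ≤ Module.finrank ℝ ↥(ker P₁ ⊓ ker P₄) := by
    have h := Submodule.finrank_sup_add_finrank_inf_eq (ker P₁) (ker P₄)
    have hle := Submodule.finrank_le (ker P₁ ⊔ ker P₄)
    rw [f3] at hle
    omega
  obtain ⟨v₂, hv₂mem, hv₂ne⟩ : ∃ b, b ∈ ker P₁ ⊓ ker P₄ ∧ b ≠ 0 := by
    apply Submodule.exists_mem_ne_zero_of_ne_bot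
    intro h
    rw [h, finrank_bot] at hinf_pos
    omega
  have hv₂1 : v₂ ∈ ker P₁ := hv₂mem.1
  have hv₂4 : v₂ ∈ ker P₄ := hv₂mem.2
  -- ker P₁ ⊓ ker P₄ = span v₂
  have hspan_le : (ℝ ∙ v₂) ≤ ker P₁ ⊓ ker P₄ := by
    rwa [Submodule.span_singleton_le_iff_mem]
  have hinf_eq : ker P₁ ⊓ ker P₄ = (ℝ ∙ v₂) := by
    refine (Submodule.eq_of_le_of_finrank_le hspan_le ?_).symm
    rw [finrank_span_singleton hv₂ne]
    by_contra h
    push_neg at h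
    have heq : ker P₁ ⊓ ker P₄ = ker P₄ := by
      apply Submodule.eq_of_le_of_finrank_le inf_le_right
      omega
    have h41' : ker P₄ ≤ ker P₁ := by
      rw [← heq]; exact inf_le_left
    have heq2 : ker P₄ = ker P₁ :=
      Submodule.eq_of_le_of_finrank_le h41' (by omega)
    have : v₃ ∈ ker P₂ ⊓ ker P₄ := ⟨hv₃mem, heq2 ▸ hK21 hv₃mem⟩
    rw [hK24, Submodule.mem_bot] at this
    exact hv₃ne this
  -- choose v₁ in ker P₄ outside span v₂
  obtain ⟨v₁, hv₁4, hv₁span⟩ : ∃ b, b ∈ ker P₄ ∧ b ∉ (ℝ ∙ v₂) := by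
    by_contra h
    push_neg at h
    have hle : ker P₄ ≤ (ℝ ∙ v₂) := h
    have := Submodule.finrank_mono hle
    rw [hd4, finrank_span_singleton hv₂ne] at this
    omega
  -- basic evaluation facts
  have hP₄v₁ : P₄ v₁ = 0 := hv₁4
  have hP₄v₂ : P₄ v₂ = 0 := hv₂4
  have hP₄v₃ : P₄ v₃ ≠ 0 := by
    intro h
    have : v₃ ∈ ker P₂ ⊓ ker P₄ := ⟨hv₃mem, h⟩
    rw [hK24, Submodule.mem_bot] at this
    exact hv₃ne this
  have hP₁v₂ : P₁ v₂ = 0 := hv₂1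
  have hP₁v₃ : P₁ v₃ = 0 := hK21 hv₃mem
  have hP₁v₁ : P₁ v₁ ≠ 0 := by
    intro h
    apply hv₁span
    rw [← hinf_eq]
    exact ⟨h, hv₁4⟩
  have hP₂v₃ : P₂ v₃ = 0 := hv₃mem
  have hP₃v₃ : P₃ v₃ = 0 := by
    have hm := hv₃mem
    rw [hK23] at hm
    exact hm
  -- two-vector cancellation lemma
  have hkey : ∀ a b : ℝ, a • v₁ + b • v₂ = 0 → a = 0 ∧ b = 0 := by
    intro a b hab
    have ha : a = 0 := by
      by_contra ha
      apply hv₁span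
      rw [Submodule.mem_span_singleton]
      refine ⟨-(a⁻¹ * b), ?_⟩
      have h1 : a • v₁ = -(b • v₂) := eq_neg_of_add_eq_zero_left hab
      have h2 : v₁ = -(a⁻¹ * b) • v₂ := by
        calc v₁ = a⁻¹ • (a • v₁) := by rw [smul_smul, inv_mul_cancel₀ ha, one_smul]
        _ = a⁻¹ • -(b • v₂) := by rw [h1]
        _ = -(a⁻¹ * b) • v₂ := by rw [smul_neg, smul_smul, neg_smul]
      exact h2.symm
    refine ⟨ha, ?_⟩
    rw [ha, zero_smul, zero_add] at hab
    exact (smul_eq_zero.mp hab).resolve_right hv₂ne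
  -- linear independence of v₁, v₂, v₃
  have hli : LinearIndependent ℝ ![v₁, v₂, v₃] := by
    rw [Fintype.linearIndependent_iff]
    intro g hg
    simp only [Fin.sum_univ_three, Matrix.cons_val_zero, Matrix.cons_val_one, Matrix.head_cons,
      Matrix.cons_val_two, Matrix.tail_cons] at hg
    have h2 : g 2 = 0 := by
      have := congrArg P₄ hg
      simp only [map_add, map_smul, hP₄v₁, hP₄v₂, smul_zero, smul_eq_mul, mul_zero,
        zero_add, add_zero, map_zero] at this
      exact (mul_eq_zero.mp this).resolve_right hP₄v₃
    rw [h2, zero_smul, add_zero] at hg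
    obtain ⟨h0, h1⟩ := hkey _ _ hg
    intro i
    fin_cases i <;> assumption
  have hcard3 : Fintype.card (Fin 3) = Module.finrank ℝ (EuclideanSpace ℝ (Fin 3)) := by simp [f3]
  set b3 := basisOfLinearIndependentOfCardEqFinrank hli hcard3 with hb3def
  have hb3 : ⇑b3 = ![v₁, v₂, v₃] := coe_basisOfLinearIndependentOfCardEqFinrank hli hcard3
  set e3 := (EuclideanSpace.basisFun (Fin 3) ℝ).toBasis with he3def
  set B := e3.equiv b3 (Equiv.refl _) with hBdef
  have hBv : ∀ v : EuclideanSpace ℝ (Fin 3), B v = v 0 • v₁ + v 1 • v₂ + v 2 • v₃ := by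
    intro v
    have hv := e3.sum_repr v
    conv_lhs => rw [← hv]
    rw [map_sum, Fin.sum_univ_three]
    simp only [map_smul, hBdef, Module.Basis.equiv_apply, Equiv.refl_apply, hb3, he3def,
      OrthonormalBasis.coe_toBasis_repr_apply, EuclideanSpace.basisFun_repr,
      Matrix.cons_val_zero, Matrix.cons_val_one, Matrix.head_cons, Matrix.cons_val_two,
      Matrix.tail_cons]
  -- A₁ and A₄
  set A₁ : ℝ ≃ₗ[ℝ] ℝ := LinearEquiv.smulOfNeZero ℝ ℝ (P₁ v₁)⁻¹ (inv_ne_zero hP₁v₁) with hA₁def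
  set A₄ : ℝ ≃ₗ[ℝ] ℝ := LinearEquiv.smulOfNeZero ℝ ℝ (P₄ v₃)⁻¹ (inv_ne_zero hP₄v₃) with hA₄def
  have hA₁ : ∀ x : ℝ, A₁ x = (P₁ v₁)⁻¹ * x := fun x => rfl
  have hA₄ : ∀ x : ℝ, A₄ x = (P₄ v₃)⁻¹ * x := fun x => rfl
  -- independence of images under P₂ and P₃
  have hli2 : LinearIndependent ℝ ![P₂ v₁, P₂ v₂] := by
    rw [Fintype.linearIndependent_iff]
    intro g hg
    simp only [Fin.sum_univ_two, Matrix.cons_val_zero, Matrix.cons_val_one,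
      Matrix.head_cons] at hg
    have hw : g 0 • v₁ + g 1 • v₂ = 0 := by
      have hm2 : g 0 • v₁ + g 1 • v₂ ∈ ker P₂ :=
        LinearMap.mem_ker.mpr (by rw [map_add, map_smul, map_smul, hg])
      have hm4 : g 0 • v₁ + g 1 • v₂ ∈ ker P₄ :=
        LinearMap.mem_ker.mpr (by rw [map_add, map_smul, map_smul, hP₄v₁, hP₄v₂]; simp)
      have hm : g 0 • v₁ + g 1 • v₂ ∈ ker P₂ ⊓ ker P₄ := Submodule.mem_inf.mpr ⟨hm2, hm4⟩
      rwa [hK24, Submodule.mem_bot] at hm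
    obtain ⟨h0, h1⟩ := hkey _ _ hw
    intro i
    fin_cases i <;> assumption
  have hli3 : LinearIndependent ℝ ![P₃ v₁, P₃ v₂] := by
    rw [Fintype.linearIndependent_iff]
    intro g hg
    simp only [Fin.sum_univ_two, Matrix.cons_val_zero, Matrix.cons_val_one,
      Matrix.head_cons] at hg
    have hw : g 0 • v₁ + g 1 • v₂ = 0 := by
      have hm2 : g 0 • v₁ + g 1 • v₂ ∈ ker P₂ := by
        rw [hK23]
        exact LinearMap.mem_ker.mpr (by rw [map_add, map_smul, map_smul, hg])
      have hm4 : g 0 • v₁ + g 1 • v₂ ∈ ker P₄ :=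
        LinearMap.mem_ker.mpr (by rw [map_add, map_smul, map_smul, hP₄v₁, hP₄v₂]; simp)
      have hm : g 0 • v₁ + g 1 • v₂ ∈ ker P₂ ⊓ ker P₄ := Submodule.mem_inf.mpr ⟨hm2, hm4⟩
      rwa [hK24, Submodule.mem_bot] at hm
    obtain ⟨h0, h1⟩ := hkey _ _ hw
    intro i
    fin_cases i <;> assumption
  have hcard2 : Fintype.card (Fin 2) = Module.finrank ℝ (EuclideanSpace ℝ (Fin 2)) := by simp [f2]
  set e2 := (EuclideanSpace.basisFun (Fin 2) ℝ).toBasis with he2def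
  set b2 := basisOfLinearIndependentOfCardEqFinrank hli2 hcard2 with hb2def
  have hb2 : ⇑b2 = ![P₂ v₁, P₂ v₂] := coe_basisOfLinearIndependentOfCardEqFinrank hli2 hcard2
  set b2' := basisOfLinearIndependentOfCardEqFinrank hli3 hcard2 with hb2'def
  have hb2' : ⇑b2' = ![P₃ v₁, P₃ v₂] := coe_basisOfLinearIndependentOfCardEqFinrank hli3 hcard2
  set A₂ := b2.equiv e2 (Equiv.refl _) with hA₂def
  set A₃ := b2'.equiv e2 (Equiv.refl _) with hA₃def
  have he2app : ∀ (i j : Fin 2), (e2 i) j = if j = i then (1:ℝ) else 0 := by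
    intro i j
    rw [he2def, OrthonormalBasis.coe_toBasis, EuclideanSpace.basisFun_apply,
      EuclideanSpace.single_apply]
  refine ⟨B, A₁, A₄, A₂, A₃, ?_, ?_, ?_, ?_⟩
  · intro v
    rw [hBv v]
    simp only [map_add, map_smul, hP₁v₂, hP₁v₃, smul_zero, add_zero, smul_eq_mul, hA₁]
    field_simp
    ring
  · intro v
    rw [hBv v]
    have hval : A₂ (P₂ (v 0 • v₁ + v 1 • v₂ + v 2 • v₃)) = v 0 • e2 0 + v 1 • e2 1 := by
      simp only [map_add, map_smul, hP₂v₃, smul_zero, add_zero]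
      have hb20 : b2 0 = P₂ v₁ := by rw [hb2]; simp
      have hb21 : b2 1 = P₂ v₂ := by rw [hb2]; simp
      have h0 : A₂ (P₂ v₁) = e2 0 := by
        rw [← hb20, hA₂def, Module.Basis.equiv_apply, Equiv.refl_apply]
      have h1 : A₂ (P₂ v₂) = e2 1 := by
        rw [← hb21, hA₂def, Module.Basis.equiv_apply, Equiv.refl_apply]
      simp [h0, h1]
    rw [hval]
    constructor <;>
      simp [PiLp.add_apply, PiLp.smul_apply, he2app, smul_eq_mul]
  · intro v
    rw [hBv v]
    have hval : A₃ (P₃ (v 0 • v₁ + v 1 • v₂ + v 2 • v₃)) = v 0 • e2 0 + v 1 • e2 1 := by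
      simp only [map_add, map_smul, hP₃v₃, smul_zero, add_zero]
      have hb20 : b2' 0 = P₃ v₁ := by rw [hb2']; simp
      have hb21 : b2' 1 = P₃ v₂ := by rw [hb2']; simp
      have h0 : A₃ (P₃ v₁) = e2 0 := by
        rw [← hb20, hA₃def, Module.Basis.equiv_apply, Equiv.refl_apply]
      have h1 : A₃ (P₃ v₂) = e2 1 := by
        rw [← hb21, hA₃def, Module.Basis.equiv_apply, Equiv.refl_apply]
      simp [h0, h1]
    rw [hval]
    constructor <;>
      simp [PiLp.add_apply, PiLp.smul_apply, he2app, smul_eq_mul]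
  · intro v
    rw [hBv v]
    simp only [map_add, map_smul, hP₄v₁, hP₄v₂, smul_zero, zero_add, smul_eq_mul, hA₄]
    field_simp
    ring
end

section
/- Let Π₁, Π₄ : ℝ³ → ℝ and Π₂, Π₃ : ℝ³ → ℝ² be surjective linear maps, and let V_j denote the range of the adjoint Π_j^* for j = 1,2,3,4. Assume V₄ ∩ V_j = {0} for j = 1,2,3, that V₂ ≠ V₃, that V₁ ⊄ V₂, that V₁ ⊄ V₃, and that V₁ ⊄ span(V₂ ∩ V₃, V₄). Then there exist β ∈ ℝ with β ≠ 0 and β ≠ 1, and invertible linear maps B : ℝ³ → ℝ³, A₁, A₄ : ℝ → ℝ, and A₂, A₃ : ℝ² → ℝ² such that, writing points of ℝ³ as (x,y,t): A₁ ∘ Π₁ ∘ B = (the map (x,y,t) ↦ x+t), A₂ ∘ Π₂ ∘ B = (the map (x,y,t) ↦ (x,y)), A₃ ∘ Π₃ ∘ B = (the map (x,y,t) ↦ (x+βt, y)), and A₄ ∘ Π₄ ∘ B = (the map (x,y,t) ↦ t); i.e., the datum is equivalent to the datum of the form Λ_{(4,β)} for some β ∉ {0,1}. -/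
open LinearMap

set_option maxHeartbeats 1000000

lemma range_adjoint_eq_orthogonal_ker
    {E F : Type*} [NormedAddCommGroup E] [InnerProductSpace ℝ E]
    [NormedAddCommGroup F] [InnerProductSpace ℝ F]
    [FiniteDimensional ℝ E] [FiniteDimensional ℝ F]
    (P : E →ₗ[ℝ] F) : range (adjoint P) = (ker P)ᗮ := by
  have h : ker P = (range (adjoint P))ᗮ := by
    ext x
    simp only [mem_ker, Submodule.mem_orthogonal]
    constructor
    · rintro hx u ⟨y, rfl⟩
      rw [adjoint_inner_left, hx, inner_zero_right]
    · intro h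
      have h2 := h (adjoint P (P x)) ⟨P x, rfl⟩
      rw [adjoint_inner_left] at h2
      exact inner_self_eq_zero.mp h2
  rw [h, Submodule.orthogonal_orthogonal]

theorem stmt17
    (P₁ P₄ : EuclideanSpace ℝ (Fin 3) →ₗ[ℝ] ℝ)
    (P₂ P₃ : EuclideanSpace ℝ (Fin 3) →ₗ[ℝ] EuclideanSpace ℝ (Fin 2))
    (hs₁ : Function.Surjective P₁) (hs₂ : Function.Surjective P₂)
    (hs₃ : Function.Surjective P₃) (hs₄ : Function.Surjective P₄)
    (h41 : range (adjoint P₄) ⊓ range (adjoint P₁) = ⊥)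
    (h42 : range (adjoint P₄) ⊓ range (adjoint P₂) = ⊥)
    (h43 : range (adjoint P₄) ⊓ range (adjoint P₃) = ⊥)
    (h23 : range (adjoint P₂) ≠ range (adjoint P₃))
    (h12 : ¬ range (adjoint P₁) ≤ range (adjoint P₂))
    (h13 : ¬ range (adjoint P₁) ≤ range (adjoint P₃))
    (h1234 : ¬ range (adjoint P₁) ≤
        (range (adjoint P₂) ⊓ range (adjoint P₃)) ⊔ range (adjoint P₄)) :
    ∃ β : ℝ, β ≠ 0 ∧ β ≠ 1 ∧
      ∃ (B : EuclideanSpace ℝ (Fin 3) ≃ₗ[ℝ] EuclideanSpace ℝ (Fin 3))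
        (A₁ A₄ : ℝ ≃ₗ[ℝ] ℝ)
        (A₂ A₃ : EuclideanSpace ℝ (Fin 2) ≃ₗ[ℝ] EuclideanSpace ℝ (Fin 2)),
        (∀ v : EuclideanSpace ℝ (Fin 3), A₁ (P₁ (B v)) = v 0 + v 2) ∧
        (∀ v : EuclideanSpace ℝ (Fin 3),
          A₂ (P₂ (B v)) 0 = v 0 ∧ A₂ (P₂ (B v)) 1 = v 1) ∧
        (∀ v : EuclideanSpace ℝ (Fin 3),
          A₃ (P₃ (B v)) 0 = v 0 + β * v 2 ∧ A₃ (P₃ (B v)) 1 = v 1) ∧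
        (∀ v : EuclideanSpace ℝ (Fin 3), A₄ (P₄ (B v)) = v 2) := by
  classical
  simp only [range_adjoint_eq_orthogonal_ker] at h41 h42 h43 h23 h12 h13 h1234
  have hE3 : Module.finrank ℝ (EuclideanSpace ℝ (Fin 3)) = 3 := finrank_euclideanSpace_fin
  have hE2 : Module.finrank ℝ (EuclideanSpace ℝ (Fin 2)) = 2 := finrank_euclideanSpace_fin
  -- ranks of kernels
  have hk1 : Module.finrank ℝ (ker P₁) = 2 := by
    have h := finrank_range_add_finrank_ker P₁
    rw [range_eq_top.mpr hs₁, finrank_top, hE3, Module.finrank_self] at h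
    omega
  have hk4 : Module.finrank ℝ (ker P₄) = 2 := by
    have h := finrank_range_add_finrank_ker P₄
    rw [range_eq_top.mpr hs₄, finrank_top, hE3, Module.finrank_self] at h
    omega
  have hk2 : Module.finrank ℝ (ker P₂) = 1 := by
    have h := finrank_range_add_finrank_ker P₂
    rw [range_eq_top.mpr hs₂, finrank_top, hE3, hE2] at h
    omega
  have hk3 : Module.finrank ℝ (ker P₃) = 1 := by
    have h := finrank_range_add_finrank_ker P₃
    rw [range_eq_top.mpr hs₃, finrank_top, hE3, hE2] at h
    omega
  -- spanning vectors of the kernels of P₂ and P₃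
  obtain ⟨u₂, hu₂, hu₂0⟩ : ∃ u ∈ ker P₂, u ≠ 0 :=
    Submodule.exists_mem_ne_zero_of_ne_bot (by intro h; rw [h, finrank_bot] at hk2; omega)
  obtain ⟨u₃, hu₃, hu₃0⟩ : ∃ u ∈ ker P₃, u ≠ 0 :=
    Submodule.exists_mem_ne_zero_of_ne_bot (by intro h; rw [h, finrank_bot] at hk3; omega)
  have hker2 : ker P₂ = Submodule.span ℝ {u₂} := by
    refine (Submodule.eq_of_le_of_finrank_le ((Submodule.span_singleton_le_iff_mem _ _).mpr hu₂)
      ?_).symm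
    rw [hk2, finrank_span_singleton hu₂0]
  have hker3 : ker P₃ = Submodule.span ℝ {u₃} := by
    refine (Submodule.eq_of_le_of_finrank_le ((Submodule.span_singleton_le_iff_mem _ _).mpr hu₃)
      ?_).symm
    rw [hk3, finrank_span_singleton hu₃0]
  -- a nonzero vector in ker P₁ ⊓ ker P₄
  have hinf : ker P₁ ⊓ ker P₄ ≠ ⊥ := by
    intro h
    have h1 := Submodule.finrank_sup_add_finrank_inf_eq (ker P₁) (ker P₄)
    have h2 := Submodule.finrank_le (R := ℝ) (ker P₁ ⊔ ker P₄)
    rw [hE3] at h2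
    rw [hk1, hk4, h, finrank_bot] at h1
    omega
  obtain ⟨v₁, hv₁, hv₁0⟩ := Submodule.exists_mem_ne_zero_of_ne_bot hinf
  obtain ⟨hv₁1, hv₁4⟩ := Submodule.mem_inf.mp hv₁
  have hP₁v₁ : P₁ v₁ = 0 := hv₁1
  have hP₄v₁ : P₄ v₁ = 0 := hv₁4
  have hP₂u₂ : P₂ u₂ = 0 := hu₂
  have hP₃u₃ : P₃ u₃ = 0 := hu₃
  -- key scalars are nonzero
  have hp2 : P₄ u₂ ≠ 0 := by
    intro h
    have hle : ker P₂ ≤ ker P₄ := by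
      rw [hker2]; exact (Submodule.span_singleton_le_iff_mem _ _).mpr (mem_ker.mpr h)
    have hle' : (ker P₄)ᗮ ≤ (ker P₂)ᗮ := Submodule.orthogonal_le hle
    rw [inf_eq_left.mpr hle', Submodule.orthogonal_eq_bot_iff] at h42
    rw [h42, finrank_top, hE3] at hk4
    omega
  have hp3 : P₄ u₃ ≠ 0 := by
    intro h
    have hle : ker P₃ ≤ ker P₄ := by
      rw [hker3]; exact (Submodule.span_singleton_le_iff_mem _ _).mpr (mem_ker.mpr h)
    have hle' : (ker P₄)ᗮ ≤ (ker P₃)ᗮ := Submodule.orthogonal_le hle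
    rw [inf_eq_left.mpr hle', Submodule.orthogonal_eq_bot_iff] at h43
    rw [h43, finrank_top, hE3] at hk4
    omega
  have hq2 : P₁ u₂ ≠ 0 := by
    intro h
    refine h12 (Submodule.orthogonal_le ?_)
    rw [hker2]; exact (Submodule.span_singleton_le_iff_mem _ _).mpr (mem_ker.mpr h)
  have hq3 : P₁ u₃ ≠ 0 := by
    intro h
    refine h13 (Submodule.orthogonal_le ?_)
    rw [hker3]; exact (Submodule.span_singleton_le_iff_mem _ _).mpr (mem_ker.mpr h)
  -- the auxiliary vector w
  set w : EuclideanSpace ℝ (Fin 3) := P₄ u₃ • u₂ - P₄ u₂ • u₃ with hw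
  have hw4 : P₄ w = 0 := by
    rw [hw, map_sub, map_smul, map_smul, smul_eq_mul, smul_eq_mul]; ring
  have hPw : P₁ w = P₄ u₃ * P₁ u₂ - P₄ u₂ * P₁ u₃ := by
    rw [hw, map_sub, map_smul, map_smul, smul_eq_mul, smul_eq_mul]
  have hP₃w : P₃ w = P₄ u₃ • P₃ u₂ := by
    rw [hw, map_sub, map_smul, map_smul, hP₃u₃, smul_zero, sub_zero]
  have hw0 : w ≠ 0 := by
    intro h
    apply h23
    have he : P₄ u₃ • u₂ = P₄ u₂ • u₃ := by rwa [hw, sub_eq_zero] at h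
    have hmem : u₃ ∈ ker P₂ := by
      have h0 : P₂ (P₄ u₃ • u₂) = P₂ (P₄ u₂ • u₃) := by rw [he]
      rw [map_smul, map_smul, hP₂u₂, smul_zero] at h0
      rcases smul_eq_zero.mp h0.symm with h' | h'
      · exact absurd h' hp2
      · exact mem_ker.mpr h'
    have hle : ker P₃ ≤ ker P₂ := by
      rw [hker3]; exact (Submodule.span_singleton_le_iff_mem _ _).mpr hmem
    have : ker P₃ = ker P₂ := Submodule.eq_of_le_of_finrank_le hle (by omega)
    rw [this]
  -- P₁ w ≠ 0
  have hD : P₁ w ≠ 0 := by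
    intro hDz
    apply h1234
    have hXY : (ker P₂)ᗮ ⊓ (ker P₃)ᗮ ⊔ (ker P₄)ᗮ = ((ker P₂ ⊔ ker P₃) ⊓ ker P₄)ᗮ := by
      rw [Submodule.inf_orthogonal]
      set X := ker P₂ ⊔ ker P₃ with hX
      have h1 : (Xᗮ ⊔ (ker P₄)ᗮ)ᗮ = X ⊓ ker P₄ := by
        rw [← Submodule.inf_orthogonal, Submodule.orthogonal_orthogonal,
          Submodule.orthogonal_orthogonal]
      calc Xᗮ ⊔ (ker P₄)ᗮ = (Xᗮ ⊔ (ker P₄)ᗮ)ᗮᗮ := (Submodule.orthogonal_orthogonal _).symm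
        _ = (X ⊓ ker P₄)ᗮ := by rw [h1]
    rw [hXY]
    apply Submodule.orthogonal_le
    have hw23 : w ∈ ker P₂ ⊔ ker P₃ :=
      sub_mem (Submodule.mem_sup_left (Submodule.smul_mem _ _ hu₂))
        (Submodule.mem_sup_right (Submodule.smul_mem _ _ hu₃))
    have hwM : w ∈ (ker P₂ ⊔ ker P₃) ⊓ ker P₄ := Submodule.mem_inf.mpr ⟨hw23, mem_ker.mpr hw4⟩
    have hspanle : Submodule.span ℝ {w} ≤ (ker P₂ ⊔ ker P₃) ⊓ ker P₄ :=
      (Submodule.span_singleton_le_iff_mem _ _).mpr hwM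
    have hMrank : Module.finrank ℝ ↥((ker P₂ ⊔ ker P₃) ⊓ ker P₄) ≤ 1 := by
      by_contra hge
      push_neg at hge
      have heq4 : (ker P₂ ⊔ ker P₃) ⊓ ker P₄ = ker P₄ :=
        Submodule.eq_of_le_of_finrank_le inf_le_right (by omega)
      have hle' : ker P₄ ≤ ker P₂ ⊔ ker P₃ := by rw [← heq4]; exact inf_le_left
      have hXr : Module.finrank ℝ ↥(ker P₂ ⊔ ker P₃) ≤ 2 := by
        have h1 := Submodule.finrank_sup_add_finrank_inf_eq (ker P₂) (ker P₃)
        omega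
      have heqX : ker P₄ = ker P₂ ⊔ ker P₃ :=
        Submodule.eq_of_le_of_finrank_le hle' (by omega)
      have : u₂ ∈ ker P₄ := by rw [heqX]; exact Submodule.mem_sup_left hu₂
      exact hp2 (mem_ker.mp this)
    have hMeq : (ker P₂ ⊔ ker P₃) ⊓ ker P₄ = Submodule.span ℝ {w} :=
      (Submodule.eq_of_le_of_finrank_le hspanle
        (by rw [finrank_span_singleton hw0]; exact hMrank)).symm
    rw [hMeq]
    exact (Submodule.span_singleton_le_iff_mem _ _).mpr (mem_ker.mpr hDz)
  -- the parameter β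
  set β : ℝ := P₁ w / (P₄ u₃ * P₁ u₂) with hβ
  have hp3q2 : P₄ u₃ * P₁ u₂ ≠ 0 := mul_ne_zero hp3 hq2
  have hβ0 : β ≠ 0 := div_ne_zero hD hp3q2
  have hβ1 : β ≠ 1 := by
    intro h
    rw [hβ, div_eq_one_iff_eq hp3q2] at h
    rw [hPw] at h
    have : P₄ u₂ * P₁ u₃ = 0 := by linear_combination -h
    exact mul_ne_zero hp2 hq3 this
  -- the basis vectors
  obtain ⟨b₀, hb₀⟩ : ∃ b : EuclideanSpace ℝ (Fin 3), b = (P₄ u₃ * β)⁻¹ • w := ⟨_, rfl⟩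
  have hP₄b₀ : P₄ b₀ = 0 := by rw [hb₀, map_smul, hw4, smul_zero]
  have hP₁b₀ : P₁ b₀ = P₁ u₂ := by
    rw [hb₀, map_smul, smul_eq_mul, hβ]
    field_simp
  have hP₃b₀ : P₃ b₀ = β⁻¹ • P₃ u₂ := by
    rw [hb₀, map_smul, hP₃w, smul_smul]
    congr 1
    field_simp
  have hP₃u₂' : P₃ u₂ = β • P₃ b₀ := by
    rw [hP₃b₀, smul_smul, mul_inv_cancel₀ hβ0, one_smul]
    -- the change of basis B
  let Bmap : EuclideanSpace ℝ (Fin 3) →ₗ[ℝ] EuclideanSpace ℝ (Fin 3) :=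
    { toFun := fun v => v 0 • b₀ + v 1 • v₁ + v 2 • u₂
      map_add' := by
        intro x y
        simp only [PiLp.add_apply]
        module
      map_smul' := by
        intro c x
        simp only [PiLp.smul_apply, smul_eq_mul, RingHom.id_apply]
        module }
  have hzero : ∀ v : EuclideanSpace ℝ (Fin 3),
      v 0 • b₀ + v 1 • v₁ + v 2 • u₂ = 0 → v = 0 := by
    intro v hv
    have h4 : v 2 * P₄ u₂ = 0 := by
      have h := congrArg P₄ hv
      simpa only [map_add, map_smul, smul_eq_mul, map_zero, smul_zero, mul_zero, zero_mul, zero_add, add_zero, hP₄b₀, hP₄v₁] using h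
    have hv2 : v 2 = 0 := by
      rcases mul_eq_zero.mp h4 with h | h
      · exact h
      · exact absurd h hp2
    have h1 : v 0 * P₁ u₂ = 0 := by
      have h := congrArg P₁ hv
      simpa only [map_add, map_smul, smul_eq_mul, map_zero, smul_zero, mul_zero, zero_mul, zero_add, add_zero, hP₁b₀, hP₁v₁, hv2] using h
    have hv0 : v 0 = 0 := by
      rcases mul_eq_zero.mp h1 with h | h
      · exact h
      · exact absurd h hq2
    have hv1 : v 1 = 0 := by
      rw [hv0, hv2] at hv
      simp only [zero_smul, zero_add, add_zero] at hv
      rcases smul_eq_zero.mp hv with h | h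
      · exact h
      · exact absurd h hv₁0
    ext i
    fin_cases i
    · exact hv0
    · exact hv1
    · exact hv2
  have hBinj : Function.Injective Bmap := by
    intro x y hxy
    have h0 : Bmap (x - y) = 0 := by rw [map_sub, hxy, sub_self]
    exact sub_eq_zero.mp (hzero (x - y) h0)
  let B : EuclideanSpace ℝ (Fin 3) ≃ₗ[ℝ] EuclideanSpace ℝ (Fin 3) :=
    LinearEquiv.ofBijective Bmap ⟨hBinj, LinearMap.injective_iff_surjective.mp hBinj⟩
  have hB : ∀ v : EuclideanSpace ℝ (Fin 3), B v = v 0 • b₀ + v 1 • v₁ + v 2 • u₂ :=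
    fun v => rfl
  -- A₁ and A₄
  let A₁ : ℝ ≃ₗ[ℝ] ℝ := LinearEquiv.smulOfNeZero ℝ ℝ (P₁ u₂)⁻¹ (inv_ne_zero hq2)
  let A₄ : ℝ ≃ₗ[ℝ] ℝ := LinearEquiv.smulOfNeZero ℝ ℝ (P₄ u₂)⁻¹ (inv_ne_zero hp2)
  -- A₂
  let S₂ : EuclideanSpace ℝ (Fin 2) →ₗ[ℝ] EuclideanSpace ℝ (Fin 2) :=
    { toFun := fun x => x 0 • P₂ b₀ + x 1 • P₂ v₁
      map_add' := by
        intro x y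
        simp only [PiLp.add_apply]
        module
      map_smul' := by
        intro c x
        simp only [PiLp.smul_apply, smul_eq_mul, RingHom.id_apply]
        module }
  have hS₂inj : Function.Injective S₂ := by
    have h0 : ∀ z : EuclideanSpace ℝ (Fin 2), S₂ z = 0 → z = 0 := by
      intro z hz
      have hm : z 0 • b₀ + z 1 • v₁ ∈ ker P₂ := by
        rw [mem_ker, map_add, map_smul, map_smul]
        exact hz
      rw [hker2, Submodule.mem_span_singleton] at hm
      obtain ⟨r, hr⟩ := hm
      have hr4 : r * P₄ u₂ = 0 := by
        have h := congrArg P₄ hr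
        simpa only [map_add, map_smul, smul_eq_mul, map_zero, smul_zero, mul_zero, zero_mul, zero_add, add_zero, hP₄b₀, hP₄v₁] using h
      have hr0 : r = 0 := by
        rcases mul_eq_zero.mp hr4 with h | h
        · exact h
        · exact absurd h hp2
      rw [hr0, zero_smul] at hr
      have h1 : z 0 * P₁ u₂ = 0 := by
        have h := congrArg P₁ hr.symm
        simpa only [map_add, map_smul, smul_eq_mul, map_zero, smul_zero, mul_zero, zero_mul, zero_add, add_zero, hP₁b₀, hP₁v₁] using h
      have hz0 : z 0 = 0 := by
        rcases mul_eq_zero.mp h1 with h | h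
        · exact h
        · exact absurd h hq2
      have hz1 : z 1 = 0 := by
        rw [hz0, zero_smul, zero_add] at hr
        rcases smul_eq_zero.mp hr.symm with h | h
        · exact h
        · exact absurd h hv₁0
      ext i
      fin_cases i
      · exact hz0
      · exact hz1
    intro x y hxy
    have hxy0 : S₂ (x - y) = 0 := by rw [map_sub, hxy, sub_self]
    exact sub_eq_zero.mp (h0 (x - y) hxy0)
  let e₂ : EuclideanSpace ℝ (Fin 2) ≃ₗ[ℝ] EuclideanSpace ℝ (Fin 2) :=
    LinearEquiv.ofBijective S₂ ⟨hS₂inj, LinearMap.injective_iff_surjective.mp hS₂inj⟩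
  let A₂ := e₂.symm
  -- A₃
  let S₃ : EuclideanSpace ℝ (Fin 2) →ₗ[ℝ] EuclideanSpace ℝ (Fin 2) :=
    { toFun := fun x => x 0 • P₃ b₀ + x 1 • P₃ v₁
      map_add' := by
        intro x y
        simp only [PiLp.add_apply]
        module
      map_smul' := by
        intro c x
        simp only [PiLp.smul_apply, smul_eq_mul, RingHom.id_apply]
        module }
  have hS₃inj : Function.Injective S₃ := by
    have h0 : ∀ z : EuclideanSpace ℝ (Fin 2), S₃ z = 0 → z = 0 := by
      intro z hz
      have hm : z 0 • b₀ + z 1 • v₁ ∈ ker P₃ := by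
        rw [mem_ker, map_add, map_smul, map_smul]
        exact hz
      rw [hker3, Submodule.mem_span_singleton] at hm
      obtain ⟨r, hr⟩ := hm
      have hr4 : r * P₄ u₃ = 0 := by
        have h := congrArg P₄ hr
        simpa only [map_add, map_smul, smul_eq_mul, map_zero, smul_zero, mul_zero, zero_mul, zero_add, add_zero, hP₄b₀, hP₄v₁] using h
      have hr0 : r = 0 := by
        rcases mul_eq_zero.mp hr4 with h | h
        · exact h
        · exact absurd h hp3
      rw [hr0, zero_smul] at hr
      have h1 : z 0 * P₁ u₂ = 0 := by
        have h := congrArg P₁ hr.symm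
        simpa only [map_add, map_smul, smul_eq_mul, map_zero, smul_zero, mul_zero, zero_mul, zero_add, add_zero, hP₁b₀, hP₁v₁] using h
      have hz0 : z 0 = 0 := by
        rcases mul_eq_zero.mp h1 with h | h
        · exact h
        · exact absurd h hq2
      have hz1 : z 1 = 0 := by
        rw [hz0, zero_smul, zero_add] at hr
        rcases smul_eq_zero.mp hr.symm with h | h
        · exact h
        · exact absurd h hv₁0
      ext i
      fin_cases i
      · exact hz0
      · exact hz1
    intro x y hxy
    have hxy0 : S₃ (x - y) = 0 := by rw [map_sub, hxy, sub_self]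
    exact sub_eq_zero.mp (h0 (x - y) hxy0)
  let e₃ : EuclideanSpace ℝ (Fin 2) ≃ₗ[ℝ] EuclideanSpace ℝ (Fin 2) :=
    LinearEquiv.ofBijective S₃ ⟨hS₃inj, LinearMap.injective_iff_surjective.mp hS₃inj⟩
  let A₃ := e₃.symm
  refine ⟨β, hβ0, hβ1, B, A₁, A₄, A₂, A₃, ?_, ?_, ?_, ?_⟩
  · intro v
    have h1 : P₁ (B v) = v 0 * P₁ u₂ + v 2 * P₁ u₂ := by
      rw [hB, map_add, map_add, map_smul, map_smul, map_smul, hP₁b₀, hP₁v₁]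
      simp only [smul_eq_mul, mul_zero, add_zero, zero_add]
    show (P₁ u₂)⁻¹ * P₁ (B v) = v 0 + v 2
    rw [h1]
    field_simp
  · intro v
    set y : EuclideanSpace ℝ (Fin 2) := (WithLp.equiv 2 (Fin 2 → ℝ)).symm ![v 0, v 1] with hy
    have h2 : P₂ (B v) = S₂ y := by
      rw [hB, map_add, map_add, map_smul, map_smul, map_smul, hP₂u₂, smul_zero, add_zero]
      rfl
    have h3 : A₂ (P₂ (B v)) = y := by
      rw [h2]
      show e₂.symm (S₂ y) = y
      have : S₂ y = e₂ y := rfl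
      rw [this, e₂.symm_apply_apply]
    rw [h3]
    exact ⟨rfl, rfl⟩
  · intro v
    set y : EuclideanSpace ℝ (Fin 2) := (WithLp.equiv 2 (Fin 2 → ℝ)).symm ![v 0 + β * v 2, v 1]
      with hy
    have h2 : P₃ (B v) = S₃ y := by
      rw [hB, map_add, map_add, map_smul, map_smul, map_smul, hP₃u₂']
      show v 0 • P₃ b₀ + v 1 • P₃ v₁ + v 2 • β • P₃ b₀
        = (v 0 + β * v 2) • P₃ b₀ + v 1 • P₃ v₁
      module
    have h3 : A₃ (P₃ (B v)) = y := by
      rw [h2]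
      show e₃.symm (S₃ y) = y
      have : S₃ y = e₃ y := rfl
      rw [this, e₃.symm_apply_apply]
    rw [h3]
    exact ⟨rfl, rfl⟩
  · intro v
    have h1 : P₄ (B v) = v 2 * P₄ u₂ := by
      rw [hB, map_add, map_add, map_smul, map_smul, map_smul, hP₄b₀, hP₄v₁]
      simp only [smul_eq_mul, mul_zero, add_zero, zero_add]
    show (P₄ u₂)⁻¹ * P₄ (B v) = v 2
    rw [h1]
    field_simp
end
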